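/- arXiv:2004.06024 — 6 statements merged into one kernel-verified Lean document; each statement's English description precedes it below -/
import Mathlib

section
/- The sets U_C, for C ranging over the chambers of A, form an open cover of M(A_{(3)}), and there is a well-defined continuous map f : M(A_{(3)}) → X_A(ℂ) satisfying f(x,z) = [C,x] whenever (x,z) ∈ U_C. Moreover, f is a fiber bundle projection with fiber ℝ^n; in particular f is a weak homotopy equivalence. -/
open Set

/-- An affine hyperplane in `ℝ^n`, the zero set of the non-constant affine functional
`x ↦ ∑ i, normal i * x i + const`. -/
structure Hyperplane (n : ℕ) where
  normal : Fin n → ℝ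
  const : ℝ
  normal_ne : normal ≠ 0

namespace Hyperplane

/-- The hyperplane as a subset of `ℝ^n`. -/
def carrier {n : ℕ} (H : Hyperplane n) : Set (Fin n → ℝ) :=
  {x | ∑ i, H.normal i * x i + H.const = 0}

/-- The complexification `H_ℂ ⊆ ℂ^n`: zero set of the `ℂ`-affine extension. -/
def carrierC {n : ℕ} (H : Hyperplane n) : Set (Fin n → ℂ) :=
  {x | ∑ i, (H.normal i : ℂ) * x i + (H.const : ℂ) = 0}

end Hyperplane

/-- The complement `ℝ^n ∖ ⋃_{H ∈ A} H` of the arrangement `A`. -/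
def complSet {n : ℕ} (A : Set (Hyperplane n)) : Set (Fin n → ℝ) :=
  {x | ∀ H ∈ A, x ∉ H.carrier}

/-- `C` is a chamber of the arrangement `A`: a connected component of the complement. -/
def IsChamber {n : ℕ} (A : Set (Hyperplane n)) (C : Set (Fin n → ℝ)) : Prop :=
  ∃ x ∈ complSet A, C = connectedComponentIn (complSet A) x

/-- `H` separates `C` from `D`: they lie in different connected components of `ℝ^n ∖ H`. -/
def Separates {n : ℕ} (H : Hyperplane n) (C D : Set (Fin n → ℝ)) : Prop :=
  ∀ x ∈ C, ∀ y ∈ D,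
    connectedComponentIn H.carrierᶜ x ≠ connectedComponentIn H.carrierᶜ y

/-- `SepSet A C D`: the set of hyperplanes of `A` separating `C` from `D`. -/
def SepSet {n : ℕ} (A : Set (Hyperplane n)) (C D : Set (Fin n → ℝ)) : Set (Hyperplane n) :=
  {H | H ∈ A ∧ Separates H C D}

/-- `z` lies on the `C`-side of `H`: `z ∉ H` and `z`, `C` lie in the same
connected component of `ℝ^n ∖ H`. -/
def SameSide {n : ℕ} (H : Hyperplane n) (C : Set (Fin n → ℝ)) (z : Fin n → ℝ) : Prop :=
  z ∉ H.carrier ∧ C ⊆ connectedComponentIn H.carrierᶜ z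

/-- The type of chambers of `A`. -/
abbrev Chambers (n : ℕ) (A : Set (Hyperplane n)) : Type :=
  {C : Set (Fin n → ℝ) // IsChamber A C}

/-- `p : E → B` is a fiber bundle with fiber `F`: a continuous surjection which is locally
on the base homeomorphic, over the base, to a product with `F`. -/
def IsFiberBundleWith {E B : Type*} [TopologicalSpace E] [TopologicalSpace B]
    (F : Type*) [TopologicalSpace F] (p : E → B) : Prop :=
  Continuous p ∧ Function.Surjective p ∧
    ∀ b : B, ∃ V : Set B, b ∈ V ∧ IsOpen V ∧
      ∃ φ : (p ⁻¹' V) ≃ₜ V × F, ∀ e : p ⁻¹' V, ((φ e).1 : B) = p e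

/-- The open set `U_C ⊆ ℂ^n × ℝ^n` attached to a chamber `C`: pairs `(x, z)` such that for
every `H ∈ A` with `x ∈ H_ℂ`, the point `z` lies on the `C`-side of `H`. -/
def UC {n : ℕ} (A : Set (Hyperplane n)) (C : Set (Fin n → ℝ)) :
    Set ((Fin n → ℂ) × (Fin n → ℝ)) :=
  {p | ∀ H ∈ A, p.1 ∈ H.carrierC → SameSide H C p.2}

/-- The complement `M(A_{(3)})` of the induced codimension-3 subspace arrangement in
`ℂ^n × ℝ^n = (ℝ^3)^n`. -/
def M3 {n : ℕ} (A : Set (Hyperplane n)) : Set ((Fin n → ℂ) × (Fin n → ℝ)) :=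
  {p | ∀ H ∈ A, ¬(p.1 ∈ H.carrierC ∧ p.2 ∈ H.carrier)}

/-- The gluing relation defining `X_A(ℂ)`: the point `x` in the copy of `ℂ^n` indexed by the
chamber `C` is identified with the point `x` in the copy indexed by `D` whenever
`x ∉ H_ℂ` for all `H ∈ Sep(C,D)`. -/
def XACRel {n : ℕ} (A : Set (Hyperplane n)) :
    (Σ _ : Chambers n A, Fin n → ℂ) → (Σ _ : Chambers n A, Fin n → ℂ) → Prop :=
  fun p q => p.2 = q.2 ∧ ∀ H ∈ SepSet A p.1.1 q.1.1, p.2 ∉ H.carrierC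

/-- The complex points `X_A(ℂ)`, as a topological space: the quotient of the disjoint union
`∐_{C ∈ Ch(A)} ℂ^n` by the equivalence relation generated by `XACRel`. -/
abbrev XAC (n : ℕ) (A : Set (Hyperplane n)) : Type := Quot (XACRel A)

-- ============ auxiliary development ============
namespace BundleAux

variable {n : ℕ}

def lf (H : Hyperplane n) (x : Fin n → ℝ) : ℝ := ∑ i, H.normal i * x i + H.const
noncomputable def lfC (H : Hyperplane n) (x : Fin n → ℂ) : ℂ := ∑ i, (H.normal i : ℂ) * x i + (H.const : ℂ)

lemma mem_carrier_iff {H : Hyperplane n} {x} : x ∈ H.carrier ↔ lf H x = 0 := Iff.rfl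
lemma mem_carrierC_iff {H : Hyperplane n} {x} : x ∈ H.carrierC ↔ lfC H x = 0 := Iff.rfl

lemma lf_continuous (H : Hyperplane n) : Continuous (lf H) := by
  unfold lf; fun_prop

lemma lfC_continuous (H : Hyperplane n) : Continuous (lfC H) := by
  unfold lfC; fun_prop

lemma lf_add (H : Hyperplane n) (y v : Fin n → ℝ) :
    lf H (y + v) = lf H y + ∑ i, H.normal i * v i := by
  unfold lf
  have : ∀ i, H.normal i * (y + v) i = H.normal i * y i + H.normal i * v i := by
    intro i; simp [Pi.add_apply]; ring
  rw [Finset.sum_congr rfl fun i _ => this i, Finset.sum_add_distrib]; ring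

lemma lf_smul_ray (H : Hyperplane n) (y v : Fin n → ℝ) (μ : ℝ) :
    lf H (y + μ • v) = lf H y + μ * (lf H (y + v) - lf H y) := by
  rw [lf_add, lf_add]
  have : ∑ i, H.normal i * (μ • v) i = μ * ∑ i, H.normal i * v i := by
    rw [Finset.mul_sum]; apply Finset.sum_congr rfl; intro i _; simp [Pi.smul_apply]; ring
  rw [this]; ring

lemma lf_combo (H : Hyperplane n) (x y : Fin n → ℝ) {a b : ℝ} (hab : a + b = 1) :
    lf H (a • x + b • y) = a * lf H x + b * lf H y := by
  unfold lf
  have : ∑ i, H.normal i * (a • x + b • y) i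
      = a * (∑ i, H.normal i * x i) + b * (∑ i, H.normal i * y i) := by
    rw [Finset.mul_sum, Finset.mul_sum, ← Finset.sum_add_distrib]
    apply Finset.sum_congr rfl; intro i _; simp [Pi.add_apply, Pi.smul_apply]; ring
  rw [this]; linear_combination (-H.const) * hab


lemma convex_side (H : Hyperplane n) (c : ℝ) : Convex ℝ {w | 0 < lf H w * c} := by
  intro w1 h1 w2 h2 a b ha hb hab
  simp only [mem_setOf_eq] at *
  rw [lf_combo H w1 w2 hab]
  rcases eq_or_lt_of_le ha with h | h
  · have hb1 : b = 1 := by linarith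
    simp [← h, hb1, h2]
  · have : 0 ≤ b * (lf H w2 * c) := mul_nonneg hb (le_of_lt h2)
    nlinarith [mul_pos h h1]

lemma comp_eq_iff (H : Hyperplane n) {z y : Fin n → ℝ}
    (hz : lf H z ≠ 0) (hy : lf H y ≠ 0) :
    connectedComponentIn H.carrierᶜ z = connectedComponentIn H.carrierᶜ y ↔
      0 < lf H z * lf H y := by
  constructor
  · intro h
    by_contra hle
    push_neg at hle
    have hlt : lf H z * lf H y < 0 :=
      lt_of_le_of_ne hle (mul_ne_zero hz hy)
    set T := connectedComponentIn H.carrierᶜ z with hT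
    have hzT : z ∈ T := mem_connectedComponentIn (by simpa [Hyperplane.carrier, lf] using hz)
    have hyT : y ∈ T := by
      rw [h]; exact mem_connectedComponentIn (by simpa [Hyperplane.carrier, lf] using hy)
    have hpre : IsPreconnected T := isPreconnected_connectedComponentIn
    have hsub : T ⊆ H.carrierᶜ := connectedComponentIn_subset _ _
    have hcont : ContinuousOn (lf H) T := (lf_continuous H).continuousOn
    have h0 : (0 : ℝ) ∈ lf H '' T := by
      rcases lt_or_gt_of_ne hz with hneg | hpos
      · have : lf H y > 0 := by nlinarith
        exact hpre.intermediate_value hzT hyT hcont ⟨le_of_lt hneg, le_of_lt this⟩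
      · have : lf H y < 0 := by nlinarith
        exact hpre.intermediate_value hyT hzT hcont ⟨le_of_lt this, le_of_lt hpos⟩
    rcases h0 with ⟨w, hwT, hw0⟩
    exact (hsub hwT) hw0
  · intro h
    set P := {w | 0 < lf H w * lf H z} with hP
    have hzP : z ∈ P := by simp only [hP, mem_setOf_eq]; exact mul_self_pos.mpr hz
    have hyP : y ∈ P := by
      simp only [hP, mem_setOf_eq]; rw [mul_comm]; exact h
    have hPsub : P ⊆ H.carrierᶜ := by
      intro w hw
      simp only [hP, mem_setOf_eq] at hw
      intro hwc
      rw [mem_carrier_iff] at hwc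
      rw [hwc] at hw; simp at hw
    have hPpre : IsPreconnected P := (convex_side H (lf H z)).isPreconnected
    have hPcomp : P ⊆ connectedComponentIn H.carrierᶜ z :=
      hPpre.subset_connectedComponentIn hzP hPsub
    exact (connectedComponentIn_eq (hPcomp hyP))

-- chunk 2 (appended logically after chunk 1)
variable {n : ℕ} {A : Set (Hyperplane n)} {C D : Set (Fin n → ℝ)}

lemma chamber_subset_complSet (hC : IsChamber A C) : C ⊆ complSet A := by
  obtain ⟨x, hx, rfl⟩ := hC; exact connectedComponentIn_subset _ _

lemma chamber_preconn (hC : IsChamber A C) : IsPreconnected C := by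
  obtain ⟨x, hx, rfl⟩ := hC; exact isPreconnected_connectedComponentIn

lemma chamber_nonempty (hC : IsChamber A C) : ∃ c0, c0 ∈ C := by
  obtain ⟨x, hx, rfl⟩ := hC; exact ⟨x, mem_connectedComponentIn hx⟩

lemma lf_ne_chamber (hC : IsChamber A C) {z} (hz : z ∈ C) {H} (hH : H ∈ A) :
    lf H z ≠ 0 := fun h => (chamber_subset_complSet hC hz) H hH h

lemma chamber_subset_comp (hC : IsChamber A C) {H} (hH : H ∈ A) {z} (hz : z ∈ C) :
    C ⊆ connectedComponentIn H.carrierᶜ z :=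
  (chamber_preconn hC).subset_connectedComponentIn hz
    (fun w hw hwc => (chamber_subset_complSet hC hw) H hH hwc)

lemma comp_eq_chamber (hC : IsChamber A C) {H} (hH : H ∈ A) {z w} (hz : z ∈ C) (hw : w ∈ C) :
    connectedComponentIn H.carrierᶜ z = connectedComponentIn H.carrierᶜ w :=
  connectedComponentIn_eq (chamber_subset_comp hC hH hz hw)

lemma sameSide_iff (hC : IsChamber A C) {c0} (hc0 : c0 ∈ C) {H} (hH : H ∈ A) (z) :
    SameSide H C z ↔ 0 < lf H z * lf H c0 := by
  constructor
  · rintro ⟨hz1, hz2⟩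
    have hzne : lf H z ≠ 0 := fun h => hz1 h
    have hc0ne : lf H c0 ≠ 0 := lf_ne_chamber hC hc0 hH
    have h := connectedComponentIn_eq (hz2 hc0)
    rw [comp_eq_iff H hzne hc0ne] at h
    exact h
  · intro h
    have hzne : lf H z ≠ 0 := by intro h0; rw [h0] at h; simp at h
    have hc0ne : lf H c0 ≠ 0 := lf_ne_chamber hC hc0 hH
    refine ⟨fun hc => hzne hc, ?_⟩
    rw [(comp_eq_iff H hzne hc0ne).mpr h]
    exact chamber_subset_comp hC hH hc0

lemma separates_iff (hC : IsChamber A C) (hD : IsChamber A D) {c0 d0}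
    (hc0 : c0 ∈ C) (hd0 : d0 ∈ D) {H} (hH : H ∈ A) :
    Separates H C D ↔
      connectedComponentIn H.carrierᶜ c0 ≠ connectedComponentIn H.carrierᶜ d0 := by
  constructor
  · intro h; exact h c0 hc0 d0 hd0
  · intro h x hx y hy
    rw [comp_eq_chamber hC hH hx hc0, comp_eq_chamber hD hH hy hd0]
    exact h

lemma isOpen_UC (hA : A.Finite) (hC : IsChamber A C) : IsOpen (UC A C) := by
  obtain ⟨c0, hc0⟩ := chamber_nonempty hC
  have : UC A C = ⋂ H ∈ A, {p : (Fin n → ℂ) × (Fin n → ℝ) |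
      p.1 ∉ H.carrierC ∨ 0 < lf H p.2 * lf H c0} := by
    ext p
    simp only [UC, mem_setOf_eq, mem_iInter]
    constructor
    · intro h H hH
      rcases Classical.em (p.1 ∈ H.carrierC) with hm | hm
      · exact Or.inr ((sameSide_iff hC hc0 hH p.2).mp (h H hH hm))
      · exact Or.inl hm
    · intro h H hH hm
      rcases h H hH with h' | h'
      · exact absurd hm h'
      · exact (sameSide_iff hC hc0 hH p.2).mpr h'
  rw [this]
  apply hA.isOpen_biInter
  intro H hH
  have h1 : IsOpen {p : (Fin n → ℂ) × (Fin n → ℝ) | p.1 ∉ H.carrierC} := by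
    have : {p : (Fin n → ℂ) × (Fin n → ℝ) | p.1 ∉ H.carrierC}
        = (fun p : (Fin n → ℂ) × (Fin n → ℝ) => lfC H p.1) ⁻¹' ({0}ᶜ) := rfl
    rw [this]
    exact (isClosed_singleton.preimage ((lfC_continuous H).comp continuous_fst)).isOpen_compl
  have h2 : IsOpen {p : (Fin n → ℂ) × (Fin n → ℝ) | 0 < lf H p.2 * lf H c0} :=
    isOpen_lt continuous_const (((lf_continuous H).comp continuous_snd).mul continuous_const)
  exact h1.union h2

lemma exists_normal_ne (H : Hyperplane n) : ∃ i, H.normal i ≠ 0 := by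
  by_contra h; push_neg at h; exact H.normal_ne (funext h)

lemma lf_add_smul_normal (H : Hyperplane n) (x : Fin n → ℝ) (t : ℝ) :
    lf H (x + t • H.normal) = lf H x + t * ∑ i, H.normal i ^ 2 := by
  rw [lf_add]
  congr 1
  rw [Finset.mul_sum]
  apply Finset.sum_congr rfl
  intro i _
  simp [Pi.smul_apply]; ring

lemma dense_compl_carrier (H : Hyperplane n) : Dense H.carrierᶜ := by
  obtain ⟨i0, hi0⟩ := exists_normal_ne H
  have hc2 : 0 < ∑ i, H.normal i ^ 2 := by
    apply Finset.sum_pos' (fun i _ => sq_nonneg _)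
    exact ⟨i0, Finset.mem_univ _, by positivity⟩
  rw [Metric.dense_iff]
  intro x r hr
  set c2 := ∑ i, H.normal i ^ 2
  have hnorm : (0:ℝ) < ‖H.normal‖ + 1 := by positivity
  set t0 := r / (2 * (‖H.normal‖ + 1)) with ht0
  have ht0pos : 0 < t0 := by positivity
  have key : ∀ t : ℝ, 0 < t → t ≤ t0 → lf H x + t * c2 ≠ 0 →
      (x + t • H.normal) ∈ Metric.ball x r ∩ H.carrierᶜ := by
    intro t ht htle hne
    constructor
    · rw [Metric.mem_ball, dist_eq_norm, add_sub_cancel_left, norm_smul]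
      have h1 : ‖t‖ * ‖H.normal‖ ≤ t0 * ‖H.normal‖ := by
        apply mul_le_mul_of_nonneg_right _ (norm_nonneg _)
        rw [Real.norm_eq_abs, abs_of_pos ht]; exact htle
      have h2 : t0 * ‖H.normal‖ < r := by
        rw [ht0]
        rw [div_mul_eq_mul_div, div_lt_iff₀ (by positivity)]
        nlinarith [norm_nonneg H.normal]
      exact lt_of_le_of_lt h1 h2
    · intro hc
      rw [mem_carrier_iff, lf_add_smul_normal] at hc
      exact hne hc
  rcases Classical.em (lf H x + t0 * c2 = 0) with h | h
  · refine ⟨x + (t0/2) • H.normal, key (t0/2) (by positivity) (by linarith) ?_⟩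
    intro hc
    have heq : t0 * c2 = (t0/2) * c2 := by linarith
    have := mul_right_cancel₀ (ne_of_gt hc2) heq
    linarith
  · exact ⟨x + t0 • H.normal, key t0 ht0pos le_rfl h⟩

lemma dense_complSet (hA : A.Finite) : Dense (complSet A) := by
  have : complSet A = ⋂ H : A, (H.1.carrier)ᶜ := by
    ext x; simp [complSet]
  rw [this]
  haveI : Countable A := hA.countable
  apply dense_iInter_of_isOpen
  · intro H
    exact (IsClosed.preimage (lf_continuous H.1) isClosed_singleton).isOpen_compl
  · intro H
    exact dense_compl_carrier H.1

lemma UC_subset_M3 (hC : IsChamber A C) : UC A C ⊆ M3 A := by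
  rintro p hp H hH ⟨h1, h2⟩
  exact (hp H hH h1).1 h2

lemma exists_chamber_of_M3 (hA : A.Finite) {p : (Fin n → ℂ) × (Fin n → ℝ)}
    (hp : p ∈ M3 A) : ∃ Ch : Chambers n A, p ∈ UC A Ch.1 := by
  classical
  set T : Set (Hyperplane n) := {H | H ∈ A ∧ p.1 ∈ H.carrierC} with hT
  have hTfin : T.Finite := hA.subset (fun H hH => hH.1)
  set P : Set (Fin n → ℝ) := ⋂ H ∈ T, {w | 0 < lf H w * lf H p.2} with hP
  have hPopen : IsOpen P := by
    apply hTfin.isOpen_biInter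
    intro H hH
    exact isOpen_lt continuous_const ((lf_continuous H).mul continuous_const)
  have hz : p.2 ∈ P := by
    rw [hP]
    apply mem_iInter₂.mpr
    intro H hH
    have : lf H p.2 ≠ 0 := by
      intro h0
      exact hp H hH.1 ⟨hH.2, h0⟩
    exact mul_self_pos.mpr this
  obtain ⟨z', hz'P, hz'compl⟩ := (dense_complSet hA).inter_open_nonempty P hPopen ⟨p.2, hz⟩
  refine ⟨⟨connectedComponentIn (complSet A) z', ⟨z', hz'compl, rfl⟩⟩, ?_⟩
  intro H hH hmem
  have hHT : H ∈ T := ⟨hH, hmem⟩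
  have hz'C : z' ∈ connectedComponentIn (complSet A) z' :=
    mem_connectedComponentIn hz'compl
  have hCh : IsChamber A (connectedComponentIn (complSet A) z') := ⟨z', hz'compl, rfl⟩
  rw [sameSide_iff hCh hz'C hH]
  have := mem_iInter₂.mp hz'P H hHT
  rw [mul_comm]; exact this

lemma xacrel_equivalence : Equivalence (XACRel A) := by
  constructor
  · intro p
    refine ⟨rfl, fun H hH => ?_⟩
    obtain ⟨c0, hc0⟩ := chamber_nonempty p.1.2
    exact absurd rfl (hH.2 c0 hc0 c0 hc0)
  · rintro p q ⟨h2, h⟩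
    refine ⟨h2.symm, fun H hH hm => ?_⟩
    have : H ∈ SepSet A p.1.1 q.1.1 :=
      ⟨hH.1, fun x hx y hy => (hH.2 y hy x hx).symm⟩
    exact h H this (by rwa [h2])
  · rintro p q r ⟨hpq2, hpq⟩ ⟨hqr2, hqr⟩
    refine ⟨hpq2.trans hqr2, fun H hH hm => ?_⟩
    obtain ⟨cp, hcp⟩ := chamber_nonempty p.1.2
    obtain ⟨cq, hcq⟩ := chamber_nonempty q.1.2
    obtain ⟨cr, hcr⟩ := chamber_nonempty r.1.2
    have hsep := (separates_iff p.1.2 r.1.2 hcp hcr hH.1).mp hH.2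
    rcases Classical.em (connectedComponentIn H.carrierᶜ cp
        = connectedComponentIn H.carrierᶜ cq) with he | he
    · have : Separates H q.1.1 r.1.1 := by
        rw [separates_iff q.1.2 r.1.2 hcq hcr hH.1]
        rw [← he]; exact hsep
      have h' := hqr H ⟨hH.1, this⟩
      rw [hpq2] at hm; exact h' hm
    · have : Separates H p.1.1 q.1.1 := by
        rw [separates_iff p.1.2 q.1.2 hcp hcq hH.1]
        exact he
      exact hpq H ⟨hH.1, this⟩ hm


noncomputable def kone (t m a : ℝ) : ℝ := (a + t*m)/(a + m + t*m)
noncomputable def lone (t m a : ℝ) : ℝ :=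
  2*a/(Real.sqrt ((a - (1+t)*m)^2 + 4*(t*(a*m))) + (a - (1+t)*m))

/-- quadratic whose positive root is `lone t m a`. -/
def Pq (t m a l : ℝ) : ℝ := t*m*l^2 + (a - (1+t)*m)*l - a

section scalar
variable {t m a l1 : ℝ} (ht : 0 ≤ t) (hm : 0 ≤ m) (ha : 0 < a)

include ht hm ha

lemma kone_pos : 0 < kone t m a := by
  apply div_pos <;> nlinarith [mul_nonneg ht hm]

lemma kone_le_one : kone t m a ≤ 1 := by
  rw [kone, div_le_one (by nlinarith [mul_nonneg ht hm])]
  nlinarith [mul_nonneg ht hm]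

omit ht in
lemma mul_lt_of_le_kone_zero {κ : ℝ} (hκ0 : 0 ≤ κ) (hκ : κ ≤ kone 0 m a) : κ * m < a := by
  have h0 : kone 0 m a = a / (a + m) := by rw [kone]; ring_nf
  rw [h0] at hκ
  have h1 : κ * (a + m) ≤ a := by
    rw [← le_div_iff₀ (by linarith)]; exact hκ
  rcases eq_or_lt_of_le hκ0 with h | h
  · rw [← h]; simpa using ha
  · nlinarith [mul_pos h ha]

lemma lone_denom_pos (hd : 0 < t ∨ m < a) :
    0 < Real.sqrt ((a - (1+t)*m)^2 + 4*(t*(a*m))) + (a - (1+t)*m) := by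
  rcases lt_or_ge 0 (a - (1+t)*m) with hβpos | hβle
  · have := Real.sqrt_nonneg ((a - (1+t)*m)^2 + 4*(t*(a*m)))
    linarith
  · have htm : 0 < t * m := by
      rcases hd with h | h
      · nlinarith
      · nlinarith
    have hD : 0 < 4*(t*(a*m)) := by nlinarith
    have h1 : Real.sqrt ((a - (1+t)*m)^2)
        < Real.sqrt ((a - (1+t)*m)^2 + 4*(t*(a*m))) := by
      apply Real.sqrt_lt_sqrt (sq_nonneg _); linarith
    rw [Real.sqrt_sq_eq_abs] at h1
    have h2 : -(a - (1+t)*m) < Real.sqrt ((a - (1+t)*m)^2 + 4*(t*(a*m))) :=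
      lt_of_le_of_lt (neg_le_abs _) h1
    linarith

lemma lone_pos (hd : 0 < t ∨ m < a) : 0 < lone t m a :=
  div_pos (by linarith) (lone_denom_pos ht hm ha hd)

lemma Pq_lone_eq_zero (hd : 0 < t ∨ m < a) : Pq t m a (lone t m a) = 0 := by
  have hs2 : (Real.sqrt ((a - (1+t)*m)^2 + 4*(t*(a*m))))^2
      = (a - (1+t)*m)^2 + 4*(t*(a*m)) := Real.sq_sqrt (by positivity)
  have hden : 0 < Real.sqrt ((a - (1+t)*m)^2 + 4*(t*(a*m))) + (a - (1+t)*m) :=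
    lone_denom_pos ht hm ha hd
  generalize hsv : Real.sqrt ((a - (1+t)*m)^2 + 4*(t*(a*m))) = sv at hs2 hden
  have hL : lone t m a = 2*a/(sv + (a - (1+t)*m)) := by rw [lone, hsv]
  have key : t*m*(2*a)^2 + (a - (1+t)*m)*((2*a)*(sv + (a - (1+t)*m)))
      - a*(sv + (a - (1+t)*m))^2 = 0 := by
    linear_combination (-a) * hs2
  have expand : t*m*(2*a/(sv + (a - (1+t)*m)))^2 + (a - (1+t)*m)*(2*a/(sv + (a - (1+t)*m))) - a
      = (t*m*(2*a)^2 + (a - (1+t)*m)*((2*a)*(sv + (a - (1+t)*m)))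
        - a*(sv + (a - (1+t)*m))^2)/(sv + (a - (1+t)*m))^2 := by
    generalize sv + (a - (1+t)*m) = d at hden ⊢; field_simp [hden.ne']
  rw [Pq, hL, expand, key, zero_div]

lemma lone_le_of_Pq_nonneg (hd : 0 < t ∨ m < a) (hl1 : 0 < l1)
    (hP : 0 ≤ Pq t m a l1) : lone t m a ≤ l1 := by
  have hs2 : (Real.sqrt ((a - (1+t)*m)^2 + 4*(t*(a*m))))^2
      = (a - (1+t)*m)^2 + 4*(t*(a*m)) := Real.sq_sqrt (by positivity)
  have hsnn : 0 ≤ Real.sqrt ((a - (1+t)*m)^2 + 4*(t*(a*m))) := Real.sqrt_nonneg _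
  have hden : 0 < Real.sqrt ((a - (1+t)*m)^2 + 4*(t*(a*m))) + (a - (1+t)*m) :=
    lone_denom_pos ht hm ha hd
  rw [Pq] at hP
  rw [lone, div_le_iff₀ hden]
  generalize hsv : Real.sqrt ((a - (1+t)*m)^2 + 4*(t*(a*m))) = sv at hs2 hden hsnn
  rcases le_or_gt (2*a - l1*(a - (1+t)*m)) 0 with hc | hc
  · nlinarith [mul_nonneg hl1.le hsnn]
  · have hsq : (2*a - l1*(a - (1+t)*m))^2 ≤ (l1*sv)^2 := by
      have h1 : (l1*sv)^2 = l1^2 * ((a - (1+t)*m)^2 + 4*(t*(a*m))) := by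
        rw [mul_pow, hs2]
      rw [h1]
      nlinarith [mul_nonneg ha.le hP]
    have h2 : 2*a - l1*(a - (1+t)*m) ≤ l1*sv := by
      nlinarith [hsq, mul_nonneg hl1.le hsnn]
    linarith

lemma le_lone_of_Pq_nonpos (hd : 0 < t ∨ m < a) (hl1 : 0 < l1)
    (hP : Pq t m a l1 ≤ 0) : l1 ≤ lone t m a := by
  have hs2 : (Real.sqrt ((a - (1+t)*m)^2 + 4*(t*(a*m))))^2
      = (a - (1+t)*m)^2 + 4*(t*(a*m)) := Real.sq_sqrt (by positivity)
  have hsnn : 0 ≤ Real.sqrt ((a - (1+t)*m)^2 + 4*(t*(a*m))) := Real.sqrt_nonneg _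
  have hden : 0 < Real.sqrt ((a - (1+t)*m)^2 + 4*(t*(a*m))) + (a - (1+t)*m) :=
    lone_denom_pos ht hm ha hd
  rw [Pq] at hP
  rw [lone, le_div_iff₀ hden]
  generalize hsv : Real.sqrt ((a - (1+t)*m)^2 + 4*(t*(a*m))) = sv at hs2 hden hsnn
  have hrhs : 0 < 2*a - l1*(a - (1+t)*m) := by
    nlinarith [mul_nonneg (mul_nonneg ht hm) (sq_nonneg l1)]
  have hsq : (l1*sv)^2 ≤ (2*a - l1*(a - (1+t)*m))^2 := by
    have h1 : (l1*sv)^2 = l1^2 * ((a - (1+t)*m)^2 + 4*(t*(a*m))) := by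
      rw [mul_pow, hs2]
    rw [h1]
    nlinarith [mul_nonneg ha.le (neg_nonneg.mpr hP)]
  have h2 : l1*sv ≤ 2*a - l1*(a - (1+t)*m) := by
    nlinarith [hsq, mul_nonneg hl1.le hsnn]
  linarith

end scalar

section fold
variable {ι : Type*}

lemma fold_min_attained (s : Finset ι) (f : ι → ℝ) (b : ℝ) :
    s.fold min b f = b ∨ ∃ x ∈ s, s.fold min b f = f x := by
  classical
  induction s using Finset.induction_on with
  | empty => simp
  | @insert a s ha ih =>
    rw [Finset.fold_insert ha]
    rcases le_total (f a) (s.fold min b f) with h | h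
    · exact Or.inr ⟨a, Finset.mem_insert_self a s, (min_eq_left h)⟩
    · rw [min_eq_right h]
      rcases ih with h' | ⟨x, hx, h'⟩
      · exact Or.inl h'
      · exact Or.inr ⟨x, Finset.mem_insert_of_mem hx, h'⟩

lemma fold_max_attained (s : Finset ι) (f : ι → ℝ) (b : ℝ) :
    s.fold max b f = b ∨ ∃ x ∈ s, s.fold max b f = f x := by
  classical
  induction s using Finset.induction_on with
  | empty => simp
  | @insert a s ha ih =>
    rw [Finset.fold_insert ha]
    rcases le_total (s.fold max b f) (f a) with h | h
    · exact Or.inr ⟨a, Finset.mem_insert_self a s, (max_eq_left h)⟩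
    · rw [max_eq_right h]
      rcases ih with h' | ⟨x, hx, h'⟩
      · exact Or.inl h'
      · exact Or.inr ⟨x, Finset.mem_insert_of_mem hx, h'⟩

lemma continuous_fold_min {X : Type*} [TopologicalSpace X] (s : Finset ι)
    (F : ι → X → ℝ) (b : ℝ) (h : ∀ i ∈ s, Continuous (F i)) :
    Continuous fun x => s.fold min b (fun i => F i x) := by
  classical
  induction s using Finset.induction_on with
  | empty => simpa using continuous_const
  | @insert a s ha ih =>
    simp only [Finset.fold_insert ha]
    exact (h a (Finset.mem_insert_self a s)).min
      (ih fun i hi => h i (Finset.mem_insert_of_mem hi))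

lemma continuousAt_fold_max {X : Type*} [TopologicalSpace X] (s : Finset ι)
    (F : ι → X → ℝ) (b : ℝ) {x : X} (h : ∀ i ∈ s, ContinuousAt (F i) x) :
    ContinuousAt (fun y => s.fold max b (fun i => F i y)) x := by
  classical
  induction s using Finset.induction_on with
  | empty => simpa using continuousAt_const
  | @insert a s ha ih =>
    simp only [Finset.fold_insert ha]
    exact (h a (Finset.mem_insert_self a s)).max
      (ih fun i hi => h i (Finset.mem_insert_of_mem hi))

end fold

-- chunk 4: trivialization data
variable {n : ℕ}

noncomputable def tH (H : Hyperplane n) (x' : Fin n → ℂ) : ℝ := ‖lfC H x'‖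

lemma tH_nonneg (H : Hyperplane n) (x') : 0 ≤ tH H x' := norm_nonneg _
lemma tH_eq_zero_iff {H : Hyperplane n} {x'} : tH H x' = 0 ↔ x' ∈ H.carrierC := by
  rw [tH, norm_eq_zero]; exact Iff.rfl
lemma tH_continuous (H : Hyperplane n) : Continuous (tH H) := (lfC_continuous H).norm

noncomputable def aH (c0 : Fin n → ℝ) (H : Hyperplane n) : ℝ := (lf H c0)^2

lemma aH_pos {c0 : Fin n → ℝ} {H : Hyperplane n} (h : lf H c0 ≠ 0) : 0 < aH c0 H :=
  lt_of_le_of_ne (sq_nonneg _) (Ne.symm (pow_ne_zero 2 h))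

noncomputable def gH (c0 : Fin n → ℝ) (H : Hyperplane n) (v : Fin n → ℝ) : ℝ :=
  (lf H (c0 + v) - lf H c0) * lf H c0

lemma lpr_eq (c0 : Fin n → ℝ) (H : Hyperplane n) (v : Fin n → ℝ) :
    lf H (c0 + v) * lf H c0 = aH c0 H + gH c0 H v := by
  rw [aH, gH]; ring

lemma gH_smul (c0 : Fin n → ℝ) (H : Hyperplane n) (v : Fin n → ℝ) (μ : ℝ) :
    gH c0 H (μ • v) = μ * gH c0 H v := by
  rw [gH, gH, lf_smul_ray]; ring

lemma gH_continuous (c0 : Fin n → ℝ) (H : Hyperplane n) : Continuous (gH c0 H) := by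
  apply Continuous.mul _ continuous_const
  exact ((lf_continuous H).comp (continuous_const.add continuous_id)).sub continuous_const

noncomputable def mH (c0 : Fin n → ℝ) (H : Hyperplane n) (v : Fin n → ℝ) : ℝ :=
  max (-(gH c0 H v)) 0

lemma mH_nonneg (c0 : Fin n → ℝ) (H : Hyperplane n) (v) : 0 ≤ mH c0 H v := le_max_right _ _

lemma neg_gH_le_mH (c0 : Fin n → ℝ) (H : Hyperplane n) (v) : -(gH c0 H v) ≤ mH c0 H v :=
  le_max_left _ _

lemma mH_smul (c0 : Fin n → ℝ) (H : Hyperplane n) (v : Fin n → ℝ) {μ : ℝ} (hμ : 0 ≤ μ) :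
    mH c0 H (μ • v) = μ * mH c0 H v := by
  rw [mH, mH, gH_smul]
  rw [mul_max_of_nonneg _ _ hμ, mul_zero, mul_neg]

lemma mH_continuous (c0 : Fin n → ℝ) (H : Hyperplane n) : Continuous (mH c0 H) :=
  (gH_continuous c0 H).neg.max continuous_const

lemma mH_lt_aH_iff {c0 : Fin n → ℝ} {H : Hyperplane n} (ha : 0 < aH c0 H) (v : Fin n → ℝ) :
    mH c0 H v < aH c0 H ↔ 0 < lf H (c0 + v) * lf H c0 := by
  rw [lpr_eq, mH, max_lt_iff]
  constructor
  · rintro ⟨h1, _⟩; linarith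
  · intro h; constructor <;> linarith

noncomputable def kap (Sfin : Finset (Hyperplane n)) (c0 : Fin n → ℝ)
    (x' : Fin n → ℂ) (v : Fin n → ℝ) : ℝ :=
  Sfin.fold min 1 (fun H => kone (tH H x') (mH c0 H v) (aH c0 H))

noncomputable def lam (Sfin : Finset (Hyperplane n)) (c0 : Fin n → ℝ)
    (x' : Fin n → ℂ) (v' : Fin n → ℝ) : ℝ :=
  Sfin.fold max 1 (fun H => lone (tH H x') (mH c0 H v') (aH c0 H))

section kaplam

variable {Sfin : Finset (Hyperplane n)} {c0 : Fin n → ℝ}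
  (hpos : ∀ H ∈ Sfin, 0 < aH c0 H) {x' : Fin n → ℂ} {v v' : Fin n → ℝ}

include hpos

lemma kap_pos : 0 < kap Sfin c0 x' v := by
  classical
  rcases fold_min_attained Sfin (fun H => kone (tH H x') (mH c0 H v) (aH c0 H)) 1 with h | ⟨H, hH, h⟩
  · rw [kap, h]; norm_num
  · rw [kap, h]; exact kone_pos (tH_nonneg H x') (mH_nonneg c0 H v) (hpos H hH)

lemma kap_le_one : kap Sfin c0 x' v ≤ 1 :=
  (Finset.fold_min_le 1).mpr (Or.inl le_rfl)

omit hpos in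
lemma kap_le {H} (hH : H ∈ Sfin) :
    kap Sfin c0 x' v ≤ kone (tH H x') (mH c0 H v) (aH c0 H) :=
  (Finset.fold_min_le _).mpr (Or.inr ⟨H, hH, le_rfl⟩)

omit hpos in
lemma lam_ge_one : 1 ≤ lam Sfin c0 x' v' :=
  (Finset.le_fold_max 1).mpr (Or.inl le_rfl)

omit hpos in
lemma lam_ge {H} (hH : H ∈ Sfin) :
    lone (tH H x') (mH c0 H v') (aH c0 H) ≤ lam Sfin c0 x' v' :=
  (Finset.le_fold_max _).mpr (Or.inr ⟨H, hH, le_rfl⟩)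

omit hpos in
lemma lam_pos : 0 < lam Sfin c0 x' v' := lt_of_lt_of_le one_pos (lam_ge_one)

/-- forward map lands in the fiber -/
lemma forward_mem {H} (hH : H ∈ Sfin) (ht0 : tH H x' = 0) :
    0 < lf H (c0 + kap Sfin c0 x' v • v) * lf H c0 := by
  have ha := hpos H hH
  have hκpos := kap_pos hpos (x' := x') (v := v)
  have hκ := kap_le (c0 := c0) (x' := x') (v := v) hH
  rw [ht0] at hκ
  have hlt : kap Sfin c0 x' v * mH c0 H v < aH c0 H :=
    mul_lt_of_le_kone_zero (mH_nonneg c0 H v) ha hκpos.le hκ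
  rw [lpr_eq, gH_smul]
  have : -(kap Sfin c0 x' v * mH c0 H v) ≤ kap Sfin c0 x' v * gH c0 H v := by
    have := neg_gH_le_mH c0 H v
    nlinarith
  linarith

omit hpos in
/-- the quotient identity relating `kone` and `Pq`. -/
lemma kone_mul_sub_one {t m' a l : ℝ} (hden : 0 < a + l*m' + t*(l*m')) :
    kone t (l*m') a * l - 1 = (Pq t m' a l)/(a + l*m' + t*(l*m')) := by
  rw [kone, Pq]
  rw [eq_div_iff hden.ne', sub_mul, div_mul_eq_mul_div, div_mul_cancel₀ _ hden.ne']
  ring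

omit hpos in
lemma Pq_at_inv {t m a κ : ℝ} (hκ : κ ≠ 0) :
    Pq t (κ*m) a (1/κ) = (1/κ) * ((a + t*m) - κ*(a+m+t*m)) := by
  rw [Pq]; field_simp; ring

omit hpos in
lemma Pq_nonneg_of_lone_le {t m a l : ℝ} (ht : 0 ≤ t) (hm : 0 ≤ m) (ha : 0 < a)
    (hd : 0 < t ∨ m < a) (hl : 0 < l) (hle : lone t m a ≤ l) : 0 ≤ Pq t m a l := by
  by_contra hcon
  push_neg at hcon
  have h1 : l ≤ lone t m a := le_lone_of_Pq_nonpos ht hm ha hd hl hcon.le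
  have h2 : l = lone t m a := le_antisymm h1 hle
  rw [h2, Pq_lone_eq_zero ht hm ha hd] at hcon
  exact lt_irrefl 0 hcon

/-- RT2 : `lam` after the forward map inverts `kap`. -/
lemma lam_kap : lam Sfin c0 x' (kap Sfin c0 x' v • v) * kap Sfin c0 x' v = 1 := by
  classical
  set κ := kap Sfin c0 x' v with hκdef
  have hκpos : 0 < κ := kap_pos hpos
  have hκ1 : κ ≤ 1 := kap_le_one hpos
  have hdgen : ∀ H ∈ Sfin, tH H x' = 0 → κ * mH c0 H v < aH c0 H := by
    intro H hH h0
    have hκle := kap_le (c0 := c0) (x' := x') (v := v) hH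
    rw [h0] at hκle
    exact mul_lt_of_le_kone_zero (mH_nonneg c0 H v) (hpos H hH) hκpos.le hκle
  have hd : ∀ H ∈ Sfin, 0 < tH H x' ∨ κ * mH c0 H v < aH c0 H := by
    intro H hH
    rcases eq_or_lt_of_le (tH_nonneg H x') with h0 | h0
    · exact Or.inr (hdgen H hH h0.symm)
    · exact Or.inl h0
  have hPq : ∀ H ∈ Sfin, Pq (tH H x') (κ * mH c0 H v) (aH c0 H) (1/κ)
      = (1/κ) * ((aH c0 H + tH H x' * mH c0 H v)
          - κ*(aH c0 H + mH c0 H v + tH H x' * mH c0 H v)) := by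
    intro H hH; exact Pq_at_inv (ne_of_gt hκpos)
  have hkone_denom : ∀ H ∈ Sfin,
      0 < aH c0 H + mH c0 H v + tH H x' * mH c0 H v := by
    intro H hH
    have := hpos H hH
    nlinarith [mH_nonneg c0 H v, mul_nonneg (tH_nonneg H x') (mH_nonneg c0 H v)]
  have hPge : ∀ H ∈ Sfin, 0 ≤ Pq (tH H x') (κ * mH c0 H v) (aH c0 H) (1/κ) := by
    intro H hH
    rw [hPq H hH]
    apply mul_nonneg (by positivity)
    rw [sub_nonneg]
    have hκle := kap_le (c0 := c0) (x' := x') (v := v) hH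
    rw [kone, le_div_iff₀ (hkone_denom H hH)] at hκle
    linarith [hκle]
  have key : lam Sfin c0 x' (κ • v) = 1/κ := by
    have hmκ : ∀ H, mH c0 H (κ • v) = κ * mH c0 H v := fun H => mH_smul c0 H v hκpos.le
    apply le_antisymm
    · rw [lam]
      apply (Finset.fold_max_le _).mpr
      refine ⟨by rw [le_div_iff₀ hκpos, one_mul]; exact hκ1, ?_⟩
      intro H hH
      rw [hmκ H]
      exact lone_le_of_Pq_nonneg (tH_nonneg H x')
        (mul_nonneg hκpos.le (mH_nonneg c0 H v))
        (hpos H hH) (hd H hH) (by positivity) (hPge H hH)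
    · rcases fold_min_attained Sfin
        (fun H => kone (tH H x') (mH c0 H v) (aH c0 H)) 1 with h | ⟨H, hH, h⟩
      · have h' : κ = 1 := h
        have h2 : (1:ℝ)/κ = 1 := by rw [h']; norm_num
        rw [h2]
        exact lam_ge_one
      · have h : κ = kone (tH H x') (mH c0 H v) (aH c0 H) := h
        have hPeq : Pq (tH H x') (κ * mH c0 H v) (aH c0 H) (1/κ) = 0 := by
          rw [hPq H hH]
          have heq : κ * (aH c0 H + mH c0 H v + tH H x' * mH c0 H v)
              = aH c0 H + tH H x' * mH c0 H v := by
            rw [h, kone, div_mul_cancel₀ _ (ne_of_gt (hkone_denom H hH))]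
          rw [heq]; ring
        have hll := le_lone_of_Pq_nonpos (tH_nonneg H x')
          (mul_nonneg hκpos.le (mH_nonneg c0 H v)) (hpos H hH) (hd H hH)
          (by positivity) (le_of_eq hPeq)
        refine le_trans hll ?_
        rw [← hmκ H]
        exact lam_ge hH
  rw [key]
  exact one_div_mul_cancel (ne_of_gt hκpos)

/-- RT1 : `kap` after the inverse map inverts `lam`. -/
lemma kap_lam (hE : ∀ H ∈ Sfin, tH H x' = 0 → mH c0 H v' < aH c0 H) :
    kap Sfin c0 x' (lam Sfin c0 x' v' • v') * lam Sfin c0 x' v' = 1 := by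
  classical
  set l := lam Sfin c0 x' v' with hldef
  have hlpos : 0 < l := lam_pos
  have hl1 : 1 ≤ l := lam_ge_one
  have hd : ∀ H ∈ Sfin, 0 < tH H x' ∨ mH c0 H v' < aH c0 H := by
    intro H hH
    rcases eq_or_lt_of_le (tH_nonneg H x') with h0 | h0
    · exact Or.inr (hE H hH h0.symm)
    · exact Or.inl h0
  have hmκ : ∀ H, mH c0 H (l • v') = l * mH c0 H v' := fun H => mH_smul c0 H v' hlpos.le
  have hden : ∀ H ∈ Sfin,
      0 < aH c0 H + l * mH c0 H v' + tH H x' * (l * mH c0 H v') := by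
    intro H hH
    have := hpos H hH
    nlinarith [mH_nonneg c0 H v', mul_nonneg (tH_nonneg H x') (mul_nonneg hlpos.le (mH_nonneg c0 H v'))]
  have key : kap Sfin c0 x' (l • v') = 1/l := by
    apply le_antisymm
    · rcases fold_max_attained Sfin
        (fun H => lone (tH H x') (mH c0 H v') (aH c0 H)) 1 with h | ⟨H, hH, h⟩
      · have h' : l = 1 := h
        have h2 : (1:ℝ)/l = 1 := by rw [h']; norm_num
        rw [h2]
        exact kap_le_one hpos
      · have h : l = lone (tH H x') (mH c0 H v') (aH c0 H) := h
        have hPeq : Pq (tH H x') (mH c0 H v') (aH c0 H) l = 0 := by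
          rw [h]
          exact Pq_lone_eq_zero (tH_nonneg H x') (mH_nonneg c0 H v') (hpos H hH) (hd H hH)
        have hkone : kone (tH H x') (l * mH c0 H v') (aH c0 H) * l - 1 = 0 := by
          rw [kone_mul_sub_one (hden H hH), hPeq, zero_div]
        have hko : kone (tH H x') (l * mH c0 H v') (aH c0 H) = 1/l := by
          rw [eq_div_iff (ne_of_gt hlpos)]
          linarith [hkone]
        calc kap Sfin c0 x' (l • v')
            ≤ kone (tH H x') (mH c0 H (l • v')) (aH c0 H) := kap_le hH
          _ = 1/l := by rw [hmκ H, hko]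
    · rw [kap]
      apply (Finset.le_fold_min _).mpr
      refine ⟨by rw [div_le_one hlpos]; exact hl1, ?_⟩
      intro H hH
      rw [hmκ H]
      have hPge : 0 ≤ Pq (tH H x') (mH c0 H v') (aH c0 H) l :=
        Pq_nonneg_of_lone_le (tH_nonneg H x') (mH_nonneg c0 H v') (hpos H hH)
          (hd H hH) hlpos (lam_ge hH)
      have hko := kone_mul_sub_one (t := tH H x') (m' := mH c0 H v') (a := aH c0 H)
        (l := l) (hden H hH)
      have h1 : 0 ≤ kone (tH H x') (l * mH c0 H v') (aH c0 H) * l - 1 := by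
        rw [hko]
        exact div_nonneg hPge (hden H hH).le
      rw [div_le_iff₀ hlpos]
      linarith
  rw [key]
  exact one_div_mul_cancel (ne_of_gt hlpos)

end kaplam

end BundleAux

set_option maxHeartbeats 3000000 in
open BundleAux in
/-- The sets `U_C`, for `C` ranging over the chambers of `A`, form an open
cover of `M(A_{(3)})`, and there is a well-defined continuous map `f : M(A_{(3)}) → X_A(ℂ)`
with `f (x, z) = [C, x]` whenever `(x, z) ∈ U_C`; moreover, `f` is a fiber bundle projection
with fiber `ℝ^n`. -/
theorem exists_fiber_bundle_M3_to_XAC (n : ℕ) (hn : 1 ≤ n)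
    (A : Set (Hyperplane n)) (hA : A.Finite) :
    (∀ C : Chambers n A, IsOpen (UC A C.1)) ∧
    (⋃ C : Chambers n A, UC A C.1) = M3 A ∧
    ∃ f : (M3 A).Elem → XAC n A,
      Continuous f ∧
      (∀ (C : Chambers n A) (p : (M3 A).Elem),
        p.1 ∈ UC A C.1 → f p = Quot.mk (XACRel A) ⟨C, p.1.1⟩) ∧
      IsFiberBundleWith (Fin n → ℝ) f := by
  classical
  refine ⟨fun C => isOpen_UC hA C.2, ?_, ?_⟩
  · ext p
    simp only [mem_iUnion]
    exact ⟨fun ⟨C, hC⟩ => UC_subset_M3 C.2 hC, fun hp => exists_chamber_of_M3 hA hp⟩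
  -- the map f
  have hcov : ∀ p : (M3 A).Elem, ∃ C : Chambers n A, p.1 ∈ UC A C.1 :=
    fun p => exists_chamber_of_M3 hA p.2
  set f : (M3 A).Elem → XAC n A :=
    fun p => Quot.mk (XACRel A) ⟨(hcov p).choose, p.1.1⟩ with hf
  have hrel : ∀ (C D : Chambers n A) (p : (Fin n → ℂ) × (Fin n → ℝ)),
      p ∈ UC A C.1 → p ∈ UC A D.1 →
      XACRel A ⟨C, p.1⟩ ⟨D, p.1⟩ := by
    intro C D p hC hD
    refine ⟨rfl, fun H hH hmem => ?_⟩
    have h1 := hC H hH.1 hmem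
    have h2 := hD H hH.1 hmem
    obtain ⟨c0, hc0⟩ := chamber_nonempty C.2
    obtain ⟨d0, hd0⟩ := chamber_nonempty D.2
    apply (separates_iff C.2 D.2 hc0 hd0 hH.1).mp hH.2
    have e1 := connectedComponentIn_eq (h1.2 hc0)
    have e2 := connectedComponentIn_eq (h2.2 hd0)
    rw [← e1, ← e2]
  have hspec : ∀ (C : Chambers n A) (p : (M3 A).Elem),
      p.1 ∈ UC A C.1 → f p = Quot.mk (XACRel A) ⟨C, p.1.1⟩ :=
    fun C p hp => Quot.sound (hrel (hcov p).choose C p.1 (hcov p).choose_spec hp)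
  have hcont : Continuous f := by
    rw [continuous_iff_continuousAt]
    intro p
    obtain ⟨C, hC⟩ := hcov p
    have hopen : IsOpen ((Subtype.val) ⁻¹' (UC A C.1) : Set (M3 A).Elem) :=
      (isOpen_UC hA C.2).preimage continuous_subtype_val
    have hg : Continuous (fun q : (M3 A).Elem => Quot.mk (XACRel A) ⟨C, q.1.1⟩) :=
      continuous_quot_mk.comp
        ((continuous_sigmaMk).comp (continuous_fst.comp continuous_subtype_val))
    apply hg.continuousAt.congr
    filter_upwards [hopen.mem_nhds hC] with q hq
    exact (hspec C q hq).symm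
  have hsurj : Function.Surjective f := by
    intro y
    induction y using Quot.ind with
    | _ s =>
      obtain ⟨C, x⟩ := s
      obtain ⟨c0, hc0⟩ := chamber_nonempty C.2
      have hU : (x, c0) ∈ UC A C.1 := by
        intro H hH _
        exact (sameSide_iff C.2 hc0 hH c0).mpr
          (mul_self_pos.mpr (lf_ne_chamber C.2 hc0 hH))
      have hM : (x, c0) ∈ M3 A := UC_subset_M3 C.2 hU
      exact ⟨⟨(x, c0), hM⟩, hspec C ⟨(x, c0), hM⟩ hU⟩
  refine ⟨f, hcont, hspec, hcont, hsurj, ?_⟩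
  -- local triviality
  intro b
  induction b using Quot.ind with
  | _ s =>
  obtain ⟨Cb, x⟩ := s
  obtain ⟨cb, hcb⟩ := chamber_nonempty Cb.2
  -- the finite set of hyperplanes through x
  have hSFfin : {H | H ∈ A ∧ x ∈ H.carrierC}.Finite := hA.subset (fun H hH => hH.1)
  set Sfin : Finset (Hyperplane n) := hSFfin.toFinset with hSfin
  have mem_Sfin : ∀ {H}, H ∈ Sfin ↔ H ∈ A ∧ x ∈ H.carrierC := by
    intro H; rw [hSfin, Set.Finite.mem_toFinset]; exact Iff.rfl
  have hpos : ∀ H ∈ Sfin, 0 < aH cb H :=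
    fun H hH => aH_pos (lf_ne_chamber Cb.2 hcb (mem_Sfin.mp hH).1)
  -- the base neighbourhood B in ℂ^n
  have hBAfin : {H | H ∈ A ∧ x ∉ H.carrierC}.Finite := hA.subset (fun H hH => hH.1)
  set B : Set (Fin n → ℂ) := ⋂ H ∈ {H | H ∈ A ∧ x ∉ H.carrierC}, (H.carrierCᶜ) with hB
  have hBopen : IsOpen B := by
    apply hBAfin.isOpen_biInter
    intro H _
    exact (IsClosed.preimage (lfC_continuous H) isClosed_singleton).isOpen_compl
  have hxB : x ∈ B := by
    rw [hB]
    exact mem_iInter₂.mpr (fun H hH => hH.2)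
  have hBmem : ∀ x' ∈ B, ∀ H ∈ A, x' ∈ H.carrierC → H ∈ Sfin := by
    intro x' hx' H hH hmem
    by_contra hcon
    have : x ∉ H.carrierC := by
      intro hx
      exact hcon (mem_Sfin.mpr ⟨hH, hx⟩)
    exact (mem_iInter₂.mp hx' H ⟨hH, this⟩) hmem
  -- the open set V in the quotient
  set V : Set (XAC n A) := (fun x' => Quot.mk (XACRel A) ⟨Cb, x'⟩) '' B with hV
  have hqeq : ∀ s t : (Σ _ : Chambers n A, Fin n → ℂ),
      Quot.mk (XACRel A) s = Quot.mk (XACRel A) t ↔ XACRel A s t := by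
    intro s t
    rw [Quot.eq]
    exact (xacrel_equivalence).eqvGen_iff
  have hVmem : ∀ (D : Chambers n A) (x' : Fin n → ℂ),
      Quot.mk (XACRel A) ⟨D, x'⟩ ∈ V ↔
        x' ∈ B ∧ ∀ H ∈ SepSet A D.1 Cb.1, x' ∉ H.carrierC := by
    intro D x'
    constructor
    · rintro ⟨x'', hx''B, he⟩
      obtain ⟨h2, hsep⟩ := (hqeq _ _).mp he.symm
      have hxx : x' = x'' := h2
      exact ⟨hxx ▸ hx''B, fun H hH hmem => (hsep H hH) hmem⟩
    · rintro ⟨hx'B, hsep⟩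
      refine ⟨x', hx'B, (hqeq ⟨Cb, x'⟩ ⟨D, x'⟩).mpr ⟨rfl, fun H hH hmem => ?_⟩⟩
      exact hsep H ⟨hH.1, fun u hu w hw => (hH.2 w hw u hu).symm⟩ hmem
  have hVopen : IsOpen V := by
    rw [← (isQuotientMap_quot_mk).isOpen_preimage]
    rw [isOpen_sigma_iff]
    intro D
    have : (Sigma.mk D) ⁻¹' (Quot.mk (XACRel A) ⁻¹' V)
        = B ∩ ⋂ H ∈ SepSet A D.1 Cb.1, (H.carrierCᶜ) := by
      ext x'
      simp only [mem_preimage, mem_inter_iff, mem_iInter]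
      rw [hVmem D x']
      constructor
      · rintro ⟨h1, h2⟩; exact ⟨h1, fun H hH => h2 H hH⟩
      · rintro ⟨h1, h2⟩; exact ⟨h1, fun H hH => h2 H hH⟩
    rw [this]
    apply hBopen.inter
    apply Set.Finite.isOpen_biInter (hA.subset (fun H hH => hH.1))
    intro H _
    exact (IsClosed.preimage (lfC_continuous H) isClosed_singleton).isOpen_compl
  have hbV : Quot.mk (XACRel A) ⟨Cb, x⟩ ∈ V := ⟨x, hxB, rfl⟩
  -- the coordinate map
  set coord : XAC n A → (Fin n → ℂ) :=
    Quot.lift (fun s : Σ _ : Chambers n A, Fin n → ℂ => s.2) (fun a b h => h.1)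
    with hcoord
  have hcoord_cont : Continuous coord :=
    continuous_quot_lift _ (continuous_sigma fun C => continuous_id)
  have hcoordf : ∀ p : (M3 A).Elem, coord (f p) = p.1.1 := fun p => rfl
  have hVrep : ∀ y ∈ V, y = Quot.mk (XACRel A) ⟨Cb, coord y⟩ ∧ coord y ∈ B := by
    rintro y ⟨x', hx', rfl⟩
    exact ⟨rfl, hx'⟩
  -- membership in UC Cb from the fiber conditions
  have hUCb : ∀ (x' : Fin n → ℂ) (z : Fin n → ℝ), x' ∈ B →
      (∀ H ∈ Sfin, tH H x' = 0 → 0 < lf H z * lf H cb) → (x', z) ∈ UC A Cb.1 := by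
    intro x' z hx'B hsig H hH hmem
    have hHS : H ∈ Sfin := hBmem x' hx'B H hH hmem
    have := hsig H hHS (tH_eq_zero_iff.mpr hmem)
    exact (sameSide_iff Cb.2 hcb hH z).mpr this
  -- characterization of the preimage of V
  have hEchar : ∀ p : (M3 A).Elem, f p ∈ V ↔
      (p.1.1 ∈ B ∧ ∀ H ∈ Sfin, tH H p.1.1 = 0 → 0 < lf H p.1.2 * lf H cb) := by
    intro p
    constructor
    · intro hfV
      have hCp := (hcov p).choose_spec
      set Cp := (hcov p).choose
      have hfp : f p = Quot.mk (XACRel A) ⟨Cp, p.1.1⟩ := rfl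
      rw [hfp] at hfV
      obtain ⟨hx'B, hsep⟩ := (hVmem Cp p.1.1).mp hfV
      refine ⟨hx'B, fun H hH ht0 => ?_⟩
      have hmem : p.1.1 ∈ H.carrierC := tH_eq_zero_iff.mp ht0
      have hHA : H ∈ A := (mem_Sfin.mp hH).1
      have hside := hCp H hHA hmem
      obtain ⟨cp, hcp⟩ := chamber_nonempty Cp.2
      have hs1 := (sameSide_iff Cp.2 hcp hHA p.1.2).mp hside
      -- H does not separate Cp and Cb
      have hnsep : ¬ Separates H Cp.1 Cb.1 := by
        intro hs
        exact (hsep H ⟨hHA, hs⟩) hmem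
      rw [separates_iff Cp.2 Cb.2 hcp hcb hHA] at hnsep
      push_neg at hnsep
      -- combine components
      have hzne : lf H p.1.2 ≠ 0 := by
        intro h0; rw [h0] at hs1; simp at hs1
      have hcpne : lf H cp ≠ 0 := lf_ne_chamber Cp.2 hcp hHA
      have hcbne : lf H cb ≠ 0 := lf_ne_chamber Cb.2 hcb hHA
      have e1 : connectedComponentIn H.carrierᶜ p.1.2
          = connectedComponentIn H.carrierᶜ cp := (comp_eq_iff H hzne hcpne).mpr hs1
      rw [← comp_eq_iff H hzne hcbne, e1, hnsep]
    · rintro ⟨hx'B, hsig⟩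
      have hU : p.1 ∈ UC A Cb.1 := hUCb p.1.1 p.1.2 hx'B hsig
      rw [hspec Cb p hU]
      exact (hVmem Cb p.1.1).mpr ⟨hx'B, fun H hH hmem => by
        exfalso
        obtain ⟨c0', hc0'⟩ := chamber_nonempty Cb.2
        exact absurd rfl (hH.2 c0' hc0' c0' hc0')⟩
  -- the two maps of the trivialization
  refine ⟨V, hbV, hVopen, ?_⟩
  have hmem_inv : ∀ (y : V) (w : Fin n → ℝ),
      ((coord y.1, cb + kap Sfin cb (coord y.1) (w - cb) • (w - cb)) ∈ M3 A) := by
    intro y w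
    obtain ⟨-, hcB⟩ := hVrep y.1 y.2
    intro H hH hc
    obtain ⟨hmem, hz⟩ := hc
    have hHS : H ∈ Sfin := hBmem _ hcB H hH hmem
    have hpo := forward_mem hpos (v := w - cb) hHS (tH_eq_zero_iff.mpr hmem)
    rw [mem_carrier_iff] at hz
    rw [hz] at hpo
    simp at hpo
  have hfV_inv : ∀ (y : V) (w : Fin n → ℝ),
      f ⟨(coord y.1, cb + kap Sfin cb (coord y.1) (w - cb) • (w - cb)), hmem_inv y w⟩ ∈ V := by
    intro y w
    obtain ⟨hyrep, hcB⟩ := hVrep y.1 y.2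
    apply (hEchar _).mpr
    exact ⟨hcB, fun H hH ht0 => forward_mem hpos (v := w - cb) hH ht0⟩
  have hEcond : ∀ p : (f ⁻¹' V).Elem,
      ∀ H ∈ Sfin, tH H p.1.1.1 = 0 → mH cb H (p.1.1.2 - cb) < aH cb H := by
    intro p H hH ht0
    have hs := ((hEchar p.1).mp p.2).2 H hH ht0
    rw [mH_lt_aH_iff (hpos H hH)]
    rw [add_sub_cancel]
    exact hs
  set Φ : (f ⁻¹' V).Elem → V × (Fin n → ℝ) := fun p => (⟨f p.1, p.2⟩,
        cb + lam Sfin cb p.1.1.1 (p.1.1.2 - cb) • (p.1.1.2 - cb)) with hΦ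
  set Ψ : V × (Fin n → ℝ) → (f ⁻¹' V).Elem := fun yw => ⟨⟨(coord yw.1.1,
        cb + kap Sfin cb (coord yw.1.1) (yw.2 - cb) • (yw.2 - cb)),
        hmem_inv yw.1 yw.2⟩, hfV_inv yw.1 yw.2⟩ with hΨ
  refine ⟨@Homeomorph.mk _ _ _ _ ⟨Φ, Ψ, ?_, ?_⟩ ?_ ?_, fun e => rfl⟩
  · -- left inverse
    intro p
    apply Subtype.ext
    apply Subtype.ext
    show ((coord (f p.1), cb + kap Sfin cb (coord (f p.1))
        ((cb + lam Sfin cb p.1.1.1 (p.1.1.2 - cb) • (p.1.1.2 - cb)) - cb) •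
        ((cb + lam Sfin cb p.1.1.1 (p.1.1.2 - cb) • (p.1.1.2 - cb)) - cb)) :
        (Fin n → ℂ) × (Fin n → ℝ)) = p.1.1
    have hx : coord (f p.1) = p.1.1.1 := rfl
    rw [hx]
    rw [add_sub_cancel_left]
    rw [smul_smul]
    rw [kap_lam hpos (hEcond p)]
    rw [one_smul]
    rw [← Prod.mk.eta (p := p.1.1)]
    apply Prod.ext
    · rfl
    · show cb + (p.1.1.2 - cb) = p.1.1.2
      abel
  · -- right inverse
    intro yw
    obtain ⟨hyrep, hcB⟩ := hVrep yw.1.1 yw.1.2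
    have hU : ((coord yw.1.1, cb + kap Sfin cb (coord yw.1.1) (yw.2 - cb) • (yw.2 - cb)))
        ∈ UC A Cb.1 := by
      apply hUCb _ _ hcB
      exact fun H hH ht0 => forward_mem hpos (v := yw.2 - cb) hH ht0
    apply Prod.ext
    · apply Subtype.ext
      show f ⟨_, hmem_inv yw.1 yw.2⟩ = yw.1.1
      rw [hspec Cb _ hU]
      exact hyrep.symm
    · show cb + lam Sfin cb (coord yw.1.1)
        ((cb + kap Sfin cb (coord yw.1.1) (yw.2 - cb) • (yw.2 - cb)) - cb) •
        ((cb + kap Sfin cb (coord yw.1.1) (yw.2 - cb) • (yw.2 - cb)) - cb) = yw.2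
      rw [add_sub_cancel_left]
      rw [smul_smul]
      rw [lam_kap hpos]
      rw [one_smul]
      abel
  · -- continuity of toFun
    apply Continuous.prodMk
    · exact (hcont.comp continuous_subtype_val).subtype_mk _
    · rw [continuous_iff_continuousAt]
      intro p
      have hg : ContinuousAt (fun q : (Fin n → ℂ) × (Fin n → ℝ) =>
          cb + lam Sfin cb q.1 (q.2 - cb) • (q.2 - cb)) p.1.1 := by
        apply ContinuousAt.add continuousAt_const
        apply ContinuousAt.fun_smul
        · show ContinuousAt (fun q : (Fin n → ℂ) × (Fin n → ℝ) =>
            lam Sfin cb q.1 (q.2 - cb)) p.1.1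
          simp only [lam]
          apply continuousAt_fold_max
          intro H hH
          have hd : 0 < tH H p.1.1.1 ∨ mH cb H (p.1.1.2 - cb) < aH cb H := by
            rcases eq_or_lt_of_le (tH_nonneg H p.1.1.1) with h0 | h0
            · exact Or.inr (hEcond p H hH h0.symm)
            · exact Or.inl h0
          have hne : Real.sqrt ((aH cb H - (1 + tH H p.1.1.1) * mH cb H (p.1.1.2 - cb))^2
              + 4*(tH H p.1.1.1*(aH cb H * mH cb H (p.1.1.2 - cb))))
              + (aH cb H - (1 + tH H p.1.1.1) * mH cb H (p.1.1.2 - cb)) ≠ 0 :=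
            ne_of_gt (lone_denom_pos (tH_nonneg H p.1.1.1)
              (mH_nonneg cb H (p.1.1.2 - cb)) (hpos H hH) hd)
          have htc : Continuous (fun q : (Fin n → ℂ) × (Fin n → ℝ) => tH H q.1) :=
            (tH_continuous H).comp continuous_fst
          have hmc : Continuous (fun q : (Fin n → ℂ) × (Fin n → ℝ) =>
              mH cb H (q.2 - cb)) :=
            (mH_continuous cb H).comp (continuous_snd.sub continuous_const)
          have hdenc : Continuous (fun q : (Fin n → ℂ) × (Fin n → ℝ) =>
              Real.sqrt ((aH cb H - (1 + tH H q.1) * mH cb H (q.2 - cb))^2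
                + 4*(tH H q.1*(aH cb H * mH cb H (q.2 - cb))))
              + (aH cb H - (1 + tH H q.1) * mH cb H (q.2 - cb))) := by
            apply Continuous.add
            · apply Real.continuous_sqrt.comp
              apply Continuous.add
              · exact (continuous_const.sub ((continuous_const.add htc).mul hmc)).pow 2
              · exact continuous_const.mul (htc.mul (continuous_const.mul hmc))
            · exact continuous_const.sub ((continuous_const.add htc).mul hmc)
          show ContinuousAt (fun q : (Fin n → ℂ) × (Fin n → ℝ) =>
            lone (tH H q.1) (mH cb H (q.2 - cb)) (aH cb H)) p.1.1
          simp only [lone]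
          exact ContinuousAt.div continuousAt_const hdenc.continuousAt hne
        · exact (continuous_snd.sub continuous_const).continuousAt
      have hvv : Continuous (fun p : (f ⁻¹' V).Elem => p.1.1) :=
        continuous_subtype_val.comp continuous_subtype_val
      show ContinuousAt ((fun q : (Fin n → ℂ) × (Fin n → ℝ) =>
          cb + lam Sfin cb q.1 (q.2 - cb) • (q.2 - cb)) ∘
          (fun p : (f ⁻¹' V).Elem => p.1.1)) p
      exact ContinuousAt.comp hg hvv.continuousAt
  · -- continuity of invFun
    have hx'c : Continuous (fun yw : V × (Fin n → ℝ) => coord yw.1.1) :=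
      hcoord_cont.comp (continuous_subtype_val.comp continuous_fst)
    have hkapc : Continuous (fun q : (Fin n → ℂ) × (Fin n → ℝ) => kap Sfin cb q.1 q.2) := by
      simp only [kap]
      apply continuous_fold_min
      intro H hH
      have htc : Continuous (fun q : (Fin n → ℂ) × (Fin n → ℝ) => tH H q.1) :=
        (tH_continuous H).comp continuous_fst
      have hmc : Continuous (fun q : (Fin n → ℂ) × (Fin n → ℝ) => mH cb H q.2) :=
        (mH_continuous cb H).comp continuous_snd
      show Continuous (fun q : (Fin n → ℂ) × (Fin n → ℝ) =>
        kone (tH H q.1) (mH cb H q.2) (aH cb H))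
      simp only [kone]
      apply Continuous.div
      · exact continuous_const.add (htc.mul hmc)
      · exact (continuous_const.add hmc).add (htc.mul hmc)
      · intro q
        have := hpos H hH
        have h1 := mH_nonneg cb H q.2
        have h2 := tH_nonneg H q.1
        nlinarith [mul_nonneg h2 h1]
    apply Continuous.subtype_mk
    apply Continuous.subtype_mk
    apply Continuous.prodMk
    · exact hx'c
    · apply Continuous.add continuous_const
      apply Continuous.fun_smul
      · show Continuous ((fun q : (Fin n → ℂ) × (Fin n → ℝ) => kap Sfin cb q.1 q.2) ∘
            (fun yw : V × (Fin n → ℝ) => (coord yw.1.1, yw.2 - cb)))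
        exact hkapc.comp (hx'c.prodMk (continuous_snd.sub continuous_const))
      · exact continuous_snd.sub continuous_const
end

section
/- There is a well-defined continuous map g : M(A_ℂ) → X_A(ℝ) satisfying g(x + iz) = [C,x] whenever C is a chamber such that for every H ∈ A with x ∈ H, the point x + z lies on the C-side of H (such a chamber exists for every point of M(A_ℂ)). Moreover, g is a fiber bundle projection with fiber ℝ^n. -/
open Set

/-- The complement `M(A_ℂ) = ℂ^n ∖ ⋃_{H ∈ A} H_ℂ` of the complexified arrangement. -/
def MC {n : ℕ} (A : Set (Hyperplane n)) : Set (Fin n → ℂ) :=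
  {x | ∀ H ∈ A, x ∉ H.carrierC}

/-- The real part `x` of a point `w = x + iz` of `ℂ^n`. -/
def rePart {n : ℕ} (w : Fin n → ℂ) : Fin n → ℝ := fun i => (w i).re

/-- The imaginary part `z` of a point `w = x + iz` of `ℂ^n`. -/
def imPart {n : ℕ} (w : Fin n → ℂ) : Fin n → ℝ := fun i => (w i).im

/-- The gluing relation defining `X_A(ℝ)`: the point `x` in the copy of `ℝ^n` indexed by the
chamber `C` is identified with the point `x` in the copy indexed by `D` whenever `x ∉ H`
for all `H ∈ Sep(C,D)`. -/
def XARRel {n : ℕ} (A : Set (Hyperplane n)) :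
    (Σ _ : Chambers n A, Fin n → ℝ) → (Σ _ : Chambers n A, Fin n → ℝ) → Prop :=
  fun p q => p.2 = q.2 ∧ ∀ H ∈ SepSet A p.1.1 q.1.1, p.2 ∉ H.carrier

/-- The real points `X_A(ℝ)`, as a topological space: the quotient of the disjoint union
`∐_{C ∈ Ch(A)} ℝ^n` by the equivalence relation generated by `XARRel`. -/
abbrev XAR (n : ℕ) (A : Set (Hyperplane n)) : Type := Quot (XARRel A)

namespace FBaux

open Real

variable {n : ℕ}

/-- The affine functional of a hyperplane. -/
noncomputable def L (H : Hyperplane n) (x : Fin n → ℝ) : ℝ :=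
  ∑ i, H.normal i * x i + H.const

/-- The linear part of the affine functional. -/
noncomputable def Ll (H : Hyperplane n) (z : Fin n → ℝ) : ℝ :=
  ∑ i, H.normal i * z i

lemma mem_carrier_iff {H : Hyperplane n} {x : Fin n → ℝ} :
    x ∈ H.carrier ↔ L H x = 0 := Iff.rfl

lemma L_eq (H : Hyperplane n) (x : Fin n → ℝ) : L H x = Ll H x + H.const := rfl

lemma continuous_Ll (H : Hyperplane n) : Continuous (Ll H) := by
  exact continuous_finset_sum _ fun i _ => continuous_const.mul (continuous_apply i)

lemma continuous_L (H : Hyperplane n) : Continuous (L H) :=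
  (continuous_Ll H).add continuous_const

lemma Ll_add (H : Hyperplane n) (y z : Fin n → ℝ) : Ll H (y + z) = Ll H y + Ll H z := by
  simp [Ll, mul_add, Finset.sum_add_distrib]

lemma Ll_smul (H : Hyperplane n) (t : ℝ) (z : Fin n → ℝ) : Ll H (t • z) = t * Ll H z := by
  simp only [Ll, Pi.smul_apply, smul_eq_mul, Finset.mul_sum]
  exact Finset.sum_congr rfl fun i _ => by ring

lemma L_add_Ll (H : Hyperplane n) (x z : Fin n → ℝ) : L H (x + z) = L H x + Ll H z := by
  simp only [L_eq, Ll_add]; ring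

lemma L_add_smul (H : Hyperplane n) (x z : Fin n → ℝ) (t : ℝ) :
    L H (x + t • z) = L H x + t * Ll H z := by
  rw [L_add_Ll, Ll_smul]

lemma L_combo (H : Hyperplane n) (p q : Fin n → ℝ) {a b : ℝ} (hab : a + b = 1) :
    L H (a • p + b • q) = a * L H p + b * L H q := by
  simp only [L_eq, Ll_add, Ll_smul]
  linear_combination H.const * hab.symm

lemma mem_carrierC_iff {H : Hyperplane n} {w : Fin n → ℂ} :
    w ∈ H.carrierC ↔ (L H (rePart w) = 0 ∧ Ll H (imPart w) = 0) := by
  have hre : (∑ i, (H.normal i : ℂ) * w i + (H.const : ℂ)).re = L H (rePart w) := by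
    simp [L, rePart, Complex.re_sum]
  have him : (∑ i, (H.normal i : ℂ) * w i + (H.const : ℂ)).im = Ll H (imPart w) := by
    simp [Ll, imPart, Complex.im_sum]
  constructor
  · intro h
    have h' : (∑ i, (H.normal i : ℂ) * w i + (H.const : ℂ)) = 0 := h
    constructor
    · rw [← hre, h']; simp
    · rw [← him, h']; simp
  · intro ⟨h1, h2⟩
    show (∑ i, (H.normal i : ℂ) * w i + (H.const : ℂ)) = 0
    apply Complex.ext <;> simp [hre, him, h1, h2]

/-- sign transitivity helper -/
lemma mul_pos_trans {a b c : ℝ} (h1 : 0 < a * b) (h2 : 0 < b * c) : 0 < a * c := by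
  rcases mul_pos_iff.1 h1 with ⟨ha, hb⟩ | ⟨ha, hb⟩ <;>
    rcases mul_pos_iff.1 h2 with ⟨hb', hc⟩ | ⟨hb', hc⟩ <;>
    first
      | exact mul_pos ha hc
      | exact mul_pos_of_neg_of_neg ha hc
      | linarith

lemma sign_perturb {a b : ℝ} (h : |a| < |b|) : 0 < (b + a) * b := by
  have h1 : -|a| ≤ a := neg_abs_le a
  have h2 : a ≤ |a| := le_abs_self a
  rcases le_or_gt 0 b with hb | hb
  · have : |b| = b := abs_of_nonneg hb
    nlinarith
  · have : |b| = -b := abs_of_neg hb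
    nlinarith

lemma div_pos_iff_mul_pos {a b : ℝ} (hb : b ≠ 0) : 0 < a / b ↔ 0 < a * b := by
  rcases hb.lt_or_gt with h | h
  · constructor
    · intro hd
      have : a < 0 := by
        by_contra hna
        push_neg at hna
        have : a / b ≤ 0 := div_nonpos_of_nonneg_of_nonpos hna h.le
        linarith
      exact mul_pos_of_neg_of_neg this h
    · intro hm
      have ha : a < 0 := by
        rcases mul_pos_iff.1 hm with ⟨_, hb'⟩ | ⟨ha, _⟩
        · linarith
        · exact ha
      exact div_pos_of_neg_of_neg ha h
  · constructor
    · intro hd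
      have ha : 0 < a := by
        by_contra hna
        push_neg at hna
        have : a / b ≤ 0 := div_nonpos_of_nonpos_of_nonneg hna h.le
        linarith
      exact mul_pos ha h
    · intro hm
      have ha : 0 < a := by
        rcases mul_pos_iff.1 hm with ⟨ha, _⟩ | ⟨_, hb'⟩
        · exact ha
        · linarith
      exact div_pos ha h

/-- The connected component of `y` in the complement of a hyperplane is the open
halfspace containing `y`. -/
lemma comp_eq (H : Hyperplane n) {y : Fin n → ℝ} (hy : L H y ≠ 0) :
    connectedComponentIn H.carrierᶜ y = {p | 0 < L H p * L H y} := by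
  have hmem : y ∈ {p | 0 < L H p * L H y} := by
    simpa using mul_self_pos.mpr hy
  have hconv : Convex ℝ {p | 0 < L H p * L H y} := by
    intro p hp q hq a b ha hb hab
    simp only [Set.mem_setOf_eq] at hp hq ⊢
    rw [L_combo H p q hab, add_mul]
    rcases le_total (L H p * L H y) (L H q * L H y) with h | h
    · have hb' : b * (L H q * L H y) ≥ b * (L H p * L H y) :=
        mul_le_mul_of_nonneg_left h hb
      nlinarith
    · have ha' : a * (L H p * L H y) ≥ a * (L H q * L H y) :=
        mul_le_mul_of_nonneg_left h ha
      nlinarith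
  have hsub : {p | 0 < L H p * L H y} ⊆ H.carrierᶜ := by
    intro p hp
    simp only [Set.mem_setOf_eq] at hp
    intro hpc
    rw [mem_carrier_iff] at hpc
    rw [hpc] at hp; simp at hp
  apply subset_antisymm
  · intro p hp
    by_contra hnp
    have hpc : p ∈ H.carrierᶜ := connectedComponentIn_subset _ _ hp
    have hpne : L H p ≠ 0 := by
      intro h0; exact hpc (mem_carrier_iff.mpr h0)
    have hneg : L H p * L H y < 0 :=
      lt_of_le_of_ne (not_lt.1 hnp) (mul_ne_zero hpne hy)
    have hK : IsPreconnected (connectedComponentIn H.carrierᶜ y) :=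
      isPreconnected_connectedComponentIn
    have hU : IsOpen {p : Fin n → ℝ | 0 < L H p * L H y} :=
      isOpen_lt continuous_const ((continuous_L H).mul continuous_const)
    have hV : IsOpen {p : Fin n → ℝ | L H p * L H y < 0} :=
      isOpen_lt ((continuous_L H).mul continuous_const) continuous_const
    have hcover : connectedComponentIn H.carrierᶜ y ⊆
        {p | 0 < L H p * L H y} ∪ {p | L H p * L H y < 0} := by
      intro q hq
      have hqc : q ∈ H.carrierᶜ := connectedComponentIn_subset _ _ hq
      have hqne : L H q ≠ 0 := fun h0 => hqc (mem_carrier_iff.mpr h0)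
      rcases lt_or_gt_of_ne (mul_ne_zero hqne hy) with h | h
      · exact Or.inr h
      · exact Or.inl h
    obtain ⟨q, _, hq1, hq2⟩ := hK _ _ hU hV hcover
      ⟨y, mem_connectedComponentIn (by intro hc; exact hy (mem_carrier_iff.mp hc)), hmem⟩
      ⟨p, hp, hneg⟩
    simp only [Set.mem_setOf_eq] at hq1 hq2
    linarith
  · exact hconv.isPreconnected.subset_connectedComponentIn hmem hsub

end FBaux

namespace FBaux

variable {n : ℕ} {A : Set (Hyperplane n)}

lemma complSet_subset_compl {H : Hyperplane n} (hH : H ∈ A) :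
    complSet A ⊆ H.carrierᶜ := fun _ hx => hx H hH

lemma chamber_exists_pt {C : Set (Fin n → ℝ)} (hC : IsChamber A C) :
    ∃ p, p ∈ C ∧ p ∈ complSet A := by
  obtain ⟨x, hx, rfl⟩ := hC
  exact ⟨x, mem_connectedComponentIn hx, hx⟩

lemma chamber_subset {C : Set (Fin n → ℝ)} (hC : IsChamber A C) :
    C ⊆ complSet A := by
  obtain ⟨x, hx, rfl⟩ := hC
  exact connectedComponentIn_subset _ _

lemma chamber_preconnected {C : Set (Fin n → ℝ)} (hC : IsChamber A C) :
    IsPreconnected C := by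
  obtain ⟨x, hx, rfl⟩ := hC
  exact isPreconnected_connectedComponentIn

lemma chamber_L_ne {C : Set (Fin n → ℝ)} (hC : IsChamber A C) {H : Hyperplane n}
    (hH : H ∈ A) {p : Fin n → ℝ} (hp : p ∈ C) : L H p ≠ 0 := by
  intro h0
  exact (chamber_subset hC hp) H hH (mem_carrier_iff.mpr h0)

lemma chamber_sign {C : Set (Fin n → ℝ)} (hC : IsChamber A C) {H : Hyperplane n}
    (hH : H ∈ A) {p q : Fin n → ℝ} (hp : p ∈ C) (hq : q ∈ C) : 0 < L H p * L H q := by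
  have hpne : L H p ≠ 0 := chamber_L_ne hC hH hp
  have hsub : C ⊆ H.carrierᶜ := (chamber_subset hC).trans (complSet_subset_compl hH)
  have h1 : C ⊆ connectedComponentIn H.carrierᶜ p :=
    (chamber_preconnected hC).subset_connectedComponentIn hp hsub
  have h2 := h1 hq
  rw [comp_eq H hpne] at h2
  simpa [mul_comm] using h2

lemma sameSide_iff {C : Set (Fin n → ℝ)} (hC : IsChamber A C) {H : Hyperplane n}
    (hH : H ∈ A) {p : Fin n → ℝ} (hp : p ∈ C) (y : Fin n → ℝ) :
    SameSide H C y ↔ (L H y ≠ 0 ∧ 0 < L H p * L H y) := by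
  constructor
  · rintro ⟨hy, hsub⟩
    have hyne : L H y ≠ 0 := fun h0 => hy (mem_carrier_iff.mpr h0)
    have := hsub hp
    rw [comp_eq H hyne] at this
    exact ⟨hyne, this⟩
  · rintro ⟨hy, hpos⟩
    refine ⟨fun hc => hy (mem_carrier_iff.mp hc), ?_⟩
    intro r hr
    rw [comp_eq H hy]
    exact mul_pos_trans (chamber_sign hC hH hr hp) hpos

lemma separates_iff {C D : Set (Fin n → ℝ)} (hC : IsChamber A C) (hD : IsChamber A D)
    {H : Hyperplane n} (hH : H ∈ A) {p q : Fin n → ℝ} (hp : p ∈ C) (hq : q ∈ D) :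
    Separates H C D ↔ L H p * L H q < 0 := by
  have hpne : L H p ≠ 0 := chamber_L_ne hC hH hp
  have hqne : L H q ≠ 0 := chamber_L_ne hD hH hq
  constructor
  · intro hsep
    by_contra hnl
    have hpos : 0 < L H p * L H q :=
      lt_of_le_of_ne (not_lt.1 hnl) (Ne.symm (mul_ne_zero hpne hqne))
    apply hsep p hp q hq
    rw [comp_eq H hpne, comp_eq H hqne]
    ext r
    simp only [Set.mem_setOf_eq]
    constructor
    · intro h; exact mul_pos_trans h hpos
    · intro h; exact mul_pos_trans h (by rw [mul_comm]; exact hpos)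
  · intro hneg px hpx qx hqx heq
    have h1 : 0 < L H p * L H px := chamber_sign hC hH hp hpx
    have h2 : 0 < L H qx * L H q := chamber_sign hD hH hqx hq
    have hpxne : L H px ≠ 0 := chamber_L_ne hC hH hpx
    have hqxc : qx ∈ H.carrierᶜ := ((chamber_subset hD).trans (complSet_subset_compl hH)) hqx
    have h3 : qx ∈ connectedComponentIn H.carrierᶜ px := heq ▸ mem_connectedComponentIn hqxc
    rw [comp_eq H hpxne] at h3
    simp only [Set.mem_setOf_eq] at h3
    have h4 : 0 < L H px * L H qx := by rwa [mul_comm] at h3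
    have h5 : 0 < L H p * L H qx := mul_pos_trans h1 h4
    have h6 : 0 < L H p * L H q := mul_pos_trans h5 h2
    linarith
  
end FBaux

namespace FBaux

variable {n : ℕ} {A : Set (Hyperplane n)}

lemma xarrel_equivalence : Equivalence (XARRel A) := by
  constructor
  · rintro ⟨C, x⟩
    refine ⟨rfl, fun H hH => ?_⟩
    obtain ⟨p, hp, _⟩ := chamber_exists_pt C.2
    exact absurd rfl (hH.2 p hp p hp)
  · rintro ⟨C, x⟩ ⟨D, y⟩ ⟨h1, h2⟩
    refine ⟨h1.symm, fun H hH => ?_⟩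
    have : H ∈ SepSet A C.1 D.1 := ⟨hH.1, fun a ha b hb => (hH.2 b hb a ha).symm⟩
    simp only at h1 ⊢
    rw [← h1]
    exact h2 H this
  · rintro ⟨C, x⟩ ⟨D, y⟩ ⟨E, z⟩ ⟨h1, h2⟩ ⟨h3, h4⟩
    refine ⟨h1.trans h3, fun H hH => ?_⟩
    obtain ⟨a, ha, _⟩ := chamber_exists_pt C.2
    obtain ⟨b, hb, _⟩ := chamber_exists_pt D.2
    obtain ⟨e, he, _⟩ := chamber_exists_pt E.2
    have hsep : L H a * L H e < 0 :=
      (separates_iff C.2 E.2 hH.1 ha he).mp hH.2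
    have hane : L H a ≠ 0 := chamber_L_ne C.2 hH.1 ha
    have hbne : L H b ≠ 0 := chamber_L_ne D.2 hH.1 hb
    have hene : L H e ≠ 0 := chamber_L_ne E.2 hH.1 he
    rcases lt_or_gt_of_ne (mul_ne_zero hane hbne) with hab | hab
    · exact h2 H ⟨hH.1, (separates_iff C.2 D.2 hH.1 ha hb).mpr hab⟩
    · have hbe : L H b * L H e < 0 := by
        by_contra hnb
        have : 0 < L H b * L H e :=
          lt_of_le_of_ne (not_lt.1 hnb) (Ne.symm (mul_ne_zero hbne hene))
        have := mul_pos_trans hab this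
        linarith
      have := h4 H ⟨hH.1, (separates_iff D.2 E.2 hH.1 hb he).mpr hbe⟩
      simp only at h1
      rw [h1]
      exact this

lemma quot_mk_eq_iff {p q : Σ _ : Chambers n A, Fin n → ℝ} :
    Quot.mk (XARRel A) p = Quot.mk (XARRel A) q ↔ XARRel A p q := by
  rw [Quot.eq]
  exact xarrel_equivalence.eqvGen_iff

/-- the class of `x` in the copy indexed by `C`. -/
def mkC (C : Chambers n A) (y : Fin n → ℝ) : XAR n A := Quot.mk (XARRel A) ⟨C, y⟩

/-- the underlying point of `ℝ^n`. -/
def sec : XAR n A → (Fin n → ℝ) := Quot.lift (fun p => p.2) (fun _ _ h => h.1)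

@[simp] lemma sec_mkC (C : Chambers n A) (y : Fin n → ℝ) : sec (mkC C y) = y := rfl

lemma continuous_sec : Continuous (sec (n := n) (A := A)) :=
  continuous_quot_lift _ (continuous_sigma fun _ => continuous_id)

lemma continuous_mkC (C : Chambers n A) : Continuous (mkC C) :=
  continuous_quot_mk.comp continuous_sigmaMk

/-- the image of the chart indexed by `C`. -/
def VC (C : Chambers n A) : Set (XAR n A) := Set.range (mkC C)

lemma isOpen_VC (hA : A.Finite) (C : Chambers n A) : IsOpen (VC C) := by
  rw [← (isQuotientMap_quot_mk (r := XARRel A)).isOpen_preimage]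
  rw [isOpen_sigma_iff]
  intro D
  have heq : (Sigma.mk D ⁻¹' (Quot.mk (XARRel A) ⁻¹' VC C)) =
      ⋂ H ∈ SepSet A D.1 C.1, {y | L H y ≠ 0} := by
    ext y
    simp only [Set.mem_preimage, VC, Set.mem_range, Set.mem_iInter, Set.mem_setOf_eq]
    constructor
    · rintro ⟨y', hy'⟩
      have := quot_mk_eq_iff.mp hy'.symm
      intro H hH h0
      exact this.2 H hH (mem_carrier_iff.mpr h0)
    · intro h
      have hrel : XARRel A ⟨D, y⟩ ⟨C, y⟩ :=
        ⟨rfl, fun H hH hc => h H hH (mem_carrier_iff.mp hc)⟩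
      exact ⟨y, show Quot.mk (XARRel A) ⟨C, y⟩ = Quot.mk (XARRel A) ⟨D, y⟩ from
        (quot_mk_eq_iff.mpr hrel).symm⟩
  rw [heq]
  apply Set.Finite.isOpen_biInter (hA.subset fun H hH => hH.1)
  intro H _
  exact isOpen_compl_singleton.preimage (continuous_L H)

/-- The chamber-compatibility condition appearing in the statement. -/
def Cond (A : Set (Hyperplane n)) (C : Chambers n A) (w : Fin n → ℂ) : Prop :=
  ∀ H ∈ A, rePart w ∈ H.carrier → SameSide H C.1 (rePart w + imPart w)

lemma MC_not_both {w : Fin n → ℂ} (hw : w ∈ MC A) {H : Hyperplane n} (hH : H ∈ A) :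
    ¬(L H (rePart w) = 0 ∧ Ll H (imPart w) = 0) := by
  intro h
  exact hw H hH (mem_carrierC_iff.mpr h)

lemma exists_cond (hA : A.Finite) {w : Fin n → ℂ} (hw : w ∈ MC A) :
    ∃ C : Chambers n A, Cond A C w := by
  classical
  set x := rePart w with hx
  set z := imPart w with hz
  set s : Finset ℝ := insert 1 (hA.toFinset.image fun H =>
    if L H x = 0 then 1 else |L H x| / (|Ll H z| + 1)) with hs
  have hsne : s.Nonempty := ⟨1, Finset.mem_insert_self 1 _⟩
  set ε : ℝ := s.min' hsne with hε
  have hε0 : 0 < ε := by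
    rw [hε, Finset.lt_min'_iff]
    intro y hy
    rw [hs] at hy
    rcases Finset.mem_insert.mp hy with h | h
    · rw [h]; norm_num
    · obtain ⟨H, _, rfl⟩ := Finset.mem_image.mp h
      split
      · norm_num
      · next h0 => exact div_pos (abs_pos.mpr h0) (by positivity)
  have hεle : ∀ H ∈ A, L H x ≠ 0 → ε ≤ |L H x| / (|Ll H z| + 1) := by
    intro H hH h0
    apply Finset.min'_le
    rw [hs]
    apply Finset.mem_insert_of_mem
    rw [Finset.mem_image]
    exact ⟨H, hA.mem_toFinset.mpr hH, by rw [if_neg h0]⟩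
  have hkey : ∀ H ∈ A, L H x ≠ 0 → |ε * Ll H z| < |L H x| := by
    intro H hH h0
    have h1 : ε ≤ |L H x| / (|Ll H z| + 1) := hεle H hH h0
    have h2 : 0 ≤ |Ll H z| := abs_nonneg _
    have h3 : 0 < |L H x| := abs_pos.mpr h0
    rw [abs_mul, abs_of_pos hε0]
    calc ε * |Ll H z| ≤ (|L H x| / (|Ll H z| + 1)) * |Ll H z| :=
          mul_le_mul_of_nonneg_right h1 h2
      _ < |L H x| := by
          rw [div_mul_eq_mul_div, div_lt_iff₀ (by positivity)]
          nlinarith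
  set c : Fin n → ℝ := x + ε • z with hc
  have hcL : ∀ H : Hyperplane n, L H c = L H x + ε * Ll H z := fun H => L_add_smul H x z ε
  have hcc : c ∈ complSet A := by
    intro H hH hmem
    rw [mem_carrier_iff, hcL] at hmem
    rcases eq_or_ne (L H x) 0 with h0 | h0
    · have hlz : Ll H z ≠ 0 := fun hl => MC_not_both hw hH ⟨h0, hl⟩
      rw [h0, zero_add] at hmem
      exact hlz (by
        rcases mul_eq_zero.mp hmem with h | h
        · exact absurd h (ne_of_gt hε0)
        · exact h)
    · have := sign_perturb (hkey H hH h0)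
      rw [hmem] at this
      simp at this
  refine ⟨⟨connectedComponentIn (complSet A) c, ⟨c, hcc, rfl⟩⟩, ?_⟩
  intro H hH hxH
  have hcmem : c ∈ connectedComponentIn (complSet A) c := mem_connectedComponentIn hcc
  have hx0 : L H x = 0 := mem_carrier_iff.mp hxH
  have hlz : Ll H z ≠ 0 := fun hl => MC_not_both hw hH ⟨hx0, hl⟩
  have hv : L H (rePart w + imPart w) = Ll H z := by
    rw [L_add_Ll]
    have h1 : L H (rePart w) = 0 := hx0
    rw [h1, zero_add]
  have hcv : L H c = ε * Ll H z := by rw [hcL H, hx0, zero_add]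
  rw [sameSide_iff (⟨c, hcc, rfl⟩ : IsChamber A _) hH hcmem, hv, hcv]
  refine ⟨hlz, ?_⟩
  rw [mul_assoc]
  exact mul_pos hε0 (mul_self_pos.mpr hlz)

lemma cond_unique {C C' : Chambers n A} {w : Fin n → ℂ}
    (h : Cond A C w) (h' : Cond A C' w) :
    Quot.mk (XARRel A) ⟨C, rePart w⟩ = Quot.mk (XARRel A) ⟨C', rePart w⟩ := by
  apply Quot.sound
  refine ⟨rfl, fun H hH hc => ?_⟩
  have hx0 : L H (rePart w) = 0 := mem_carrier_iff.mp hc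
  obtain ⟨p, hp, _⟩ := chamber_exists_pt C.2
  obtain ⟨p', hp', _⟩ := chamber_exists_pt C'.2
  have h1 := (sameSide_iff C.2 hH.1 hp _).mp (h H hH.1 hc)
  have h2 := (sameSide_iff C'.2 hH.1 hp' _).mp (h' H hH.1 hc)
  have h3 : 0 < L H p * L H p' :=
    mul_pos_trans h1.2 (by rw [mul_comm]; exact h2.2)
  have h4 := (separates_iff C.2 C'.2 hH.1 hp hp').mp hH.2
  linarith

lemma cond_of_mem_VC {C D : Chambers n A} {w : Fin n → ℂ} (hw : w ∈ MC A)
    (hD : Cond A D w) (hmem : Quot.mk (XARRel A) ⟨D, rePart w⟩ ∈ VC C) :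
    Cond A C w := by
  obtain ⟨y, hy⟩ := hmem
  have hrel := quot_mk_eq_iff.mp hy
  obtain ⟨hy1, hy2⟩ := hrel
  simp only at hy1
  intro H hH hc
  have hx0 : L H (rePart w) = 0 := mem_carrier_iff.mp hc
  have hns : ¬ Separates H C.1 D.1 := by
    intro hsep
    exact (hy1 ▸ hy2 H ⟨hH, hsep⟩) hc
  obtain ⟨pc, hpc, _⟩ := chamber_exists_pt C.2
  obtain ⟨pd, hpd, _⟩ := chamber_exists_pt D.2
  have hpcne : L H pc ≠ 0 := chamber_L_ne C.2 hH hpc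
  have hpdne : L H pd ≠ 0 := chamber_L_ne D.2 hH hpd
  have hpos : 0 < L H pc * L H pd := by
    by_contra hn
    exact hns ((separates_iff C.2 D.2 hH hpc hpd).mpr
      (lt_of_le_of_ne (not_lt.1 hn) (mul_ne_zero hpcne hpdne)))
  have h1 := (sameSide_iff D.2 hH hpd _).mp (hD H hH hc)
  rw [sameSide_iff C.2 hH hpc _]
  exact ⟨h1.1, mul_pos_trans hpos h1.2⟩

end FBaux

namespace FBaux

open Real

variable {n : ℕ}

noncomputable def u0 (d z : Fin n → ℝ) : ℝ := (∑ i, d i * z i) / (∑ i, d i * d i)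

lemma dd_pos {d : Fin n → ℝ} (hd : d ≠ 0) : 0 < ∑ i, d i * d i := by
  obtain ⟨i, hi⟩ := Function.ne_iff.mp hd
  exact Finset.sum_pos' (fun j _ => mul_self_nonneg _)
    ⟨i, Finset.mem_univ i, mul_self_pos.mpr hi⟩

lemma continuous_u0 (d : Fin n → ℝ) : Continuous (u0 d) :=
  (continuous_finset_sum _ fun i _ => continuous_const.mul (continuous_apply i)).div_const _

lemma u0_add_smul {d : Fin n → ℝ} (hd : d ≠ 0) (z : Fin n → ℝ) (t : ℝ) :
    u0 d (z + t • d) = u0 d z + t := by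
  have h1 : ∑ i, d i * (z + t • d) i = (∑ i, d i * z i) + t * ∑ i, d i * d i := by
    rw [Finset.mul_sum, ← Finset.sum_add_distrib]
    refine Finset.sum_congr rfl fun i _ => ?_
    simp only [Pi.add_apply, Pi.smul_apply, smul_eq_mul]
    ring
  rw [u0, u0, h1, add_div, mul_div_assoc, div_self (ne_of_gt (dd_pos hd)), mul_one]

noncomputable def uH (H : Hyperplane n) (d z : Fin n → ℝ) : ℝ := Ll H z / Ll H d

lemma continuous_uH (H : Hyperplane n) (d : Fin n → ℝ) : Continuous (uH H d) :=
  (continuous_Ll H).div_const _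

lemma uH_add_smul {H : Hyperplane n} {d : Fin n → ℝ} (h : Ll H d ≠ 0) (z : Fin n → ℝ)
    (t : ℝ) : uH H d (z + t • d) = uH H d z + t := by
  rw [uH, uH, Ll_add, Ll_smul, add_div, mul_div_assoc, div_self h, mul_one]

@[irreducible] noncomputable def Efun (F₀ : Finset (Hyperplane n)) (d : Fin n → ℝ) (x z : Fin n → ℝ) : ℝ :=
  Real.exp (u0 d z) * ∏ H ∈ F₀, (|L H x| + max (uH H d z) 0)

lemma factor_nonneg (H : Hyperplane n) (d x z : Fin n → ℝ) :
    0 ≤ |L H x| + max (uH H d z) 0 := by positivity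

lemma factor_pos_iff {a u : ℝ} : 0 < |a| + max u 0 ↔ (a = 0 → 0 < u) := by
  constructor
  · intro h ha
    rw [ha, abs_zero, zero_add] at h
    rcases lt_max_iff.mp h with h' | h'
    · exact h'
    · exact absurd h' (lt_irrefl 0)
  · intro h
    rcases eq_or_ne a 0 with ha | ha
    · have := h ha
      rw [ha, abs_zero, zero_add]
      exact lt_max_iff.mpr (Or.inl this)
    · have h1 : 0 < |a| := abs_pos.mpr ha
      have h2 : 0 ≤ max u 0 := le_max_right u 0
      linarith

lemma E_nonneg (F₀ : Finset (Hyperplane n)) (d x z : Fin n → ℝ) : 0 ≤ Efun F₀ d x z := by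
  rw [Efun]
  exact mul_nonneg (Real.exp_pos _).le (Finset.prod_nonneg fun H _ => factor_nonneg H d x z)

lemma E_pos_iff {F₀ : Finset (Hyperplane n)} {d x z : Fin n → ℝ} :
    0 < Efun F₀ d x z ↔ ∀ H ∈ F₀, (L H x = 0 → 0 < uH H d z) := by
  constructor
  · intro h H hH hx0
    have hprod : 0 < ∏ H ∈ F₀, (|L H x| + max (uH H d z) 0) := by
      by_contra hn
      push_neg at hn
      have : Efun F₀ d x z ≤ 0 := by
        rw [Efun]
        exact mul_nonpos_of_nonneg_of_nonpos (Real.exp_pos _).le hn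
      linarith
    by_contra hu
    push_neg at hu
    have hfz : |L H x| + max (uH H d z) 0 = 0 := by
      have h1 : ¬ (0 < |L H x| + max (uH H d z) 0) := by
        intro hpos
        exact absurd (factor_pos_iff.mp hpos hx0) (not_lt.mpr hu)
      exact le_antisymm (not_lt.mp h1) (factor_nonneg H d x z)
    have : (∏ H ∈ F₀, (|L H x| + max (uH H d z) 0)) = 0 :=
      Finset.prod_eq_zero hH hfz
    rw [this] at hprod
    exact lt_irrefl 0 hprod
  · intro h
    rw [Efun]
    exact mul_pos (Real.exp_pos _)
      (Finset.prod_pos fun H hH => factor_pos_iff.mpr (h H hH))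

lemma E_le (F₀ : Finset (Hyperplane n)) {d : Fin n → ℝ} (hd : d ≠ 0)
    (hF : ∀ H ∈ F₀, Ll H d ≠ 0) (x z : Fin n → ℝ) {t₁ t₂ : ℝ} (h : t₁ ≤ t₂) :
    Efun F₀ d x (z + t₁ • d) ≤ Efun F₀ d x (z + t₂ • d) := by
  rw [Efun, Efun]
  apply mul_le_mul
  · exact Real.exp_le_exp.mpr (by rw [u0_add_smul hd, u0_add_smul hd]; linarith)
  · refine Finset.prod_le_prod (fun H hH => factor_nonneg H d x _) fun H hH => ?_
    rw [uH_add_smul (hF H hH), uH_add_smul (hF H hH)]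
    have : max (uH H d z + t₁) 0 ≤ max (uH H d z + t₂) 0 :=
      max_le_max (by linarith) le_rfl
    linarith
  · exact Finset.prod_nonneg fun H _ => factor_nonneg H d x _
  · exact (Real.exp_pos _).le

lemma E_lt (F₀ : Finset (Hyperplane n)) {d : Fin n → ℝ} (hd : d ≠ 0)
    (hF : ∀ H ∈ F₀, Ll H d ≠ 0) (x z : Fin n → ℝ) {t₁ t₂ : ℝ} (h : t₁ < t₂)
    (hpos : 0 < Efun F₀ d x (z + t₁ • d)) :
    Efun F₀ d x (z + t₁ • d) < Efun F₀ d x (z + t₂ • d) := by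
  have hP₁ : 0 < ∏ H ∈ F₀, (|L H x| + max (uH H d (z + t₁ • d)) 0) := by
    by_contra hn
    push_neg at hn
    have : Efun F₀ d x (z + t₁ • d) ≤ 0 := by
      rw [Efun]
      exact mul_nonpos_of_nonneg_of_nonpos (Real.exp_pos _).le hn
    linarith
  have hPle : (∏ H ∈ F₀, (|L H x| + max (uH H d (z + t₁ • d)) 0)) ≤
      ∏ H ∈ F₀, (|L H x| + max (uH H d (z + t₂ • d)) 0) := by
    refine Finset.prod_le_prod (fun H hH => factor_nonneg H d x _) fun H hH => ?_
    rw [uH_add_smul (hF H hH), uH_add_smul (hF H hH)]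
    have : max (uH H d z + t₁) 0 ≤ max (uH H d z + t₂) 0 :=
      max_le_max (by linarith) le_rfl
    linarith
  rw [Efun, Efun]
  calc Real.exp (u0 d (z + t₁ • d)) * ∏ H ∈ F₀, (|L H x| + max (uH H d (z + t₁ • d)) 0)
    _ < Real.exp (u0 d (z + t₂ • d)) * ∏ H ∈ F₀, (|L H x| + max (uH H d (z + t₁ • d)) 0) := by
        apply mul_lt_mul_of_pos_right _ hP₁
        exact Real.exp_lt_exp.mpr (by rw [u0_add_smul hd, u0_add_smul hd]; linarith)
    _ ≤ Real.exp (u0 d (z + t₂ • d)) * ∏ H ∈ F₀, (|L H x| + max (uH H d (z + t₂ • d)) 0) :=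
        mul_le_mul_of_nonneg_left hPle (Real.exp_pos _).le

lemma continuous_E (F₀ : Finset (Hyperplane n)) (d : Fin n → ℝ) :
    Continuous fun p : (Fin n → ℝ) × (Fin n → ℝ) => Efun F₀ d p.1 p.2 := by
  simp only [Efun]
  apply Continuous.mul
  · exact Real.continuous_exp.comp ((continuous_u0 d).comp continuous_snd)
  · apply continuous_finset_prod
    intro H _
    exact (((continuous_L H).comp continuous_fst).abs).add
      (((continuous_uH H d).comp continuous_snd).max continuous_const)

lemma E_exists (F₀ : Finset (Hyperplane n)) {d : Fin n → ℝ} (hd : d ≠ 0)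
    (hF : ∀ H ∈ F₀, Ll H d ≠ 0) (x z : Fin n → ℝ) {y : ℝ} (hy : 0 < y) :
    ∃ t : ℝ, Efun F₀ d x (z + t • d) = y := by
  have hpair : Continuous fun t : ℝ => ((x, z + t • d) : (Fin n → ℝ) × (Fin n → ℝ)) := by
    fun_prop
  have hcont : Continuous fun t : ℝ => Efun F₀ d x (z + t • d) :=
    (continuous_E F₀ d).comp hpair
  set T : ℝ := ∑ H ∈ F₀, (1 + |uH H d z|) with hT
  set t₁ : ℝ := max 0 (max (Real.log y + 1 - u0 d z) T) with ht₁
  have ht₁T : T ≤ t₁ := le_trans (le_max_right _ T) (le_max_right 0 _)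
  have hfac1 : ∀ H ∈ F₀, 1 ≤ |L H x| + max (uH H d (z + t₁ • d)) 0 := by
    intro H hH
    rw [uH_add_smul (hF H hH)]
    have h1 : 1 - uH H d z ≤ 1 + |uH H d z| := by linarith [neg_abs_le (uH H d z)]
    have h2 : (1 + |uH H d z|) ≤ T :=
      Finset.single_le_sum (f := fun H => 1 + |uH H d z|) (fun H _ => by positivity) hH
    have h3 : 1 ≤ uH H d z + t₁ := by linarith
    have h4 : (1:ℝ) ≤ max (uH H d z + t₁) 0 := le_max_of_le_left h3
    linarith [abs_nonneg (L H x)]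
  have hE1 : y ≤ Efun F₀ d x (z + t₁ • d) := by
    have hprod : 1 ≤ ∏ H ∈ F₀, (|L H x| + max (uH H d (z + t₁ • d)) 0) := by
      calc (1:ℝ) = ∏ _H ∈ F₀, (1:ℝ) := (Finset.prod_const_one).symm
        _ ≤ ∏ H ∈ F₀, (|L H x| + max (uH H d (z + t₁ • d)) 0) :=
            Finset.prod_le_prod (fun _ _ => zero_le_one) hfac1
    have hexp : y ≤ Real.exp (u0 d (z + t₁ • d)) := by
      rw [u0_add_smul hd]
      have h5 : Real.log y + 1 - u0 d z ≤ t₁ :=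
        le_trans (le_max_left _ T) (le_max_right 0 _)
      calc y = Real.exp (Real.log y) := (Real.exp_log hy).symm
        _ ≤ Real.exp (u0 d z + t₁) := Real.exp_le_exp.mpr (by linarith)
    calc y ≤ Real.exp (u0 d (z + t₁ • d)) := hexp
      _ = Real.exp (u0 d (z + t₁ • d)) * 1 := (mul_one _).symm
      _ ≤ Efun F₀ d x (z + t₁ • d) := by
          rw [Efun]
          exact mul_le_mul_of_nonneg_left hprod (Real.exp_pos _).le
  set M : ℝ := ∏ H ∈ F₀, (|L H x| + max (uH H d z) 0) with hM
  have hM0 : 0 ≤ M := Finset.prod_nonneg fun H _ => factor_nonneg H d x z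
  set t₂ : ℝ := min 0 (Real.log (y / (M + 1)) - u0 d z) with ht₂
  have hyM : 0 < y / (M + 1) := div_pos hy (by linarith)
  have hE2 : Efun F₀ d x (z + t₂ • d) < y := by
    have hprodle : (∏ H ∈ F₀, (|L H x| + max (uH H d (z + t₂ • d)) 0)) ≤ M := by
      rw [hM]
      refine Finset.prod_le_prod (fun H hH => factor_nonneg H d x _) fun H hH => ?_
      rw [uH_add_smul (hF H hH)]
      have ht₂0 : t₂ ≤ 0 := min_le_left _ _
      have : max (uH H d z + t₂) 0 ≤ max (uH H d z) 0 :=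
        max_le_max (by linarith) le_rfl
      linarith
    have hexp2 : Real.exp (u0 d (z + t₂ • d)) ≤ y / (M + 1) := by
      rw [u0_add_smul hd]
      have h6 : t₂ ≤ Real.log (y / (M + 1)) - u0 d z := min_le_right _ _
      calc Real.exp (u0 d z + t₂) ≤ Real.exp (Real.log (y / (M + 1))) :=
            Real.exp_le_exp.mpr (by linarith)
        _ = y / (M + 1) := Real.exp_log hyM
    have hle : Efun F₀ d x (z + t₂ • d) ≤ (y / (M + 1)) * M := by
      rw [Efun]
      exact mul_le_mul hexp2 hprodle
        (Finset.prod_nonneg fun H _ => factor_nonneg H d x _) hyM.le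
    have hlt : (y / (M + 1)) * M < y := by
      have h7 : (y / (M + 1)) * M < (y / (M + 1)) * (M + 1) :=
        mul_lt_mul_of_pos_left (lt_add_one M) hyM
      rw [div_mul_cancel₀ y (by linarith : M + 1 ≠ 0)] at h7
      exact h7
    linarith
  have ht21 : t₂ ≤ t₁ := le_trans (min_le_left _ _) (le_max_left 0 _)
  obtain ⟨t, _, ht⟩ := intermediate_value_Icc ht21 hcont.continuousOn ⟨hE2.le, hE1⟩
  exact ⟨t, ht⟩

lemma E_unique (F₀ : Finset (Hyperplane n)) {d : Fin n → ℝ} (hd : d ≠ 0)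
    (hF : ∀ H ∈ F₀, Ll H d ≠ 0) (x z : Fin n → ℝ) {t₁ t₂ y : ℝ} (hy : 0 < y)
    (h₁ : Efun F₀ d x (z + t₁ • d) = y) (h₂ : Efun F₀ d x (z + t₂ • d) = y) :
    t₁ = t₂ := by
  rcases lt_trichotomy t₁ t₂ with h | h | h
  · have := E_lt F₀ hd hF x z h (h₁ ▸ hy)
    rw [h₁, h₂] at this
    exact absurd this (lt_irrefl y)
  · exact h
  · have := E_lt F₀ hd hF x z h (h₂ ▸ hy)
    rw [h₁, h₂] at this
    exact absurd this (lt_irrefl y)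

noncomputable def Sfun (F₀ : Finset (Hyperplane n)) {d : Fin n → ℝ} (hd : d ≠ 0)
    (hF : ∀ H ∈ F₀, Ll H d ≠ 0) (x v : Fin n → ℝ) : ℝ :=
  Classical.choose (E_exists F₀ hd hF x (v + (-(u0 d v)) • d) (Real.exp_pos (u0 d v)))

lemma Sfun_spec (F₀ : Finset (Hyperplane n)) {d : Fin n → ℝ} (hd : d ≠ 0)
    (hF : ∀ H ∈ F₀, Ll H d ≠ 0) (x v : Fin n → ℝ) :
    Efun F₀ d x ((v + (-(u0 d v)) • d) + Sfun F₀ hd hF x v • d) = Real.exp (u0 d v) :=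
  Classical.choose_spec (E_exists F₀ hd hF x (v + (-(u0 d v)) • d) (Real.exp_pos (u0 d v)))

lemma Sfun_eq (F₀ : Finset (Hyperplane n)) {d : Fin n → ℝ} (hd : d ≠ 0)
    (hF : ∀ H ∈ F₀, Ll H d ≠ 0) {x v : Fin n → ℝ} {t : ℝ}
    (ht : Efun F₀ d x ((v + (-(u0 d v)) • d) + t • d) = Real.exp (u0 d v)) :
    t = Sfun F₀ hd hF x v :=
  E_unique F₀ hd hF x _ (Real.exp_pos (u0 d v)) ht (Sfun_spec F₀ hd hF x v)

lemma continuous_Sfun (F₀ : Finset (Hyperplane n)) {d : Fin n → ℝ} (hd : d ≠ 0)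
    (hF : ∀ H ∈ F₀, Ll H d ≠ 0) :
    Continuous fun p : (Fin n → ℝ) × (Fin n → ℝ) => Sfun F₀ hd hF p.1 p.2 := by
  rw [continuous_iff_continuousAt]
  intro p₀
  have hbase : ∀ y : ℝ, Continuous fun p : (Fin n → ℝ) × (Fin n → ℝ) =>
      Efun F₀ d p.1 ((p.2 + (-(u0 d p.2)) • d) + y • d) := by
    intro y
    have hpair2 : Continuous fun p : (Fin n → ℝ) × (Fin n → ℝ) =>
        ((p.1, (p.2 + (-(u0 d p.2)) • d) + y • d) : (Fin n → ℝ) × (Fin n → ℝ)) := by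
      apply Continuous.prodMk continuous_fst
      exact (continuous_snd.add ((((continuous_u0 d).comp continuous_snd).neg).smul
        continuous_const)).add continuous_const
    exact (continuous_E F₀ d).comp hpair2
  have hexpc : Continuous fun p : (Fin n → ℝ) × (Fin n → ℝ) => Real.exp (u0 d p.2) :=
    Real.continuous_exp.comp ((continuous_u0 d).comp continuous_snd)
  rw [ContinuousAt]
  apply tendsto_order.2
  constructor
  · intro y hy
    have hlt : Efun F₀ d p₀.1 ((p₀.2 + (-(u0 d p₀.2)) • d) + y • d) <
        Real.exp (u0 d p₀.2) := by
      rcases (E_nonneg F₀ d p₀.1 _).lt_or_eq with hpos | heq0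
      · have := E_lt F₀ hd hF p₀.1 (p₀.2 + (-(u0 d p₀.2)) • d) hy hpos
        rwa [Sfun_spec F₀ hd hF p₀.1 p₀.2] at this
      · rw [← heq0]; exact Real.exp_pos _
    have hev := ((hbase y).continuousAt (x := p₀)).eventually_lt hexpc.continuousAt hlt
    filter_upwards [hev] with p hp
    by_contra hle
    push_neg at hle
    have hmono := E_le F₀ hd hF p.1 (p.2 + (-(u0 d p.2)) • d) hle
    rw [Sfun_spec F₀ hd hF p.1 p.2] at hmono
    linarith
  · intro y hy
    have hlt : Real.exp (u0 d p₀.2) <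
        Efun F₀ d p₀.1 ((p₀.2 + (-(u0 d p₀.2)) • d) + y • d) := by
      have hpos : 0 < Efun F₀ d p₀.1 ((p₀.2 + (-(u0 d p₀.2)) • d) +
          Sfun F₀ hd hF p₀.1 p₀.2 • d) := by
        rw [Sfun_spec F₀ hd hF p₀.1 p₀.2]; exact Real.exp_pos _
      have := E_lt F₀ hd hF p₀.1 (p₀.2 + (-(u0 d p₀.2)) • d) hy hpos
      rwa [Sfun_spec F₀ hd hF p₀.1 p₀.2] at this
    have hev := hexpc.continuousAt.eventually_lt ((hbase y).continuousAt (x := p₀)) hlt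
    filter_upwards [hev] with p hp
    by_contra hle
    push_neg at hle
    have hmono := E_le F₀ hd hF p.1 (p.2 + (-(u0 d p.2)) • d) hle
    rw [Sfun_spec F₀ hd hF p.1 p.2] at hmono
    linarith

end FBaux

namespace FBaux

open Real

variable {n : ℕ} {A : Set (Hyperplane n)}

/-- complexification of a pair of real vectors -/
def toC (p : (Fin n → ℝ) × (Fin n → ℝ)) : Fin n → ℂ := fun i => ⟨p.1 i, p.2 i⟩

@[simp] lemma rePart_toC (p : (Fin n → ℝ) × (Fin n → ℝ)) : rePart (toC p) = p.1 := rfl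

@[simp] lemma imPart_toC (p : (Fin n → ℝ) × (Fin n → ℝ)) : imPart (toC p) = p.2 := rfl

lemma toC_re_im (w : Fin n → ℂ) : toC (rePart w, imPart w) = w := by
  funext i
  exact Complex.ext rfl rfl

lemma continuous_rePart : Continuous (rePart (n := n)) :=
  continuous_pi fun i => Complex.continuous_re.comp (continuous_apply i)

lemma continuous_imPart : Continuous (imPart (n := n)) :=
  continuous_pi fun i => Complex.continuous_im.comp (continuous_apply i)

lemma continuous_toC : Continuous (toC (n := n)) := by
  apply continuous_pi
  intro i
  have h1 : Continuous fun p : (Fin n → ℝ) × (Fin n → ℝ) => ((p.1 i : ℂ) + p.2 i * Complex.I) :=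
    (Complex.continuous_ofReal.comp ((continuous_apply i).comp continuous_fst)).add
      ((Complex.continuous_ofReal.comp ((continuous_apply i).comp continuous_snd)).mul
        continuous_const)
  convert h1 using 2 with p
  exact (Complex.mk_eq_add_mul_I _ _)

lemma Ll_sub (H : Hyperplane n) (y z : Fin n → ℝ) : Ll H (y - z) = Ll H y - Ll H z := by
  simp [Ll, mul_sub, Finset.sum_sub_distrib]

lemma shift_shift {d : Fin n → ℝ} (z : Fin n → ℝ) (a b : ℝ) :
    (z + a • d) + b • d = z + (a + b) • d := by
  rw [add_assoc, ← add_smul]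

lemma local_triv (hn : 1 ≤ n) (hA : A.Finite)
    (g : (MC A).Elem → XAR n A)
    (Dch : (MC A).Elem → Chambers n A)
    (hD : ∀ w, Cond A (Dch w) w.1)
    (hg : ∀ w, g w = mkC (Dch w) (rePart w.1))
    (b : XAR n A) :
    ∃ V : Set (XAR n A), b ∈ V ∧ IsOpen V ∧
      ∃ φ : (g ⁻¹' V).Elem ≃ₜ V.Elem × (Fin n → ℝ),
        ∀ e : (g ⁻¹' V).Elem, ((φ e).1 : XAR n A) = g e := by
  classical
  obtain ⟨⟨C, x₀⟩, rfl⟩ := Quot.exists_rep b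
  obtain ⟨c, hcC, hccompl⟩ := chamber_exists_pt C.2
  -- direction vector
  set d : Fin n → ℝ := if _h : c = x₀ then Pi.single (⟨0, hn⟩ : Fin n) 1 else c - x₀
    with hddef
  have hd : d ≠ 0 := by
    rw [hddef]
    split
    · intro h
      have := congrFun h (⟨0, hn⟩ : Fin n)
      rw [Pi.single_eq_same] at this
      exact one_ne_zero this
    · next h => exact sub_ne_zero_of_ne h
  -- active hyperplanes
  have hA₀fin : (A ∩ {H | L H x₀ = 0}).Finite := hA.subset Set.inter_subset_left
  set F₀ : Finset (Hyperplane n) := hA₀fin.toFinset with hF₀def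
  have hmemF₀ : ∀ {H : Hyperplane n}, H ∈ F₀ ↔ (H ∈ A ∧ L H x₀ = 0) := by
    intro H
    rw [hF₀def, Set.Finite.mem_toFinset]
    exact Iff.rfl
  have hsig : ∀ H ∈ F₀, 0 < L H c * Ll H d := by
    intro H hH
    obtain ⟨hHA, hx0⟩ := hmemF₀.mp hH
    have hcne : L H c ≠ 0 := fun h => hccompl H hHA (mem_carrier_iff.mpr h)
    by_cases hcx : c = x₀
    · exact absurd (by rw [hcx]; exact hx0) hcne
    · have hd_eq : d = c - x₀ := by rw [hddef, dif_neg hcx]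
      have hLl : Ll H d = L H c := by
        rw [hd_eq, Ll_sub]
        have e1 := L_eq H c
        have e2 := L_eq H x₀
        rw [e2] at hx0
        linarith [e1]
      rw [hLl]
      exact mul_self_pos.mpr hcne
  have hF : ∀ H ∈ F₀, Ll H d ≠ 0 := by
    intro H hH h0
    have := hsig H hH
    rw [h0, mul_zero] at this
    exact lt_irrefl _ this
  -- base open set
  set O : Set (Fin n → ℝ) := {x | ∀ H ∈ A, L H x₀ ≠ 0 → L H x ≠ 0} with hOdef
  have hOopen : IsOpen O := by
    have heq : O = ⋂ H ∈ (A ∩ {H | L H x₀ ≠ 0}), {x | L H x ≠ 0} := by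
      ext x
      simp only [hOdef, Set.mem_setOf_eq, Set.mem_iInter, Set.mem_inter_iff]
      constructor
      · rintro h H ⟨hHA, hH0⟩
        exact h H hHA hH0
      · intro h H hHA hH0
        exact h H ⟨hHA, hH0⟩
    rw [heq]
    exact (hA.subset Set.inter_subset_left).isOpen_biInter fun H _ =>
      isOpen_compl_singleton.preimage (continuous_L H)
  have hx₀O : x₀ ∈ O := fun H _ h => h
  -- the central equivalence
  have hcondE : ∀ w : Fin n → ℂ, rePart w ∈ O →
      (Cond A C w ↔ 0 < Efun F₀ d (rePart w) (imPart w)) := by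
    intro w hwO
    rw [E_pos_iff]
    constructor
    · intro hc H hH hx0
      obtain ⟨hHA, _⟩ := hmemF₀.mp hH
      have hss := hc H hHA (mem_carrier_iff.mpr hx0)
      have h1 := (sameSide_iff C.2 hHA hcC _).mp hss
      have hv : L H (rePart w + imPart w) = Ll H (imPart w) := by
        rw [L_add_Ll, hx0, zero_add]
      rw [hv] at h1
      rw [uH, div_pos_iff_mul_pos (hF H hH)]
      exact mul_pos_trans (by rw [mul_comm]; exact h1.2) (hsig H hH)
    · intro hE H hHA hmemcar
      have hx0 : L H (rePart w) = 0 := mem_carrier_iff.mp hmemcar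
      have hx₀0 : L H x₀ = 0 := by
        by_contra h
        exact (hwO H hHA h) hx0
      have hHF : H ∈ F₀ := hmemF₀.mpr ⟨hHA, hx₀0⟩
      have hu := hE H hHF hx0
      rw [uH, div_pos_iff_mul_pos (hF H hHF)] at hu
      have h2 : 0 < L H c * Ll H (imPart w) :=
        mul_pos_trans (hsig H hHF) (by rw [mul_comm]; exact hu)
      rw [sameSide_iff C.2 hHA hcC _]
      have hv : L H (rePart w + imPart w) = Ll H (imPart w) := by
        rw [L_add_Ll, hx0, zero_add]
      rw [hv]
      refine ⟨fun h0 => ?_, h2⟩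
      rw [h0, mul_zero] at h2
      exact lt_irrefl _ h2
  -- membership in MC
  have hMC : ∀ p : (Fin n → ℝ) × (Fin n → ℝ), p.1 ∈ O → 0 < Efun F₀ d p.1 p.2 →
      toC p ∈ MC A := by
    intro p hpO hpE H hHA hc
    rw [mem_carrierC_iff, rePart_toC, imPart_toC] at hc
    obtain ⟨h1, h2⟩ := hc
    have hx₀0 : L H x₀ = 0 := by
      by_contra h
      exact (hpO H hHA h) h1
    have hu := (E_pos_iff.mp hpE) H (hmemF₀.mpr ⟨hHA, hx₀0⟩) h1
    rw [uH, h2, zero_div] at hu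
    exact lt_irrefl _ hu
  -- the open set V
  set V : Set (XAR n A) := VC C ∩ sec ⁻¹' O with hVdef
  have hbV : Quot.mk (XARRel A) ⟨C, x₀⟩ ∈ V := ⟨⟨x₀, rfl⟩, hx₀O⟩
  have hVopen : IsOpen V := (isOpen_VC hA C).inter (hOopen.preimage continuous_sec)
  -- characterization of the preimage
  have hchar : ∀ e : (MC A).Elem, g e ∈ V ↔
      (rePart e.1 ∈ O ∧ 0 < Efun F₀ d (rePart e.1) (imPart e.1)) := by
    intro e
    constructor
    · rintro ⟨hvc, hsec⟩
      have hsec' : rePart e.1 ∈ O := by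
        rw [Set.mem_preimage, hg e] at hsec
        exact hsec
      have hvc' : Quot.mk (XARRel A) ⟨Dch e, rePart e.1⟩ ∈ VC C := by
        rw [hg e] at hvc
        exact hvc
      have hcond : Cond A C e.1 := cond_of_mem_VC e.2 (hD e) hvc'
      exact ⟨hsec', (hcondE e.1 hsec').mp hcond⟩
    · rintro ⟨h1, h2⟩
      have hcond : Cond A C e.1 := (hcondE e.1 h1).mpr h2
      have hge : g e = mkC C (rePart e.1) := by
        rw [hg e]
        exact cond_unique (hD e) hcond
      constructor
      · rw [hge]
        exact ⟨rePart e.1, rfl⟩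
      · rw [Set.mem_preimage, hge]
        exact h1
  have hgC : ∀ e : (MC A).Elem, g e ∈ V → g e = mkC C (rePart e.1) := by
    intro e he
    rw [hg e]
    exact cond_unique (hD e) ((hcondE e.1 ((hchar e).mp he).1).mpr ((hchar e).mp he).2)
  -- the middle set
  set Wt : Set ((Fin n → ℝ) × (Fin n → ℝ)) := {p | p.1 ∈ O ∧ 0 < Efun F₀ d p.1 p.2}
    with hWtdef
  -- homeomorphism 1 : preimage ≃ₜ Wt
  have hEcont : Continuous fun q : Wt.Elem => Efun F₀ d q.1.1 q.1.2 :=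
    (continuous_E F₀ d).comp continuous_subtype_val
  have hlogE : Continuous fun q : Wt.Elem => Real.log (Efun F₀ d q.1.1 q.1.2) := by
    rw [continuous_iff_continuousAt]
    intro q
    exact ContinuousAt.comp (f := fun q : Wt.Elem => Efun F₀ d q.1.1 q.1.2)
      (Real.continuousAt_log (ne_of_gt q.2.2)) hEcont.continuousAt
  let φ₁ : (g ⁻¹' V).Elem ≃ₜ Wt.Elem :=
  { toFun := fun e => ⟨(rePart e.1.1, imPart e.1.1), (hchar e.1).mp e.2⟩
    invFun := fun q => ⟨⟨toC q.1, hMC q.1 q.2.1 q.2.2⟩, by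
      show g _ ∈ V
      apply (hchar _).mpr
      refine ⟨?_, ?_⟩
      · rw [rePart_toC]; exact q.2.1
      · rw [rePart_toC, imPart_toC]; exact q.2.2⟩
    left_inv := fun e => by
      apply Subtype.ext
      apply Subtype.ext
      exact toC_re_im e.1.1
    right_inv := fun q => by
      apply Subtype.ext
      show (rePart (toC q.1), imPart (toC q.1)) = q.1
      rw [rePart_toC, imPart_toC]
    continuous_toFun := by
      apply Continuous.subtype_mk
      exact (continuous_rePart.comp (continuous_subtype_val.comp continuous_subtype_val)).prodMk
        (continuous_imPart.comp (continuous_subtype_val.comp continuous_subtype_val))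
    continuous_invFun := by
      apply Continuous.subtype_mk
      apply Continuous.subtype_mk
      exact continuous_toC.comp continuous_subtype_val }
  -- homeomorphism 2 : Wt ≃ₜ O × ℝⁿ  (as a subtype of the product)
  let OP : Set ((Fin n → ℝ) × (Fin n → ℝ)) := {p | p.1 ∈ O}
  let φ₂ : Wt.Elem ≃ₜ OP.Elem :=
  { toFun := fun q => ⟨(q.1.1, q.1.2 +
      (Real.log (Efun F₀ d q.1.1 q.1.2) + -(u0 d q.1.2)) • d), q.2.1⟩
    invFun := fun p => ⟨(p.1.1, (p.1.2 + (-(u0 d p.1.2)) • d) +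
        Sfun F₀ hd hF p.1.1 p.1.2 • d), ⟨p.2, by
      rw [Sfun_spec F₀ hd hF p.1.1 p.1.2]
      exact Real.exp_pos _⟩⟩
    left_inv := fun q => by
      apply Subtype.ext
      obtain ⟨⟨x, z⟩, hq⟩ := q
      obtain ⟨hqO, hqE⟩ := hq
      simp only
      set E := Efun F₀ d x z with hEdef
      set v : Fin n → ℝ := z + (Real.log E + -(u0 d z)) • d with hvdef
      have hu0v : u0 d v = Real.log E := by
        rw [hvdef, u0_add_smul hd]
        ring
      have hbase : v + (-(u0 d v)) • d = z + (-(u0 d z)) • d := by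
        rw [hvdef, shift_shift, hu0v]
        congr 1
        ring
      have hzeq : (v + (-(u0 d v)) • d) + (u0 d z) • d = z := by
        rw [hbase, shift_shift]
        simp
      have hSv : u0 d z = Sfun F₀ hd hF x v := by
        apply Sfun_eq F₀ hd hF
        rw [hzeq, hu0v, Real.exp_log hqE]
      show (x, (v + (-(u0 d v)) • d) + Sfun F₀ hd hF x v • d) = (x, z)
      rw [← hSv, hzeq]
    right_inv := fun p => by
      apply Subtype.ext
      obtain ⟨⟨x, v⟩, hp⟩ := p
      simp only
      set S : ℝ := Sfun F₀ hd hF x v with hSdef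
      set z : Fin n → ℝ := (v + (-(u0 d v)) • d) + S • d with hzdef
      have hEz : Efun F₀ d x z = Real.exp (u0 d v) := Sfun_spec F₀ hd hF x v
      have hu0z : u0 d z = S := by
        rw [hzdef, u0_add_smul hd, u0_add_smul hd]
        ring
      show (x, z + (Real.log (Efun F₀ d x z) + -(u0 d z)) • d) = (x, v)
      rw [hEz, Real.log_exp, hu0z, hzdef, shift_shift, shift_shift]
      congr 1
      have h9 : -u0 d v + (S + (u0 d v + -S)) = 0 := by ring
      rw [h9, zero_smul, add_zero]
    continuous_toFun := by
      apply Continuous.subtype_mk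
      refine Continuous.prodMk (continuous_fst.comp continuous_subtype_val) ?_
      apply Continuous.add (continuous_snd.comp continuous_subtype_val)
      refine Continuous.smul (M := ℝ) (g := fun _ : Wt.Elem => d) ?_ continuous_const
      exact hlogE.add (((continuous_u0 d).comp (continuous_snd.comp continuous_subtype_val)).neg)
    continuous_invFun := by
      apply Continuous.subtype_mk
      refine Continuous.prodMk (continuous_fst.comp continuous_subtype_val) ?_
      apply Continuous.add
      · apply Continuous.add (continuous_snd.comp continuous_subtype_val)
        exact Continuous.smul
          (((continuous_u0 d).comp (continuous_snd.comp continuous_subtype_val)).neg)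
          continuous_const
      · exact Continuous.smul
          ((continuous_Sfun F₀ hd hF).comp continuous_subtype_val) continuous_const }
  -- homeomorphism 3 : OP ≃ₜ V × ℝⁿ
  let φ₃ : OP.Elem ≃ₜ V.Elem × (Fin n → ℝ) :=
  { toFun := fun p => (⟨mkC C p.1.1, ⟨⟨p.1.1, rfl⟩, p.2⟩⟩, p.1.2)
    invFun := fun q => ⟨(sec q.1.1, q.2), q.1.2.2⟩
    left_inv := fun p => by
      apply Subtype.ext
      show (sec (mkC C p.1.1), p.1.2) = p.1
      rw [sec_mkC]
    right_inv := fun q => by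
      obtain ⟨⟨v, hv⟩, z⟩ := q
      obtain ⟨y, hy⟩ := hv.1
      have h1 : mkC C (sec v) = v := by rw [← hy]; rfl
      simp only
      refine Prod.ext ?_ rfl
      exact Subtype.ext h1
    continuous_toFun := by
      refine Continuous.prodMk ?_ (continuous_snd.comp continuous_subtype_val)
      apply Continuous.subtype_mk
      exact (continuous_mkC C).comp (continuous_fst.comp continuous_subtype_val)
    continuous_invFun := by
      apply Continuous.subtype_mk
      exact (continuous_sec.comp (continuous_subtype_val.comp continuous_fst)).prodMk
        continuous_snd }
  refine ⟨V, hbV, hVopen, φ₁.trans (φ₂.trans φ₃), ?_⟩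
  intro e
  show mkC C (rePart e.1.1) = g e.1
  exact (hgC e.1 e.2).symm

end FBaux

open FBaux

/-- There is a well-defined continuous map `g : M(A_ℂ) → X_A(ℝ)` with
`g (x + iz) = [C, x]` whenever `C` is a chamber such that for every `H ∈ A` with `x ∈ H`,
the point `x + z` lies on the `C`-side of `H` (such a chamber exists for every point of
`M(A_ℂ)`); moreover `g` is a fiber bundle projection with fiber `ℝ^n`. -/
theorem exists_fiber_bundle_MC_to_XAR (n : ℕ) (hn : 1 ≤ n)
    (A : Set (Hyperplane n)) (hA : A.Finite) :
    (∀ w : (MC A).Elem, ∃ C : Chambers n A,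
        ∀ H ∈ A, rePart w.1 ∈ H.carrier → SameSide H C.1 (rePart w.1 + imPart w.1)) ∧
    ∃ g : (MC A).Elem → XAR n A,
      Continuous g ∧
      (∀ (C : Chambers n A) (w : (MC A).Elem),
        (∀ H ∈ A, rePart w.1 ∈ H.carrier → SameSide H C.1 (rePart w.1 + imPart w.1)) →
          g w = Quot.mk (XARRel A) ⟨C, rePart w.1⟩) ∧
      IsFiberBundleWith (Fin n → ℝ) g := by
  classical
  have hex : ∀ w : (MC A).Elem, ∃ C : Chambers n A, Cond A C w.1 :=
    fun w => exists_cond hA w.2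
  refine ⟨hex, ?_⟩
  choose Dch hD using hex
  set g : (MC A).Elem → XAR n A := fun w => mkC (Dch w) (rePart w.1) with hgdef
  have hg : ∀ w, g w = mkC (Dch w) (rePart w.1) := fun _ => rfl
  -- continuity
  have hcont : Continuous g := by
    rw [continuous_iff_continuousAt]
    intro w₀
    set C : Chambers n A := Dch w₀ with hCdef
    obtain ⟨pc, hpc, _⟩ := chamber_exists_pt C.2
    set Nset : Set (Fin n → ℂ) := ⋂ H ∈ A, (if L H (rePart w₀.1) = 0 then
        {w : Fin n → ℂ | 0 < Ll H (imPart w) * Ll H (imPart w₀.1)}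
      else {w : Fin n → ℂ | L H (rePart w) ≠ 0}) with hNdef
    have hNopen : IsOpen Nset := by
      apply hA.isOpen_biInter
      intro H _
      by_cases h : L H (rePart w₀.1) = 0
      · rw [if_pos h]
        exact isOpen_lt continuous_const
          (((continuous_Ll H).comp continuous_imPart).mul continuous_const)
      · rw [if_neg h]
        exact isOpen_compl_singleton.preimage ((continuous_L H).comp continuous_rePart)
    have hw₀N : w₀.1 ∈ Nset := by
      rw [hNdef, Set.mem_iInter₂]
      intro H hHA
      by_cases h : L H (rePart w₀.1) = 0
      · rw [if_pos h]
        have hz : Ll H (imPart w₀.1) ≠ 0 := fun h2 => MC_not_both w₀.2 hHA ⟨h, h2⟩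
        exact mul_self_pos.mpr hz
      · rw [if_neg h]
        exact h
    have hcondN : ∀ w : (MC A).Elem, w.1 ∈ Nset → Cond A C w.1 := by
      intro w hw H hHA hmem
      have hx0 : L H (rePart w.1) = 0 := mem_carrier_iff.mp hmem
      have hwH := (Set.mem_iInter₂.mp (hNdef ▸ hw)) H hHA
      by_cases h0 : L H (rePart w₀.1) = 0
      · rw [if_pos h0] at hwH
        have h1 := (sameSide_iff C.2 hHA hpc _).mp (hD w₀ H hHA (mem_carrier_iff.mpr h0))
        have hv₀ : L H (rePart w₀.1 + imPart w₀.1) = Ll H (imPart w₀.1) := by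
          rw [L_add_Ll, h0, zero_add]
        rw [hv₀] at h1
        rw [sameSide_iff C.2 hHA hpc _]
        have hv : L H (rePart w.1 + imPart w.1) = Ll H (imPart w.1) := by
          rw [L_add_Ll, hx0, zero_add]
        rw [hv]
        have h2 : 0 < L H pc * Ll H (imPart w.1) :=
          mul_pos_trans h1.2 (by rw [mul_comm]; exact hwH)
        refine ⟨fun hz => ?_, h2⟩
        rw [hz, mul_zero] at h2
        exact lt_irrefl _ h2
      · rw [if_neg h0] at hwH
        exact absurd hx0 hwH
    have heq : ∀ w : (MC A).Elem, w.1 ∈ Nset → g w = mkC C (rePart w.1) :=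
      fun w hw => cond_unique (hD w) (hcondN w hw)
    have hCc : Continuous fun w : (MC A).Elem => mkC C (rePart w.1) :=
      (continuous_mkC C).comp (continuous_rePart.comp continuous_subtype_val)
    have hnb : Subtype.val ⁻¹' Nset ∈ nhds w₀ :=
      (hNopen.preimage continuous_subtype_val).mem_nhds hw₀N
    exact hCc.continuousAt.congr_of_eventuallyEq
      (Filter.eventuallyEq_of_mem hnb fun w hw => heq w hw)
  -- surjectivity
  have hsurj : Function.Surjective g := by
    intro b
    obtain ⟨⟨C, x⟩, rfl⟩ := Quot.exists_rep b
    obtain ⟨c, hcC, hccompl⟩ := chamber_exists_pt C.2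
    have hxc : x + (c - x) = c := by abel
    have hwMC : toC (x, c - x) ∈ MC A := by
      intro H hHA hc
      rw [mem_carrierC_iff, rePart_toC, imPart_toC] at hc
      obtain ⟨h1, h2⟩ := hc
      have : L H c = 0 := by
        rw [← hxc, L_add_Ll, h1, h2, add_zero]
      exact hccompl H hHA (mem_carrier_iff.mpr this)
    have hcond : Cond A C (toC (x, c - x)) := by
      intro H hHA hmem
      rw [rePart_toC, imPart_toC, hxc]
      have hcne : L H c ≠ 0 := chamber_L_ne C.2 hHA hcC
      rw [sameSide_iff C.2 hHA hcC]
      exact ⟨hcne, mul_self_pos.mpr hcne⟩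
    refine ⟨⟨toC (x, c - x), hwMC⟩, ?_⟩
    have := cond_unique (hD ⟨toC (x, c - x), hwMC⟩) hcond
    rw [hg _]
    exact this
  refine ⟨g, hcont, ?_, hcont, hsurj, ?_⟩
  · intro C w h
    exact cond_unique (hD w) h
  · exact fun b => local_triv hn hA g Dch hD hg b
end

section
/- Let X be a metrizable topological space, let p : E → X be a topological real vector bundle of rank n, and let U ⊆ E be an open subset such that U ∩ p⁻¹(x) is convex and nonempty for every x ∈ X. Then the restriction p|_U : U → X is a fiber bundle with fiber ℝ^n. -/
open Filter Topology Metric Set Bundle ENNReal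

open Filter Topology Metric Set Bundle ENNReal

noncomputable def dbar {Y : Type*} [PseudoMetricSpace Y] (W : Set Y) (z : Y) : ℝ :=
  (1 ⊓ EMetric.infEdist z Wᶜ).toReal

section dbar
variable {Y : Type*} [PseudoMetricSpace Y] {W : Set Y} {z z' : Y}

lemma dbar_nonneg : 0 ≤ dbar W z := ENNReal.toReal_nonneg

lemma dbar_le_one : dbar W z ≤ 1 := by
  have : (1 ⊓ EMetric.infEdist z Wᶜ) ≤ 1 := min_le_left _ _
  simpa [dbar] using ENNReal.toReal_le_of_le_ofReal one_pos.le (by simpa using this)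

lemma min_ne_top : (1 ⊓ EMetric.infEdist z Wᶜ) ≠ ⊤ :=
  ne_top_of_le_ne_top ENNReal.one_ne_top (min_le_left _ _)

lemma dbar_le_add_dist : dbar W z ≤ dbar W z' + dist z z' := by
  have h1 : EMetric.infEdist z Wᶜ ≤ EMetric.infEdist z' Wᶜ + edist z z' :=
    EMetric.infEdist_le_infEdist_add_edist
  have h2 : (1 : ℝ≥0∞) ⊓ EMetric.infEdist z Wᶜ ≤ (1 ⊓ EMetric.infEdist z' Wᶜ) + edist z z' := by
    rcases le_total (1:ℝ≥0∞) (EMetric.infEdist z' Wᶜ) with h | h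
    · exact le_trans (min_le_left _ _) (by simp [min_eq_left h])
    · exact le_trans (min_le_right _ _) (by rw [min_eq_right h]; exact h1)
  have := ENNReal.toReal_mono (by
      exact ENNReal.add_ne_top.2 ⟨min_ne_top, edist_ne_top _ _⟩) h2
  rw [ENNReal.toReal_add min_ne_top (edist_ne_top _ _), edist_dist,
    ENNReal.toReal_ofReal dist_nonneg] at this
  exact this

lemma dbar_lipschitz : LipschitzWith 1 (dbar W : Y → ℝ) := by
  refine LipschitzWith.of_dist_le_mul fun a b => ?_
  rw [NNReal.coe_one, one_mul, Real.dist_eq, abs_sub_le_iff]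
  constructor
  · linarith [dbar_le_add_dist (W := W) (z := a) (z' := b)]
  · have := dbar_le_add_dist (W := W) (z := b) (z' := a)
    rw [dist_comm] at this; linarith

lemma dbar_continuous : Continuous (dbar W : Y → ℝ) := dbar_lipschitz.continuous

lemma dbar_pos (hW : IsOpen W) (hz : z ∈ W) : 0 < dbar W z := by
  have h : 0 < EMetric.infEdist z Wᶜ := by
    show 0 < Metric.infEDist z Wᶜ
    rw [EMetric.infEdist_pos_iff_notMem_closure]
    rw [hW.isClosed_compl.closure_eq]
    simpa using hz
  have : 0 < 1 ⊓ EMetric.infEdist z Wᶜ := lt_min one_pos h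
  exact ENNReal.toReal_pos this.ne' min_ne_top

lemma dbar_le_dist (hz' : z' ∉ W) : dbar W z ≤ dist z z' := by
  have h : (1:ℝ≥0∞) ⊓ EMetric.infEdist z Wᶜ ≤ edist z z' :=
    le_trans (min_le_right _ _) (EMetric.infEdist_le_edist_of_mem hz')
  have := ENNReal.toReal_mono (edist_ne_top _ _) h
  rw [edist_dist, ENNReal.toReal_ofReal dist_nonneg] at this
  exact this

end dbar

section Mfun
variable {X F : Type*} [PseudoMetricSpace X] [NormedAddCommGroup F] [NormedSpace ℝ F]

noncomputable def Mfun (W : Set (X × F)) (z : X × F) : ℝ :=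
  sInf ((fun s : ℝ => dbar W (z.1, s • z.2)) '' Set.Icc (0:ℝ) 1)

variable {W : Set (X × F)} {z z' : X × F}

lemma Mfun_set_nonempty : ((fun s : ℝ => dbar W (z.1, s • z.2)) '' Set.Icc (0:ℝ) 1).Nonempty :=
  (Set.nonempty_Icc.2 zero_le_one).image _

lemma Mfun_bddBelow : BddBelow ((fun s : ℝ => dbar W (z.1, s • z.2)) '' Set.Icc (0:ℝ) 1) :=
  ⟨0, fun y hy => by rcases hy with ⟨s, _, rfl⟩; exact dbar_nonneg⟩

lemma Mfun_le {s : ℝ} (hs : s ∈ Set.Icc (0:ℝ) 1) : Mfun W z ≤ dbar W (z.1, s • z.2) :=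
  csInf_le Mfun_bddBelow ⟨s, hs, rfl⟩

lemma Mfun_nonneg : 0 ≤ Mfun W z :=
  le_csInf Mfun_set_nonempty (fun y hy => by rcases hy with ⟨s, _, rfl⟩; exact dbar_nonneg)

lemma Mfun_le_dbar : Mfun W z ≤ dbar W z := by
  simpa using Mfun_le (W := W) (z := z) (s := 1) (by norm_num)

lemma Mfun_attained : ∃ s ∈ Set.Icc (0:ℝ) 1, Mfun W z = dbar W (z.1, s • z.2) := by
  have hc : ContinuousOn (fun s : ℝ => dbar W (z.1, s • z.2)) (Set.Icc 0 1) :=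
    (dbar_continuous.comp (by fun_prop)).continuousOn
  have hcomp : IsCompact ((fun s : ℝ => dbar W (z.1, s • z.2)) '' Set.Icc (0:ℝ) 1) :=
    isCompact_Icc.image_of_continuousOn hc
  have := hcomp.sInf_mem Mfun_set_nonempty
  rcases this with ⟨s, hs, h⟩
  exact ⟨s, hs, h.symm⟩

lemma Mfun_le_add_dist : Mfun W z ≤ Mfun W z' + dist z z' := by
  rcases Mfun_attained (W := W) (z := z') with ⟨s, hs, hEq⟩
  have h1 : Mfun W z ≤ dbar W (z.1, s • z.2) := Mfun_le hs
  have hd : dist ((z.1, s • z.2) : X × F) (z'.1, s • z'.2) ≤ dist z z' := by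
    rw [Prod.dist_eq, Prod.dist_eq]
    refine max_le_max le_rfl ?_
    rw [dist_eq_norm, dist_eq_norm, ← smul_sub, norm_smul]
    calc |s| * ‖z.2 - z'.2‖ ≤ 1 * ‖z.2 - z'.2‖ := by
          apply mul_le_mul_of_nonneg_right _ (norm_nonneg _)
          rw [abs_le]; exact ⟨by linarith [hs.1], hs.2⟩
      _ = ‖z.2 - z'.2‖ := one_mul _
  have h2 : dbar W (z.1, s • z.2) ≤ dbar W (z'.1, s • z'.2) + dist z z' :=
    le_trans (dbar_le_add_dist (z' := (z'.1, s • z'.2))) (by linarith)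
  rw [hEq]; linarith

lemma Mfun_lipschitz : LipschitzWith 1 (Mfun W) := by
  refine LipschitzWith.of_dist_le_mul fun a b => ?_
  rw [NNReal.coe_one, one_mul, Real.dist_eq, abs_sub_le_iff]
  constructor
  · linarith [Mfun_le_add_dist (W := W) (z := a) (z' := b)]
  · have := Mfun_le_add_dist (W := W) (z := b) (z' := a)
    rw [dist_comm] at this; linarith

lemma Mfun_continuous : Continuous (Mfun W) := Mfun_lipschitz.continuous

lemma Mfun_pos (hW : IsOpen W) (hseg : ∀ s ∈ Set.Icc (0:ℝ) 1, (z.1, s • z.2) ∈ W) :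
    0 < Mfun W z := by
  rcases Mfun_attained (W := W) (z := z) with ⟨s, hs, hEq⟩
  rw [hEq]
  exact dbar_pos hW (hseg s hs)

/-- Along a ray, `Mfun` is antitone: scaling the vector down increases `Mfun`. -/
lemma Mfun_le_smul {x : X} {v : F} {c : ℝ} (hc : c ∈ Set.Icc (0:ℝ) 1) :
    Mfun W (x, v) ≤ Mfun W (x, c • v) := by
  refine le_csInf Mfun_set_nonempty ?_
  rintro y ⟨s, hs, rfl⟩
  have : (s * c) ∈ Set.Icc (0:ℝ) 1 :=
    ⟨mul_nonneg hs.1 hc.1, mul_le_one₀ hs.2 hc.1 hc.2⟩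
  have h := Mfun_le (W := W) (z := (x, v)) this
  simpa [smul_smul] using h

end Mfun
section Phi
variable {X F : Type*} [PseudoMetricSpace X] [NormedAddCommGroup F] [NormedSpace ℝ F]

noncomputable def Phi2 (W : Set (X × F)) (z : X × F) : F :=
  (1 + ‖z.2‖ / Mfun W z) • z.2

variable {W : Set (X × F)} {x : X}

lemma Phi2_norm (z : X × F) : ‖Phi2 W z‖ = ‖z.2‖ + ‖z.2‖^2 / Mfun W z := by
  have ha : 0 ≤ ‖z.2‖ / Mfun W z := div_nonneg (norm_nonneg _) Mfun_nonneg
  rw [Phi2, norm_smul, Real.norm_eq_abs, abs_of_nonneg (by linarith)]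
  ring

lemma Phi2_continuousAt {z : X × F} (hz : 0 < Mfun W z) :
    ContinuousAt (Phi2 W) z := by
  have h1 : ContinuousAt (fun z : X × F => 1 + ‖z.2‖ / Mfun W z) z := by
    exact (continuousAt_const.add ((continuous_norm.comp continuous_snd).continuousAt.div
      Mfun_continuous.continuousAt hz.ne'))
  exact h1.smul continuous_snd.continuousAt

variable (hW : IsOpen W) (hconv : Convex ℝ {v : F | (x, v) ∈ W}) (h0 : (x, (0:F)) ∈ W)
include hW hconv h0

lemma seg_mem {v : F} (hv : (x, v) ∈ W) : ∀ s ∈ Set.Icc (0:ℝ) 1, (x, s • v) ∈ W := by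
  intro s hs
  have := hconv.smul_mem_of_zero_mem (h0 : (0:F) ∈ {v : F | (x, v) ∈ W}) hv hs
  exact this

lemma Mpos {v : F} (hv : (x, v) ∈ W) : 0 < Mfun W (x, v) :=
  Mfun_pos hW (fun s hs => seg_mem hW hconv h0 hv s hs)

lemma Phi2_ray_lt {v : F} (hv : (x, v) ∈ W) (hv0 : v ≠ 0) {c : ℝ}
    (hc : c ∈ Set.Ico (0:ℝ) 1) : ‖Phi2 W (x, c • v)‖ < ‖Phi2 W (x, v)‖ := by
  have hM : 0 < Mfun W (x, v) := Mpos hW hconv h0 hv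
  have hM' : Mfun W (x, v) ≤ Mfun W (x, c • v) := Mfun_le_smul ⟨hc.1, hc.2.le⟩
  have hMc : 0 < Mfun W (x, c • v) := lt_of_lt_of_le hM hM'
  rw [Phi2_norm, Phi2_norm]
  simp only [norm_smul, Real.norm_eq_abs, abs_of_nonneg hc.1]
  have hvpos : 0 < ‖v‖ := norm_pos_iff.2 hv0
  have h1 : (c * ‖v‖)^2 / Mfun W (x, c • v) ≤ (c * ‖v‖)^2 / Mfun W (x, v) :=
    div_le_div_of_nonneg_left (by positivity) hM hM'
  have hca : (0:ℝ) ≤ 1 - c := by linarith [hc.2]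
  have hcb : (0:ℝ) ≤ 1 + c := by linarith [hc.1]
  have hc2 : (c * ‖v‖)^2 ≤ ‖v‖^2 := by
    nlinarith [mul_nonneg (mul_nonneg hca hcb) (sq_nonneg ‖v‖)]
  have h2 : (c * ‖v‖)^2 / Mfun W (x, v) ≤ ‖v‖^2 / Mfun W (x, v) :=
    div_le_div_of_nonneg_right hc2 hM.le

  have h3 : c * ‖v‖ < ‖v‖ := by nlinarith [hc.2, hvpos]
  linarith

lemma Phi2_inj {v v' : F} (hv : (x, v) ∈ W) (hv' : (x, v') ∈ W)
    (h : Phi2 W (x, v) = Phi2 W (x, v')) : v = v' := by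
  have hM : 0 < Mfun W (x, v) := Mpos hW hconv h0 hv
  have hM' : 0 < Mfun W (x, v') := Mpos hW hconv h0 hv'
  set lam := 1 + ‖v‖ / Mfun W (x, v) with hlam
  set lam' := 1 + ‖v'‖ / Mfun W (x, v') with hlam'
  have hlampos : 0 < lam := by positivity
  have hlampos' : 0 < lam' := by positivity
  have hPhi : lam • v = lam' • v' := h
  rcases eq_or_ne v 0 with rfl | hv0
  · have : lam' • v' = 0 := by rw [← hPhi, smul_zero]
    rcases smul_eq_zero.1 this with h' | h'
    · exact absurd h' hlampos'.ne'
    · exact h'.symm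
  rcases eq_or_ne v' 0 with rfl | hv0'
  · have : lam • v = 0 := by rw [hPhi, smul_zero]
    rcases smul_eq_zero.1 this with h' | h'
    · exact absurd h' hlampos.ne'
    · exact h'
  -- both nonzero
  have hvv' : v' = (lam / lam') • v := by
    rw [div_eq_mul_inv, mul_comm lam, mul_smul, hPhi, ← mul_smul,
      inv_mul_cancel₀ hlampos'.ne', one_smul]
  set c := lam / lam' with hc
  have hcpos : 0 < c := div_pos hlampos hlampos'
  rcases lt_trichotomy c 1 with hlt | heq | hgt
  · exfalso
    have := Phi2_ray_lt hW hconv h0 hv hv0 (c := c) ⟨hcpos.le, hlt⟩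
    rw [← hvv', h] at this
    exact lt_irrefl _ this
  · rw [hvv', heq, one_smul]
  · exfalso
    have hvv : v = (1/c) • v' := by
      rw [hvv', ← mul_smul]
      field_simp
      rw [one_smul]
    have := Phi2_ray_lt hW hconv h0 hv' hv0' (c := 1/c)
      ⟨by positivity, by rw [div_lt_one hcpos]; exact hgt⟩
    rw [← hvv, h] at this
    exact lt_irrefl _ this

lemma Phi2_q (w : F) {t : ℝ} (ht : 0 ≤ t) :
    Phi2 W (x, t • w) = (t + t^2 * ‖w‖ / Mfun W (x, t • w)) • w := by
  have h1 : ‖t • w‖ = t * ‖w‖ := by rw [norm_smul, Real.norm_eq_abs, abs_of_nonneg ht]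
  show (1 + ‖t • w‖ / Mfun W (x, t • w)) • (t • w) = _
  rw [h1, smul_smul]
  congr 1
  ring

lemma slice_open : IsOpen {v : F | (x, v) ∈ W} :=
  hW.preimage (Continuous.prodMk_right x)

lemma Phi2_surj (w : F) : ∃ v : F, (x, v) ∈ W ∧ Phi2 W (x, v) = w := by
  rcases eq_or_ne w 0 with rfl | hw0
  · exact ⟨0, h0, by rw [Phi2, smul_zero]⟩
  have hwpos : 0 < ‖w‖ := norm_pos_iff.2 hw0
  set T : Set ℝ := {t : ℝ | 0 ≤ t ∧ (x, t • w) ∈ W} with hT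
  set q : ℝ → ℝ := fun t => t + t^2 * ‖w‖ / Mfun W (x, t • w) with hq
  have hT0 : (0:ℝ) ∈ T := ⟨le_rfl, by simpa using h0⟩
  have hTdc : ∀ t ∈ T, ∀ s ∈ Set.Icc (0:ℝ) 1, s * t ∈ T := by
    intro t ht s hs
    refine ⟨mul_nonneg hs.1 ht.1, ?_⟩
    have := seg_mem hW hconv h0 ht.2 s hs
    rwa [smul_smul] at this
  have hqnn : ∀ t ∈ T, t ≤ q t := by
    intro t ht
    have hM : 0 < Mfun W (x, t • w) := Mpos hW hconv h0 ht.2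
    have : 0 ≤ t^2 * ‖w‖ / Mfun W (x, t • w) := by positivity
    simp only [hq]; linarith
  have key : ∃ t₁ ∈ T, 1 ≤ q t₁ := by
    by_contra hcon
    push_neg at hcon
    have hbdd : BddAbove T := ⟨1, fun t ht => le_trans (hqnn t ht) (hcon t ht).le⟩
    set ρ := sSup T with hρ
    have hρ0 : 0 ≤ ρ := le_csSup hbdd hT0
    have hρpos : 0 < ρ := by
      rcases Metric.isOpen_iff.1 (slice_open hW hconv h0) 0 h0 with ⟨ε, hε, hball⟩
      have htmem : ε / (2 * ‖w‖) ∈ T := by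
        refine ⟨by positivity, hball ?_⟩
        rw [Metric.mem_ball, dist_zero_right, norm_smul, Real.norm_eq_abs,
          abs_of_nonneg (div_nonneg hε.le (by positivity))]
        have hwne : ‖w‖ ≠ 0 := hwpos.ne'
        have heq2 : ε / (2 * ‖w‖) * ‖w‖ = ε / 2 := by field_simp
        rw [heq2]; linarith
      exact lt_of_lt_of_le (by positivity) (le_csSup hbdd htmem)
    have hρW : (x, ρ • w) ∉ W := by
      intro hmem
      rcases Metric.isOpen_iff.1 (slice_open hW hconv h0) (ρ • w) hmem with ⟨ε, hε, hball⟩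
      have htmem : ρ + ε / (2 * ‖w‖) ∈ T := by
        refine ⟨add_nonneg hρ0 (by positivity), hball ?_⟩
        rw [Metric.mem_ball, dist_eq_norm, add_smul, add_sub_cancel_left, norm_smul,
          Real.norm_eq_abs, abs_of_nonneg (div_nonneg hε.le (by positivity))]
        have hwne : ‖w‖ ≠ 0 := hwpos.ne'
        have heq2 : ε / (2 * ‖w‖) * ‖w‖ = ε / 2 := by field_simp
        rw [heq2]; linarith
      have hle := le_csSup hbdd htmem
      have hpos2 : 0 < ε / (2 * ‖w‖) := by positivity
      linarith
    have hMle : ∀ t ∈ T, Mfun W (x, t • w) ≤ (ρ - t) * ‖w‖ := by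
      intro t ht
      have hle : t ≤ ρ := le_csSup hbdd ht
      refine le_trans Mfun_le_dbar (le_trans (dbar_le_dist (z' := (x, ρ • w)) hρW) ?_)
      rw [Prod.dist_eq]
      simp only [dist_self, dist_eq_norm, ← sub_smul, norm_smul, Real.norm_eq_abs,
        abs_of_nonpos (by linarith : t - ρ ≤ 0)]
      rw [max_eq_right (mul_nonneg (by linarith : (0:ℝ) ≤ -(t - ρ)) (norm_nonneg w))]
      nlinarith
    -- pick t close to ρ
    set ε := min (ρ/2) (ρ^2/8) with hε
    have hεpos : 0 < ε := lt_min (by positivity) (by positivity)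
    rcases exists_lt_of_lt_csSup ⟨0, hT0⟩ (by linarith : ρ - ε < ρ) with ⟨t, htT, htlt⟩
    have htρ : t ≤ ρ := le_csSup hbdd htT
    have htpos : ρ/2 ≤ t := by
      have : ε ≤ ρ/2 := min_le_left _ _
      linarith
    have hMt : 0 < Mfun W (x, t • w) := Mpos hW hconv h0 htT.2
    have hρt : 0 < ρ - t := by
      rcases lt_or_eq_of_le htρ with h | h
      · linarith
      · exfalso; rw [h] at htT; exact hρW htT.2
    have hM2 : Mfun W (x, t • w) ≤ (ρ - t) * ‖w‖ := hMle t htT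
    have h2q : 2 ≤ t^2 * ‖w‖ / Mfun W (x, t • w) := by
      rw [le_div_iff₀ hMt]
      have hεle : ρ - t ≤ ρ^2/8 := le_trans (by linarith) (min_le_right _ _)
      have h4 : ρ^2/4 ≤ t^2 := by nlinarith
      have h5 : (ρ - t) * ‖w‖ ≤ ρ^2/8 * ‖w‖ := mul_le_mul_of_nonneg_right hεle hwpos.le
      have h6 : ρ^2/4 * ‖w‖ ≤ t^2 * ‖w‖ := mul_le_mul_of_nonneg_right h4 hwpos.le
      linarith
    have := hcon t htT
    have := hqnn t htT
    simp only [hq] at *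
    linarith [htT.1]
  rcases key with ⟨t₁, ht₁T, ht₁⟩
  have ht₁pos : 0 < t₁ := by
    rcases lt_or_eq_of_le ht₁T.1 with h | h
    · exact h
    · exfalso
      have : q 0 = 0 := by simp [hq]
      rw [← h] at ht₁; rw [this] at ht₁; linarith
  have hIccT : ∀ t ∈ Set.Icc (0:ℝ) t₁, t ∈ T := by
    intro t ht
    have := hTdc t₁ ht₁T (t / t₁) ⟨div_nonneg ht.1 ht₁pos.le, by rw [div_le_one ht₁pos]; exact ht.2⟩
    rwa [div_mul_cancel₀ _ ht₁pos.ne'] at this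
  have hcont : ContinuousOn q (Set.Icc 0 t₁) := by
    apply ContinuousOn.add continuousOn_id
    apply ContinuousOn.div
    · fun_prop
    · exact (Mfun_continuous.comp (by fun_prop)).continuousOn
    · intro t ht
      exact (Mpos hW hconv h0 (hIccT t ht).2).ne'
  have hIVT := intermediate_value_Icc ht₁pos.le hcont
  have h1mem : (1:ℝ) ∈ Set.Icc (q 0) (q t₁) := by
    constructor
    · simp [hq]
    · exact ht₁
  rcases hIVT h1mem with ⟨t, htmem, hqt⟩
  refine ⟨t • w, (hIccT t htmem).2, ?_⟩
  rw [Phi2_q hW hconv h0 w htmem.1]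
  simp only [hq] at hqt
  rw [hqt, one_smul]

end Phi
section Core
variable {X : Type*} [MetricSpace X] {F : Type*} [NormedAddCommGroup F]
  [NormedSpace ℝ F] [FiniteDimensional ℝ F]

lemma core_homeo (W : Set (X × F)) (hW : IsOpen W) (V : Set X)
    (hsub : W ⊆ V ×ˢ (Set.univ : Set F))
    (hconv : ∀ x ∈ V, Convex ℝ {v : F | (x, v) ∈ W})
    (h0 : ∀ x ∈ V, (x, (0:F)) ∈ W) :
    ∃ φ : W ≃ₜ V × F, ∀ z : W, ((φ z).1 : X) = (z : X × F).1 := by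
  haveI : ProperSpace F := FiniteDimensional.proper ℝ F
  have hmemV : ∀ z : X × F, z ∈ W → z.1 ∈ V := fun z hz => (hsub hz).1
  -- the forward map
  set f : W → V × F := fun z => (⟨(z : X × F).1, hmemV _ z.2⟩, Phi2 W (z : X × F)) with hf
  have hWx : ∀ z : X × F, z ∈ W → ((z.1, z.2) ∈ W) := fun z hz => hz
  have hbij : Function.Bijective f := by
    constructor
    · rintro ⟨z, hz⟩ ⟨z', hz'⟩ h
      have h1 : z.1 = z'.1 := congrArg (fun p => (p.1 : X)) h
      have h2 : Phi2 W z = Phi2 W z' := congrArg Prod.snd h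
      have hx : z.1 ∈ V := hmemV _ hz
      have hzz : (z.1, z.2) ∈ W := hz
      have hzz' : (z.1, z'.2) ∈ W := by rw [h1]; exact hz'
      have h2' : Phi2 W (z.1, z.2) = Phi2 W (z.1, z'.2) := by
        have e1 : Phi2 W (z.1, z.2) = Phi2 W z := by congr
        have e2 : Phi2 W (z.1, z'.2) = Phi2 W z' := by rw [h1]
        rw [e1, e2, h2]
      have := Phi2_inj hW (hconv _ hx) (h0 _ hx) hzz hzz' h2'
      apply Subtype.ext
      exact Prod.ext h1 this
    · rintro ⟨⟨x, hx⟩, w⟩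
      rcases Phi2_surj hW (hconv _ hx) (h0 _ hx) w with ⟨v, hvW, hvw⟩
      exact ⟨⟨(x, v), hvW⟩, by
        apply Prod.ext
        · rfl
        · exact hvw⟩
  set e := Equiv.ofBijective f hbij with he
  have hMposW : ∀ z : X × F, z ∈ W → 0 < Mfun W z := by
    intro z hz
    have hx : z.1 ∈ V := hmemV _ hz
    have : 0 < Mfun W (z.1, z.2) := Mpos hW (hconv _ hx) (h0 _ hx) hz
    simpa using this
  have hcf : Continuous f := by
    refine Continuous.prodMk ?_ ?_
    · exact (continuous_fst.comp continuous_subtype_val).subtype_mk _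
    · refine ContinuousOn.comp_continuous
        (fun z hz => (Phi2_continuousAt (hMposW z hz)).continuousWithinAt)
        continuous_subtype_val (fun z => z.2)
  have hnormPhi : ∀ z : X × F, z ∈ W → ‖(z : X × F).2‖ ≤ ‖Phi2 W z‖ ∧
      ‖z.2‖^2 / Mfun W z ≤ ‖Phi2 W z‖ := by
    intro z hz
    have hM := hMposW z hz
    rw [Phi2_norm]
    constructor
    · have : 0 ≤ ‖z.2‖^2 / Mfun W z := by positivity
      linarith
    · linarith [norm_nonneg z.2]
  have hci : Continuous (e.symm : V × F → W) := by
    apply SeqContinuous.continuous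
    intro u z hu
    set a : ℕ → W := fun n => e.symm (u n) with ha
    set A : W := e.symm z with hA
    have hfa : ∀ n, f (a n) = u n := fun n => e.apply_symm_apply (u n)
    have hfA : f A = z := e.apply_symm_apply z
    have hbase : ∀ n, ((a n : X × F)).1 = ((u n).1 : X) := by
      intro n
      have h := congrArg (fun p : V × F => (p.1 : X)) (hfa n)
      simp only [hf] at h
      exact h
    have hbaseA : ((A : X × F)).1 = ((z.1 : X)) := by
      have h := congrArg (fun p : V × F => (p.1 : X)) hfA
      simp only [hf] at h
      exact h
    have hPhi : ∀ n, Phi2 W (a n : X × F) = (u n).2 := by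
      intro n
      have h := congrArg Prod.snd (hfa n)
      simp only [hf] at h
      exact h
    have hPhiA : Phi2 W (A : X × F) = z.2 := by
      have h := congrArg Prod.snd hfA
      simp only [hf] at h
      exact h
    -- convergence of base coordinates
    have hub : Filter.Tendsto (fun n => ((u n).1 : X)) Filter.atTop (𝓝 (z.1 : X)) :=
      ((continuous_subtype_val.comp continuous_fst).tendsto z).comp hu
    have huw : Filter.Tendsto (fun n => (u n).2) Filter.atTop (𝓝 z.2) :=
      (continuous_snd.tendsto z).comp hu
    rw [tendsto_subtype_rng]
    have hgoal2 : Filter.Tendsto (fun n => ((a n : X × F)).2) Filter.atTop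
        (𝓝 ((A : X × F)).2) := by
      apply tendsto_of_subseq_tendsto
      intro ns hns
      -- bound the sequence
      obtain ⟨R, hR⟩ : ∃ R, ∀ n, ‖(u n).2‖ ≤ R := by
        obtain ⟨R, hR⟩ := ((continuous_norm.tendsto _).comp huw).bddAbove_range
        exact ⟨R, fun n => hR ⟨n, rfl⟩⟩
      have hball : ∀ n, ((a (ns n) : X × F)).2 ∈ Metric.closedBall (0:F) R := by
        intro n
        rw [Metric.mem_closedBall, dist_zero_right]
        refine le_trans ?_ (hR (ns n))
        have := (hnormPhi _ (a (ns n)).2).1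
        rwa [hPhi] at this
      obtain ⟨v', hv'mem, ms, hms, hvtend⟩ :=
        (isCompact_closedBall (0:F) R).tendsto_subseq hball
      refine ⟨ms, ?_⟩
      have hnsms : Filter.Tendsto (fun n => ns (ms n)) Filter.atTop Filter.atTop :=
        hns.comp hms.tendsto_atTop
      set xL : X := (z.1 : X) with hxL
      have hbseq : Filter.Tendsto (fun n => ((a (ns (ms n)) : X × F))) Filter.atTop
          (𝓝 (xL, v')) := by
        refine Filter.Tendsto.prodMk_nhds ?_ hvtend
        have : Filter.Tendsto (fun n => ((u (ns (ms n))).1 : X)) Filter.atTop (𝓝 xL) :=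
          hub.comp hnsms
        simpa [hbase] using this
      by_cases hcase : (xL, v') ∈ W
      · -- limit is in W: identify v' with A's fiber component
        have hPhilim : Filter.Tendsto (fun n => Phi2 W ((a (ns (ms n)) : X × F)))
            Filter.atTop (𝓝 (Phi2 W (xL, v'))) :=
          (Phi2_continuousAt (hMposW _ hcase)).tendsto.comp hbseq
        have hPhilim' : Filter.Tendsto (fun n => Phi2 W ((a (ns (ms n)) : X × F)))
            Filter.atTop (𝓝 z.2) := by
          simp only [hPhi]
          exact huw.comp hnsms
        have heqlim : Phi2 W (xL, v') = z.2 := tendsto_nhds_unique hPhilim hPhilim'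
        have hAW : ((A : X × F)).1 = xL := hbaseA
        have hAmem : (xL, ((A : X × F)).2) ∈ W := by
          rw [← hAW]; exact A.2
        have hPhiA' : Phi2 W (xL, ((A : X × F)).2) = z.2 := by
          rw [← hAW]
          simpa using hPhiA
        have hxLV : xL ∈ V := z.1.2
        have := Phi2_inj hW (hconv _ hxLV) (h0 _ hxLV) hcase hAmem
          (by rw [heqlim, hPhiA'])
        rw [← this]
        exact hvtend
      · -- limit outside W: contradiction
        exfalso
        have hxLV : xL ∈ V := z.1.2
        have hv'ne : v' ≠ 0 := by
          rintro rfl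
          exact hcase (h0 _ hxLV)
        have hM0 : Mfun W (xL, v') = 0 := by
          refine le_antisymm ?_ Mfun_nonneg
          refine le_trans Mfun_le_dbar ?_
          have := dbar_le_dist (W := W) (z := ((xL, v') : X × F)) (z' := (xL, v')) hcase
          simpa using this
        have hMseq : Filter.Tendsto (fun n => Mfun W ((a (ns (ms n)) : X × F)))
            Filter.atTop (𝓝 0) := by
          have := (Mfun_continuous (W := W)).tendsto ((xL, v') : X × F)
          rw [hM0] at this
          exact this.comp hbseq
        have hMpos' : ∀ n, 0 < Mfun W ((a (ns (ms n)) : X × F)) :=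
          fun n => hMposW _ (a (ns (ms n))).2
        have hMinv : Filter.Tendsto (fun n => (Mfun W ((a (ns (ms n)) : X × F)))⁻¹)
            Filter.atTop Filter.atTop := by
          apply tendsto_inv_nhdsGT_zero.comp
          exact tendsto_nhdsWithin_of_tendsto_nhds_of_eventually_within _ hMseq
            (Filter.Eventually.of_forall fun n => hMpos' n)
        have hnum : Filter.Tendsto (fun n => ‖((a (ns (ms n)) : X × F)).2‖^2)
            Filter.atTop (𝓝 (‖v'‖^2)) := by
          have : Continuous fun v : F => ‖v‖^2 := by fun_prop
          exact (this.tendsto v').comp hvtend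
        have hprod : Filter.Tendsto (fun n => ‖((a (ns (ms n)) : X × F)).2‖^2 *
            (Mfun W ((a (ns (ms n)) : X × F)))⁻¹) Filter.atTop Filter.atTop :=
          Filter.Tendsto.pos_mul_atTop (pow_pos (norm_pos_iff.2 hv'ne) 2) hnum hMinv
        have hwlarge : Filter.Tendsto (fun n => ‖(u (ns (ms n))).2‖)
            Filter.atTop Filter.atTop := by
          apply Filter.tendsto_atTop_mono _ hprod
          intro n
          have h2 := (hnormPhi _ (a (ns (ms n))).2).2
          rw [hPhi, div_eq_mul_inv] at h2
          exact h2
        have hwconv : Filter.Tendsto (fun n => ‖(u (ns (ms n))).2‖)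
            Filter.atTop (𝓝 ‖z.2‖) :=
          ((continuous_norm.tendsto _).comp huw).comp hnsms
        exact not_tendsto_atTop_of_tendsto_nhds hwconv hwlarge
    have hgoal1 : Filter.Tendsto (fun n => ((a n : X × F)).1) Filter.atTop
        (𝓝 ((A : X × F)).1) := by
      rw [hbaseA]
      simpa [hbase] using hub
    have := hgoal1.prodMk_nhds hgoal2
    simpa using this
  refine ⟨⟨e, hcf, hci⟩, ?_⟩
  intro z
  rfl

end Core

/-- Let `X` be a metrizable space, `p : E → X` a topological real vector
bundle of rank `n`, and `U ⊆ E` an open subset such that `U ∩ p⁻¹(x)` is convex and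
nonempty for every `x ∈ X`. Then `p|_U : U → X` is a fiber bundle with fiber `ℝ^n`. -/
theorem open_convex_subset_isFiberBundle (n : ℕ) (X : Type)
    [TopologicalSpace X] [TopologicalSpace.MetrizableSpace X]
    (E : X → Type) [∀ x, AddCommGroup (E x)] [∀ x, Module ℝ (E x)]
    [∀ x, TopologicalSpace (E x)]
    [TopologicalSpace (Bundle.TotalSpace (Fin n → ℝ) E)]
    [FiberBundle (Fin n → ℝ) E] [VectorBundle ℝ (Fin n → ℝ) E]
    (U : Set (Bundle.TotalSpace (Fin n → ℝ) E)) (hUopen : IsOpen U)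
    (hconv : ∀ x : X, Convex ℝ {v : E x | Bundle.TotalSpace.mk x v ∈ U})
    (hne : ∀ x : X, ∃ v : E x, Bundle.TotalSpace.mk x v ∈ U) :
    IsFiberBundleWith (Fin n → ℝ)
      (fun u : U.Elem => (u.1 : Bundle.TotalSpace (Fin n → ℝ) E).proj) := by
  classical
  letI : MetricSpace X := TopologicalSpace.metrizableSpaceMetric X
  refine ⟨(FiberBundle.continuous_proj (Fin n → ℝ) E).comp continuous_subtype_val, ?_, ?_⟩
  · intro x
    obtain ⟨v, hv⟩ := hne x
    exact ⟨⟨⟨x, v⟩, hv⟩, rfl⟩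
  intro b
  set e := trivializationAt (Fin n → ℝ) E b with he
  have hb : b ∈ e.baseSet := FiberBundle.mem_baseSet_trivializationAt' b
  set W₀ : Set (X × (Fin n → ℝ)) :=
    (e : Bundle.TotalSpace (Fin n → ℝ) E → X × (Fin n → ℝ)) '' (e.source ∩ U) with hW₀
  have hW₀open : IsOpen W₀ :=
    e.toOpenPartialHomeomorph.isOpen_image_of_subset_source (e.open_source.inter hUopen)
      Set.inter_subset_left
  have hW₀target : W₀ ⊆ e.target := by
    rintro q ⟨p, hp, rfl⟩
    exact e.toPartialHomeomorph.map_source hp.1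
  have hsymmW₀ : ∀ q ∈ W₀, e.toPartialHomeomorph.symm q ∈ e.source ∩ U := by
    rintro q ⟨p, hp, rfl⟩
    exact Set.mem_of_eq_of_mem (PartialHomeomorph.left_inv e.toPartialHomeomorph hp.1) hp
  have hchar : ∀ x (hx : x ∈ e.baseSet) (v : Fin n → ℝ),
      ((x, v) ∈ W₀ ↔
        Bundle.TotalSpace.mk x ((e.continuousLinearEquivAt ℝ x hx).symm v) ∈ U) := by
    intro x hx v
    constructor
    · rintro ⟨p, hp, hep⟩
      rcases p with ⟨x', v'⟩
      have hproj : x' = x := by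
        have := e.coe_fst hp.1
        rw [hep] at this
        exact this.symm
      subst hproj
      have h2 : (e (Bundle.TotalSpace.mk x' v')).2 = v := by rw [hep]
      have h3 : (e.continuousLinearEquivAt ℝ x' hx) v' = v := by
        rw [Trivialization.continuousLinearEquivAt_apply]
        exact h2
      have hv' : v' = (e.continuousLinearEquivAt ℝ x' hx).symm v := by
        rw [← h3, ContinuousLinearEquiv.symm_apply_apply]
      rw [← hv']
      exact hp.2
    · intro hU'
      refine ⟨Bundle.TotalSpace.mk x ((e.continuousLinearEquivAt ℝ x hx).symm v),
        ⟨e.mem_source.2 hx, hU'⟩, ?_⟩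
      apply Prod.ext
      · exact e.coe_fst (e.mem_source.2 hx)
      · have h2 : (e (Bundle.TotalSpace.mk x ((e.continuousLinearEquivAt ℝ x hx).symm v))).2
            = (e.continuousLinearEquivAt ℝ x hx) ((e.continuousLinearEquivAt ℝ x hx).symm v) :=
          (congrFun (Trivialization.continuousLinearEquivAt_apply ℝ e x hx) _).symm
        rw [h2, ContinuousLinearEquiv.apply_symm_apply]
  obtain ⟨v₀, hv₀⟩ := hne b
  set z₀ := e (Bundle.TotalSpace.mk b v₀) with hz₀
  have hz₀W₀ : z₀ ∈ W₀ := ⟨_, ⟨e.mem_source.2 hb, hv₀⟩, rfl⟩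
  set w₀ := z₀.2 with hw₀
  have hz₀1 : z₀.1 = b := e.coe_fst (e.mem_source.2 hb)
  have hbw₀ : (b, w₀) ∈ W₀ := by
    have h : (b, w₀) = z₀ := by
      apply Prod.ext
      · exact hz₀1.symm
      · rfl
    rw [h]
    exact hz₀W₀
  obtain ⟨V₁, s, hV₁open, hsopen, hbV₁, hw₀s, hVs⟩ := isOpen_prod_iff.1 hW₀open b w₀ hbw₀
  set V₂ := V₁ ∩ e.baseSet with hV₂
  have hV₂open : IsOpen V₂ := hV₁open.inter e.open_baseSet
  have hbV₂ : b ∈ V₂ := ⟨hbV₁, hb⟩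
  set W : Set (X × (Fin n → ℝ)) := {z | z.1 ∈ V₂ ∧ (z.1, z.2 + w₀) ∈ W₀} with hWdef
  have hWopen : IsOpen W := by
    have h1 : W = (V₂ ×ˢ Set.univ) ∩
        ((fun z : X × (Fin n → ℝ) => (z.1, z.2 + w₀)) ⁻¹' W₀) := by
      ext z
      simp only [hWdef, Set.mem_setOf_eq, Set.mem_inter_iff, Set.mem_prod, Set.mem_univ,
        and_true, Set.mem_preimage]
    rw [h1]
    exact (hV₂open.prod isOpen_univ).inter (hW₀open.preimage (by fun_prop))
  have hWsub : W ⊆ V₂ ×ˢ Set.univ := fun z hz => ⟨hz.1, trivial⟩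
  have hWconv : ∀ x ∈ V₂, Convex ℝ {v : Fin n → ℝ | (x, v) ∈ W} := by
    intro x hx v₁ hv₁ v₂ hv₂ a c ha hc hac
    refine ⟨hx, ?_⟩
    show (x, a • v₁ + c • v₂ + w₀) ∈ W₀
    rw [hchar x hx.2]
    have h1 := (hchar x hx.2 (v₁ + w₀)).1 hv₁.2
    have h2 := (hchar x hx.2 (v₂ + w₀)).1 hv₂.2
    have hwc : a • w₀ + c • w₀ = w₀ := by rw [← add_smul, hac, one_smul]
    have hcomb : a • (v₁ + w₀) + c • (v₂ + w₀) = a • v₁ + c • v₂ + w₀ := by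
      rw [smul_add, smul_add]
      calc a • v₁ + a • w₀ + (c • v₂ + c • w₀)
          = a • v₁ + c • v₂ + (a • w₀ + c • w₀) := by abel
        _ = a • v₁ + c • v₂ + w₀ := by rw [hwc]
    rw [← hcomb, map_add, map_smul, map_smul]
    exact hconv x h1 h2 ha hc hac
  have hW0mem : ∀ x ∈ V₂, (x, (0 : Fin n → ℝ)) ∈ W := by
    intro x hx
    refine ⟨hx, ?_⟩
    show (x, 0 + w₀) ∈ W₀
    rw [zero_add]
    exact hVs ⟨hx.1, hw₀s⟩
  obtain ⟨φ₁, hφ₁⟩ := core_homeo W hWopen V₂ hWsub hWconv hW0mem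
  refine ⟨V₂, hbV₂, hV₂open, ?_⟩
  set p : U.Elem → X := fun u => (u.1 : Bundle.TotalSpace (Fin n → ℝ) E).proj with hp
  -- the homeomorphism between the preimage and W
  have htoMem : ∀ u : (p ⁻¹' V₂ : Set U.Elem),
      ((u.1.1 : Bundle.TotalSpace (Fin n → ℝ) E).proj, (e u.1.1).2 - w₀) ∈ W := by
    intro u
    refine ⟨u.2, ?_⟩
    show ((u.1.1 : Bundle.TotalSpace (Fin n → ℝ) E).proj, ((e u.1.1).2 - w₀) + w₀) ∈ W₀
    rw [sub_add_cancel]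
    have hsrc : u.1.1 ∈ e.source := e.mem_source.2 u.2.2
    have hpair : ((u.1.1 : Bundle.TotalSpace (Fin n → ℝ) E).proj, (e u.1.1).2) = e u.1.1 := by
      apply Prod.ext
      · exact (e.coe_fst hsrc).symm
      · rfl
    rw [hpair]
    exact ⟨u.1.1, ⟨hsrc, u.1.2⟩, rfl⟩
  set toF : (p ⁻¹' V₂ : Set U.Elem) → W :=
    fun u => ⟨((u.1.1 : Bundle.TotalSpace (Fin n → ℝ) E).proj, (e u.1.1).2 - w₀), htoMem u⟩
    with htoF
  have hinvMemU : ∀ z : W, e.toPartialHomeomorph.symm ((z : X × (Fin n → ℝ)).1,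
      (z : X × (Fin n → ℝ)).2 + w₀) ∈ U := fun z => (hsymmW₀ _ z.2.2).2
  have hinvMemV : ∀ z : W, p ⟨_, hinvMemU z⟩ ∈ V₂ := by
    intro z
    show (e.toOpenPartialHomeomorph.symm _).proj ∈ V₂
    rw [e.proj_symm_apply (hW₀target z.2.2)]
    exact z.2.1
  set invF : W → (p ⁻¹' V₂ : Set U.Elem) :=
    fun z => ⟨⟨e.toPartialHomeomorph.symm ((z : X × (Fin n → ℝ)).1,
      (z : X × (Fin n → ℝ)).2 + w₀), hinvMemU z⟩, hinvMemV z⟩ with hinvF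
  have hleft : Function.LeftInverse invF toF := by
    intro u
    apply Subtype.ext
    apply Subtype.ext
    show e.toPartialHomeomorph.symm
      ((u.1.1 : Bundle.TotalSpace (Fin n → ℝ) E).proj, ((e u.1.1).2 - w₀) + w₀) = u.1.1
    rw [sub_add_cancel]
    have hsrc : u.1.1 ∈ e.source := e.mem_source.2 u.2.2
    have hpair : ((u.1.1 : Bundle.TotalSpace (Fin n → ℝ) E).proj, (e u.1.1).2) = e u.1.1 := by
      apply Prod.ext
      · exact (e.coe_fst hsrc).symm
      · rfl
    rw [hpair]
    exact e.toPartialHomeomorph.left_inv hsrc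
  have hright : Function.RightInverse invF toF := by
    intro z
    apply Subtype.ext
    have hq : ((z : X × (Fin n → ℝ)).1, (z : X × (Fin n → ℝ)).2 + w₀) ∈ e.target :=
      hW₀target z.2.2
    apply Prod.ext
    · show (e.toPartialHomeomorph.symm _).proj = (z : X × (Fin n → ℝ)).1
      exact e.proj_symm_apply hq
    · show (e (e.toPartialHomeomorph.symm _)).2 - w₀ = (z : X × (Fin n → ℝ)).2
      have h : (e (e.toPartialHomeomorph.symm ((z : X × (Fin n → ℝ)).1,
          (z : X × (Fin n → ℝ)).2 + w₀)) : X × (Fin n → ℝ))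
          = ((z : X × (Fin n → ℝ)).1, (z : X × (Fin n → ℝ)).2 + w₀) :=
        e.toPartialHomeomorph.right_inv hq
      rw [h]
      exact add_sub_cancel_right _ _
  have hcontTo : Continuous toF := by
    apply Continuous.subtype_mk
    refine Continuous.prodMk ?_ ?_
    · exact (FiberBundle.continuous_proj (Fin n → ℝ) E).comp
        (continuous_subtype_val.comp continuous_subtype_val)
    · refine Continuous.sub ?_ continuous_const
      refine Continuous.snd ?_
      refine ContinuousOn.comp_continuous e.continuousOn
        (continuous_subtype_val.comp continuous_subtype_val) ?_
      intro u
      exact e.mem_source.2 u.2.2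
  have hcontInv : Continuous invF := by
    apply Continuous.subtype_mk
    apply Continuous.subtype_mk
    refine ContinuousOn.comp_continuous e.toPartialHomeomorph.continuousOn_symm ?_ ?_
    · exact Continuous.prodMk (continuous_fst.comp continuous_subtype_val)
        ((continuous_snd.comp continuous_subtype_val).add continuous_const)
    · intro z
      exact hW₀target z.2.2
  set ψ : (p ⁻¹' V₂ : Set U.Elem) ≃ₜ W :=
    ⟨⟨toF, invF, hleft, hright⟩, hcontTo, hcontInv⟩ with hψ
  refine ⟨ψ.trans φ₁, ?_⟩
  intro u
  show ((φ₁ (ψ u)).1 : X) = p u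
  rw [hφ₁ (ψ u)]
  rfl
end

section
/- Let X be a metrizable topological space and let U ⊆ X × ℝ^n be an open subset such that for every x ∈ X the slice U_x = {v ∈ ℝ^n : (x,v) ∈ U} is convex and nonempty. Then there exists a homeomorphism Φ : U → X × ℝ^n commuting with the projections to X. -/
open Set Metric Topology

set_option maxHeartbeats 1000000

/-- In a metrizable space, a nonempty closed set is the zero set of a continuous
nonnegative real function. -/
theorem aux_exists_zero_fun {Z : Type*} [TopologicalSpace Z]
    [TopologicalSpace.MetrizableSpace Z] {C : Set Z} (hC : IsClosed C) (hne : C.Nonempty) :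
    ∃ f : Z → ℝ, Continuous f ∧ (∀ z, 0 ≤ f z) ∧ (∀ z, f z = 0 ↔ z ∈ C) := by
  letI : MetricSpace Z := TopologicalSpace.metrizableSpaceMetric Z
  refine ⟨fun z => Metric.infDist z C, Metric.continuous_infDist_pt _,
    fun z => Metric.infDist_nonneg, fun z => ?_⟩
  constructor
  · intro h
    by_contra hz
    exact absurd h (ne_of_gt ((hC.notMem_iff_infDist_pos hne).1 hz))
  · exact fun h => Metric.infDist_zero_of_mem h

/-- Continuous selection through an open set with convex nonempty slices. -/
theorem aux_selection {n : ℕ} {X : Type} [TopologicalSpace X]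
    [TopologicalSpace.MetrizableSpace X]
    (U : Set (X × (Fin n → ℝ))) (hUopen : IsOpen U)
    (hconv : ∀ x : X, Convex ℝ {v : Fin n → ℝ | (x, v) ∈ U})
    (hne : ∀ x : X, ∃ v : Fin n → ℝ, (x, v) ∈ U) :
    ∃ s : C(X, Fin n → ℝ), ∀ x, (x, s x) ∈ U := by
  letI : MetricSpace X := TopologicalSpace.metrizableSpaceMetric X
  apply exists_continuous_forall_mem_convex_of_local_const hconv
  intro x
  obtain ⟨v, hv⟩ := hne x
  exact ⟨v, (continuous_id.prodMk continuous_const).continuousAt (hUopen.mem_nhds hv)⟩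

/-- Let `X` be a metrizable topological space and `U ⊆ X × ℝ^n` an open
subset all of whose slices `U_x = {v : (x,v) ∈ U}` are convex and nonempty. Then there is a
homeomorphism `Φ : U ≃ X × ℝ^n` commuting with the projections to `X`. -/
theorem open_convex_subset_of_trivial_bundle_homeo (n : ℕ) (X : Type)
    [TopologicalSpace X] [TopologicalSpace.MetrizableSpace X]
    (U : Set (X × (Fin n → ℝ))) (hUopen : IsOpen U)
    (hconv : ∀ x : X, Convex ℝ {v : Fin n → ℝ | (x, v) ∈ U})
    (hne : ∀ x : X, ∃ v : Fin n → ℝ, (x, v) ∈ U) :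
    ∃ Φ : U.Elem ≃ₜ X × (Fin n → ℝ),
      ∀ u : U.Elem, (Φ u).1 = u.1.1 := by
  classical
  by_cases hUuniv : U = Set.univ
  · subst hUuniv
    exact ⟨Homeomorph.Set.univ _, fun u => rfl⟩
  -- a continuous section through U
  obtain ⟨s, hs⟩ := aux_selection U hUopen hconv hne
  have hWne : Uᶜ.Nonempty := Set.nonempty_compl.2 hUuniv
  -- a continuous function vanishing exactly on the complement of U
  obtain ⟨dU, hdU_cont, hdU_nonneg, hdU_zero⟩ :=
    aux_exists_zero_fun (Z := X × (Fin n → ℝ)) hUopen.isClosed_compl hWne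
  have hdU_pos : ∀ q ∈ U, 0 < dU q := by
    intro q hq
    rcases lt_or_eq_of_le (hdU_nonneg q) with h | h
    · exact h
    · exact absurd ((hdU_zero q).1 h.symm) (by simpa using hq)
  have hdU0 : ∀ q, q ∉ U → dU q = 0 := fun q hq => (hdU_zero q).2 hq
  -- convexity of slices, segment version
  have hseg : ∀ (x : X) (w : Fin n → ℝ) (t : ℝ), t ∈ Icc (0:ℝ) 1 →
      (x, s x + w) ∈ U → (x, s x + t • w) ∈ U := by
    intro x w t ht hw
    have h0 : s x ∈ {v : Fin n → ℝ | (x, v) ∈ U} := hs x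
    have h1 : s x + w ∈ {v : Fin n → ℝ | (x, v) ∈ U} := hw
    have := hconv x h0 h1 (by linarith [ht.2] : (0:ℝ) ≤ 1 - t) ht.1 (by ring)
    simpa [smul_add, sub_smul, add_comm, add_assoc, add_left_comm] using
      (show (1 - t) • s x + t • (s x + w) ∈ {v : Fin n → ℝ | (x, v) ∈ U} from this)
  -- D x w : the min of dU along the segment from (x, s x) to (x, s x + w)
  set D : X → (Fin n → ℝ) → ℝ :=
    fun x w => sInf ((fun t : ℝ => dU (x, s x + t • w)) '' Icc (0:ℝ) 1) with hDdef
  have hD_cont : Continuous fun q : X × (Fin n → ℝ) => D q.1 q.2 := by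
    apply IsCompact.continuous_sInf (isCompact_Icc (a := (0:ℝ)) (b := 1))
    apply hdU_cont.comp
    exact (continuous_fst.comp continuous_fst).prodMk
      ((s.continuous.comp (continuous_fst.comp continuous_fst)).add
        ((continuous_snd).smul (continuous_snd.comp continuous_fst)))
  have himg_ne : ∀ (x : X) (w : Fin n → ℝ),
      ((fun t : ℝ => dU (x, s x + t • w)) '' Icc (0:ℝ) 1).Nonempty :=
    fun x w => (nonempty_Icc.2 zero_le_one).image _
  have himg_bdd : ∀ (x : X) (w : Fin n → ℝ),
      BddBelow ((fun t : ℝ => dU (x, s x + t • w)) '' Icc (0:ℝ) 1) := by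
    intro x w
    exact ⟨0, by rintro y ⟨t, -, rfl⟩; exact hdU_nonneg _⟩
  have hD_le : ∀ (x : X) (w : Fin n → ℝ) (t : ℝ), t ∈ Icc (0:ℝ) 1 →
      D x w ≤ dU (x, s x + t • w) :=
    fun x w t ht => csInf_le (himg_bdd x w) (mem_image_of_mem _ ht)
  have hD_le0 : ∀ (x : X) (w : Fin n → ℝ), D x w ≤ dU (x, s x) := by
    intro x w
    simpa using hD_le x w 0 (by constructor <;> norm_num)
  have hD_le1 : ∀ (x : X) (w : Fin n → ℝ), D x w ≤ dU (x, s x + w) := by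
    intro x w
    simpa using hD_le x w 1 (by constructor <;> norm_num)
  have hD_pos : ∀ (x : X) (w : Fin n → ℝ), (x, s x + w) ∈ U → 0 < D x w := by
    intro x w hw
    have hcont : ContinuousOn (fun t : ℝ => dU (x, s x + t • w)) (Icc 0 1) :=
      (hdU_cont.comp (continuous_const.prodMk
        (continuous_const.add (continuous_id.smul continuous_const)))).continuousOn
    have := (isCompact_Icc.image_of_continuousOn hcont).sInf_mem (himg_ne x w)
    obtain ⟨t, ht, hteq⟩ := this
    rw [hDdef]
    simp only []
    rw [← hteq]
    exact hdU_pos _ (hseg x w t ht hw)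
  -- antitonicity of D along rays
  have hD_mono : ∀ (x : X) (w : Fin n → ℝ) (r₁ r₂ : ℝ), 0 ≤ r₁ → r₁ ≤ r₂ →
      D x (r₂ • w) ≤ D x (r₁ • w) := by
    intro x w r₁ r₂ h0 h12
    rcases eq_or_lt_of_le (h0.trans h12) with h2 | h2
    · have : r₁ = r₂ := le_antisymm h12 (by rw [← h2]; exact h0)
      rw [this]
    apply csInf_le_csInf (himg_bdd x (r₂ • w)) (himg_ne x (r₁ • w))
    rintro y ⟨t, ht, rfl⟩
    refine ⟨t * (r₁ / r₂), ⟨mul_nonneg ht.1 (div_nonneg h0 h2.le), ?_⟩, ?_⟩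
    · calc t * (r₁ / r₂) ≤ 1 * 1 := by
            apply mul_le_mul ht.2 (by rw [div_le_one h2]; exact h12)
              (div_nonneg h0 h2.le) zero_le_one
      _ = 1 := by ring
    · show dU (x, s x + (t * (r₁ / r₂)) • (r₂ • w)) = dU (x, s x + t • (r₁ • w))
      rw [smul_smul, smul_smul, show t * (r₁ / r₂) * r₂ = t * r₁ by field_simp]
  have hphi : ∀ (x : X) (w : Fin n → ℝ) (r₁ r₂ : ℝ), 0 ≤ r₁ → r₁ < r₂ →
      r₁ - D x (r₁ • w) < r₂ - D x (r₂ • w) := by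
    intro x w r₁ r₂ h0 h12
    have := hD_mono x w r₁ r₂ h0 h12.le
    linarith
  -- uniqueness of the fixed point r = D x (r • w)
  have huniq : ∀ (x : X) (w : Fin n → ℝ) (r₁ r₂ : ℝ),
      (0 ≤ r₁ ∧ r₁ = D x (r₁ • w)) → (0 ≤ r₂ ∧ r₂ = D x (r₂ • w)) → r₁ = r₂ := by
    intro x w r₁ r₂ h1 h2
    rcases lt_trichotomy r₁ r₂ with h | h | h
    · have := hphi x w r₁ r₂ h1.1 h
      rw [← h1.2, ← h2.2] at this; linarith
    · exact h
    · have := hphi x w r₂ r₁ h2.1 h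
      rw [← h1.2, ← h2.2] at this; linarith
  -- existence of the fixed point
  have hex : ∀ (x : X) (w : Fin n → ℝ),
      ∃ r : ℝ, 0 ≤ r ∧ (x, s x + r • w) ∈ U ∧ r = D x (r • w) := by
    intro x w
    set J : Set ℝ := {r : ℝ | (x, s x + r • w) ∈ U} with hJ
    have hJopen : IsOpen J := by
      apply hUopen.preimage (f := fun r : ℝ => (x, s x + r • w))
      exact continuous_const.prodMk (continuous_const.add (continuous_id.smul continuous_const))
    have h0J : (0:ℝ) ∈ J := by
      show (x, s x + (0:ℝ) • w) ∈ U
      simpa using hs x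
    have hstar : ∀ r, r ∈ J → 0 ≤ r → ∀ r', 0 ≤ r' → r' ≤ r → r' ∈ J := by
      intro r hr hr0 r' h0' hle
      rcases eq_or_lt_of_le hr0 with h | h
      · have : r' = 0 := le_antisymm (by rw [h]; exact hle) h0'
        rw [this]; exact h0J
      · have hsg := hseg x (r • w) (r'/r) ⟨by positivity, by rw [div_le_one h]; exact hle⟩ hr
        rw [smul_smul, div_mul_cancel₀ r' h.ne'] at hsg
        exact hsg
    have hDcont' : Continuous fun r : ℝ => D x (r • w) :=
      hD_cont.comp (continuous_const.prodMk (continuous_id.smul continuous_const))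
    set φ : ℝ → ℝ := fun r => r - D x (r • w) with hφ
    have hφcont : Continuous φ := continuous_id.sub hDcont'
    have hb : ∃ b : ℝ, 0 ≤ b ∧ b ∈ J ∧ 0 < φ b := by
      by_cases hray : ∀ r : ℝ, 0 ≤ r → r ∈ J
      · have hb0 : (0:ℝ) ≤ dU (x, s x) + 1 := by linarith [hdU_nonneg (x, s x)]
        refine ⟨dU (x, s x) + 1, hb0, hray _ hb0, ?_⟩
        have := hD_le0 x ((dU (x, s x) + 1) • w)
        show 0 < dU (x, s x) + 1 - D x ((dU (x, s x) + 1) • w)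
        linarith
      · push_neg at hray
        obtain ⟨r₀, hr₀0, hr₀⟩ := hray
        set I : Set ℝ := {r : ℝ | 0 ≤ r ∧ r ∈ J} with hI
        have hIne : I.Nonempty := ⟨0, le_refl 0, h0J⟩
        have hIbdd : BddAbove I := by
          refine ⟨r₀, ?_⟩
          rintro r ⟨h1, h2⟩
          by_contra hcon
          push_neg at hcon
          exact hr₀ (hstar r h2 h1 r₀ hr₀0 hcon.le)
        set R : ℝ := sSup I with hR
        have hR0 : 0 ≤ R := le_csSup hIbdd ⟨le_refl 0, h0J⟩
        have hRnot : R ∉ J := by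
          intro hmem
          rcases Metric.isOpen_iff.1 hJopen R hmem with ⟨ε, hε, hball⟩
          have hmem2 : R + ε/2 ∈ I := by
            refine ⟨by linarith, hball ?_⟩
            rw [Metric.mem_ball, Real.dist_eq]
            rw [show R + ε/2 - R = ε/2 by ring, abs_of_pos (by linarith)]
            linarith
          have := le_csSup hIbdd hmem2
          linarith
        have hRpos : 0 < R := by
          rcases Metric.isOpen_iff.1 hJopen 0 h0J with ⟨ε, hε, hball⟩
          have hmem2 : min (ε/2) 1 ∈ I := by
            refine ⟨by positivity, hball ?_⟩
            rw [Metric.mem_ball, Real.dist_eq, sub_zero,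
              abs_of_pos (by positivity)]
            calc min (ε/2) 1 ≤ ε/2 := min_le_left _ _
              _ < ε := by linarith
          have := le_csSup hIbdd hmem2
          have : (0:ℝ) < min (ε/2) 1 := by positivity
          linarith [le_csSup hIbdd hmem2]
        have hdUR : dU (x, s x + R • w) = 0 := hdU0 _ hRnot
        have hcontf : ContinuousAt (fun r : ℝ => dU (x, s x + r • w)) R :=
          (hdU_cont.comp (continuous_const.prodMk
            (continuous_const.add (continuous_id.smul continuous_const)))).continuousAt
        have hev : ∀ᶠ r in 𝓝 R, dU (x, s x + r • w) < R/2 := by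
          apply hcontf.eventually_lt_const
          show dU (x, s x + R • w) < R / 2
          rw [hdUR]; linarith
        rcases Metric.eventually_nhds_iff_ball.1 hev with ⟨δ, hδ, hballδ⟩
        have hmax : max (R - δ/2) (R/2) < R := max_lt (by linarith) (by linarith)
        obtain ⟨r₁, hr₁I, hr₁gt⟩ := exists_lt_of_lt_csSup hIne hmax
        have hr₁R : r₁ ≤ R := le_csSup hIbdd hr₁I
        have hr₁ball : r₁ ∈ Metric.ball R δ := by
          rw [Metric.mem_ball, Real.dist_eq, abs_of_nonpos (by linarith), neg_sub]
          have := le_max_left (R - δ/2) (R/2)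
          linarith [this.trans_lt hr₁gt]
        refine ⟨r₁, hr₁I.1, hr₁I.2, ?_⟩
        have h1 : D x (r₁ • w) ≤ dU (x, s x + r₁ • w) := hD_le1 x (r₁ • w)
        have h2 : dU (x, s x + r₁ • w) < R/2 := hballδ r₁ hr₁ball
        have h3 : R/2 < r₁ := (le_max_right (R - δ/2) (R/2)).trans_lt hr₁gt
        show 0 < r₁ - D x (r₁ • w)
        linarith
    obtain ⟨b, hb0, hbJ, hbφ⟩ := hb
    have hφ0 : φ 0 < 0 := by
      show (0:ℝ) - D x ((0:ℝ) • w) < 0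
      have : 0 < D x ((0:ℝ) • w) := hD_pos x ((0:ℝ) • w) h0J
      linarith
    obtain ⟨c, hc, hceq⟩ := intermediate_value_Icc hb0 hφcont.continuousOn ⟨hφ0.le, hbφ.le⟩
    refine ⟨c, hc.1, hstar b hbJ hb0 c hc.1 hc.2, ?_⟩
    have : c - D x (c • w) = 0 := hceq
    linarith
  choose ρ hρ0 hρU hρD using hex
  -- continuity of ρ
  have hρ_cont : Continuous fun q : X × (Fin n → ℝ) => ρ q.1 q.2 := by
    rw [continuous_iff_continuousAt]
    rintro ⟨x₀, w₀⟩
    rw [ContinuousAt, tendsto_order]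
    constructor
    · intro a ha
      rcases lt_or_ge a 0 with ha0 | ha0
      · exact Filter.Eventually.of_forall fun q => ha0.trans_le (hρ0 q.1 q.2)
      · set r' : ℝ := (a + ρ x₀ w₀) / 2 with hr'
        have har' : a < r' := by rw [hr']; linarith
        have hr'lt : r' < ρ x₀ w₀ := by rw [hr']; linarith
        have hr'0 : 0 ≤ r' := by rw [hr']; linarith
        have hkey : r' < D x₀ (r' • w₀) := by
          have := hphi x₀ w₀ r' (ρ x₀ w₀) hr'0 hr'lt
          rw [← hρD x₀ w₀] at this
          linarith
        have hopen : IsOpen {q : X × (Fin n → ℝ) | r' < D q.1 (r' • q.2)} := by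
          have : Continuous fun q : X × (Fin n → ℝ) => D q.1 (r' • q.2) :=
            hD_cont.comp (continuous_fst.prodMk ((continuous_const : Continuous fun _ : X × (Fin n → ℝ) => r').smul continuous_snd))
          exact isOpen_lt continuous_const this
        filter_upwards [hopen.mem_nhds hkey] with q hq
        rcases lt_trichotomy (ρ q.1 q.2) r' with hl | he | hg
        · have h := hphi q.1 q.2 (ρ q.1 q.2) r' (hρ0 q.1 q.2) hl
          rw [← hρD q.1 q.2] at h
          linarith
        · have h := hρD q.1 q.2
          rw [he] at h
          linarith
        · linarith
    · intro b hb
      set r' : ℝ := (ρ x₀ w₀ + b) / 2 with hr'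
      have hr'lt : ρ x₀ w₀ < r' := by rw [hr']; linarith
      have hr'b : r' < b := by rw [hr']; linarith
      have hkey : D x₀ (r' • w₀) < r' := by
        have := hphi x₀ w₀ (ρ x₀ w₀) r' (hρ0 x₀ w₀) hr'lt
        rw [← hρD x₀ w₀] at this
        linarith
      have hopen : IsOpen {q : X × (Fin n → ℝ) | D q.1 (r' • q.2) < r'} := by
        have : Continuous fun q : X × (Fin n → ℝ) => D q.1 (r' • q.2) :=
          hD_cont.comp (continuous_fst.prodMk ((continuous_const : Continuous fun _ : X × (Fin n → ℝ) => r').smul continuous_snd))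
        exact isOpen_lt this continuous_const
      filter_upwards [hopen.mem_nhds hkey] with q hq
      rcases lt_trichotomy (ρ q.1 q.2) r' with hl | he | hg
      · linarith
      · have h := hρD q.1 q.2
        rw [he] at h
        linarith
      · have h0r' : 0 ≤ r' := le_trans (hρ0 x₀ w₀) hr'lt.le
        have h := hphi q.1 q.2 r' (ρ q.1 q.2) h0r' hg
        rw [← hρD q.1 q.2] at h
        linarith
  -- the forward and backward maps
  set F : U.Elem → X × (Fin n → ℝ) :=
    fun u => (u.1.1, (D u.1.1 (u.1.2 - s u.1.1))⁻¹ • (u.1.2 - s u.1.1)) with hFdef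
  have hmemD : ∀ u : U.Elem, 0 < D u.1.1 (u.1.2 - s u.1.1) := by
    intro u
    apply hD_pos
    have := u.2
    simpa using this
  set G : X × (Fin n → ℝ) → X × (Fin n → ℝ) :=
    fun q => (q.1, s q.1 + ρ q.1 q.2 • q.2) with hGdef
  have hGmem : ∀ q, G q ∈ U := fun q => hρU q.1 q.2
  have hρpos : ∀ (x : X) (w : Fin n → ℝ), 0 < ρ x w := by
    intro x w
    have h1 := hD_pos x (ρ x w • w) (hρU x w)
    rw [← hρD x w] at h1
    exact h1
  have hleft : ∀ u : U.Elem, G (F u) = u.1 := by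
    rintro ⟨⟨x, v⟩, hu⟩
    set w₀ : Fin n → ℝ := v - s x with hw₀
    have hc : 0 < D x w₀ := hmemD ⟨⟨x, v⟩, hu⟩
    set c : ℝ := D x w₀ with hcdef
    have hcw : c • (c⁻¹ • w₀) = w₀ := smul_inv_smul₀ hc.ne' w₀
    have hpred2 : (x, s x + c • (c⁻¹ • w₀)) ∈ U := by
      rw [hcw, hw₀]
      simpa using hu
    have hpred3 : c = D x (c • (c⁻¹ • w₀)) := by rw [hcw]
    have hρc : ρ x (c⁻¹ • w₀) = c :=
      huniq x (c⁻¹ • w₀) _ _ ⟨hρ0 _ _, hρD x (c⁻¹ • w₀)⟩ ⟨hc.le, hpred3⟩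
    show (x, s x + ρ x (c⁻¹ • w₀) • (c⁻¹ • w₀)) = (x, v)
    rw [hρc, hcw, hw₀]
    rw [Prod.mk.injEq]
    exact ⟨rfl, by abel⟩
  have hright : ∀ q : X × (Fin n → ℝ), F ⟨G q, hGmem q⟩ = q := by
    rintro ⟨x, w⟩
    have hval : (s x + ρ x w • w) - s x = ρ x w • w := by abel
    show (x, (D x ((s x + ρ x w • w) - s x))⁻¹ • ((s x + ρ x w • w) - s x)) = (x, w)
    rw [hval, ← hρD x w]
    rw [Prod.mk.injEq]
    exact ⟨rfl, inv_smul_smul₀ (hρpos x w).ne' w⟩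
  -- assemble the homeomorphism
  refine ⟨⟨⟨F, fun q => ⟨G q, hGmem q⟩, ?_, ?_⟩, ?_, ?_⟩, ?_⟩
  · intro u
    exact Subtype.ext (hleft u)
  · intro q
    exact hright q
  · -- continuity of F
    apply Continuous.prodMk
    · exact continuous_fst.comp continuous_subtype_val
    · have hsub : Continuous fun u : U.Elem => (u.1.1, u.1.2 - s u.1.1) := by
        apply Continuous.prodMk (continuous_fst.comp continuous_subtype_val)
        exact (continuous_snd.comp continuous_subtype_val).sub
          (s.continuous.comp (continuous_fst.comp continuous_subtype_val))
      have hDu : Continuous fun u : U.Elem => D u.1.1 (u.1.2 - s u.1.1) :=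
        hD_cont.comp hsub
      exact (hDu.inv₀ fun u => (hmemD u).ne').smul (continuous_snd.comp hsub)
  · -- continuity of the inverse
    apply Continuous.subtype_mk
    apply Continuous.prodMk continuous_fst
    exact (s.continuous.comp continuous_fst).add (hρ_cont.smul continuous_snd)
  · intro u
    rfl
end

section
/- Let X be a metrizable topological space, let p : E → X be a topological real vector bundle of rank n, and let U ⊆ E be an open subset such that U ∩ p⁻¹(x) is convex and nonempty for every x ∈ X. Then there exists a continuous section s : X → E of p with s(x) ∈ U for every x ∈ X. -/
/-- Let `X` be a metrizable space, `p : E → X` a topological real vector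
bundle of rank `n`, and `U ⊆ E` an open subset such that `U ∩ p⁻¹(x)` is convex and
nonempty for every `x ∈ X`. Then there is a continuous section `s : X → E` of `p` with
`s x ∈ U` for every `x ∈ X`. -/
theorem exists_continuous_section_mem_open_convex (n : ℕ) (X : Type)
    [TopologicalSpace X] [TopologicalSpace.MetrizableSpace X]
    (E : X → Type) [∀ x, AddCommGroup (E x)] [∀ x, Module ℝ (E x)]
    [∀ x, TopologicalSpace (E x)]
    [TopologicalSpace (Bundle.TotalSpace (Fin n → ℝ) E)]
    [FiberBundle (Fin n → ℝ) E] [VectorBundle ℝ (Fin n → ℝ) E]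
    (U : Set (Bundle.TotalSpace (Fin n → ℝ) E)) (hUopen : IsOpen U)
    (hconv : ∀ x : X, Convex ℝ {v : E x | Bundle.TotalSpace.mk x v ∈ U})
    (hne : ∀ x : X, ∃ v : E x, Bundle.TotalSpace.mk x v ∈ U) :
    ∃ s : X → Bundle.TotalSpace (Fin n → ℝ) E,
      Continuous s ∧ (∀ x : X, (s x).proj = x) ∧ ∀ x : X, s x ∈ U := by
  classical
  letI : MetricSpace X := TopologicalSpace.metrizableSpaceMetric X
  choose v hv using hne
  -- local sections, constant in the trivialization at each point
  set e : X → Bundle.Trivialization (Fin n → ℝ) (Bundle.TotalSpace.proj (E := E)) :=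
    fun i => trivializationAt (Fin n → ℝ) E i with he
  set g : ∀ i : X, ∀ x : X, E x := fun i x => (e i).symm x ((e i ⟨i, v i⟩).2) with hg
  have hgcont : ∀ i : X,
      ContinuousOn (fun x => Bundle.TotalSpace.mk' (Fin n → ℝ) x (g i x)) (e i).baseSet := by
    intro i
    have := (e i).continuousOn_symm.comp
      ((continuous_id.prodMk (continuous_const (y := (e i ⟨i, v i⟩).2))).continuousOn
        (s := (e i).baseSet))
      (fun x hx => Set.mk_mem_prod hx (Set.mem_univ _))
    exact this
  -- open sets on which the local sections take values in U
  set W : X → Set X := fun i =>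
    (e i).baseSet ∩ (fun x => Bundle.TotalSpace.mk' (Fin n → ℝ) x (g i x)) ⁻¹' U with hW
  have hWopen : ∀ i, IsOpen (W i) := fun i =>
    (hgcont i).isOpen_inter_preimage (e i).open_baseSet hUopen
  have hWbase : ∀ i, W i ⊆ (e i).baseSet := fun i => Set.inter_subset_left
  have hWU : ∀ i, ∀ x ∈ W i, Bundle.TotalSpace.mk' (Fin n → ℝ) x (g i x) ∈ U :=
    fun i x hx => hx.2
  have hWmem : ∀ i : X, i ∈ W i := by
    intro i
    have hib : i ∈ (e i).baseSet := FiberBundle.mem_baseSet_trivializationAt' i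
    refine ⟨hib, ?_⟩
    have : g i i = v i := (e i).symm_apply_apply_mk hib (v i)
    simpa [this] using hv i
  -- partition of unity subordinate to W
  obtain ⟨f, hf⟩ := PartitionOfUnity.exists_isSubordinate (s := Set.univ) isClosed_univ W
    hWopen (fun x _ => Set.mem_iUnion.2 ⟨x, hWmem x⟩)
  have hfW : ∀ i x, f i x ≠ 0 → x ∈ W i := fun i x hx =>
    hf i (subset_tsupport _ (Function.mem_support.2 hx))
  set s : ∀ x : X, E x := fun x => ∑ᶠ i, f i x • g i x with hs
  refine ⟨fun x => ⟨x, s x⟩, ?_, fun x => rfl, ?_⟩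
  · -- continuity
    rw [continuous_iff_continuousAt]
    intro x₀
    rw [FiberBundle.continuousAt_totalSpace]
    refine ⟨continuousAt_id, ?_⟩
    set e₀ : Bundle.Trivialization (Fin n → ℝ) (Bundle.TotalSpace.proj (E := E)) := trivializationAt (Fin n → ℝ) E x₀
      with he₀
    have hx₀B : x₀ ∈ e₀.baseSet := FiberBundle.mem_baseSet_trivializationAt' x₀
    set h : X → X → (Fin n → ℝ) := fun i x =>
      if x ∈ W i then (e₀ ⟨x, g i x⟩).2 else 0 with hh
    set t : Finset X := f.fintsupport x₀ with ht
    -- the coordinate function eventually equals a finite sum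
    have hEq : ∀ x, x ∈ e₀.baseSet → f.finsupport x ⊆ t →
        (e₀ ⟨x, s x⟩).2 = ∑ i ∈ t, f i x • h i x := by
      intro x hxB hxt
      set L := e₀.continuousLinearEquivAt ℝ x hxB with hL
      have h1 : s x = ∑ i ∈ f.finsupport x, f i x • g i x :=
        (f.sum_finsupport_smul_eq_finsum (fun i _ => g i x)).symm ▸ rfl
      have h2 : (e₀ ⟨x, s x⟩).2 = L (s x) :=
        (congrFun (Bundle.Trivialization.continuousLinearEquivAt_apply ℝ e₀ x hxB) (s x)).symm
      rw [h2, h1, map_sum]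
      rw [Finset.sum_subset hxt]
      · refine Finset.sum_congr rfl fun i hi => ?_
        rw [map_smul]
        by_cases hfi : f i x = 0
        · simp [hfi]
        · have hxW : x ∈ W i := hfW i x hfi
          rw [hh]
          simp only [hxW, if_pos]
          rw [hL, congrFun (Bundle.Trivialization.continuousLinearEquivAt_apply ℝ e₀ x hxB) (g i x)]
      · intro i _ hi
        have : f i x = 0 := by
          by_contra hne0
          exact hi ((f.mem_finsupport x).2 (Function.mem_support.2 hne0))
        simp [this]
    -- each term of the finite sum is continuous at x₀
    have hterm : ∀ i : X, ContinuousAt (fun x => f i x • h i x) x₀ := by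
      intro i
      by_cases hx₀W : x₀ ∈ W i
      · -- near x₀, h i is the coordinate of a continuous local section
        have hcont : ContinuousOn (fun x => (e₀ ⟨x, g i x⟩).2) (W i ∩ e₀.baseSet) := by
          have h1 : ContinuousOn (fun x => Bundle.TotalSpace.mk' (Fin n → ℝ) x (g i x))
              (W i ∩ e₀.baseSet) :=
            (hgcont i).mono (fun x hx => hWbase i hx.1)
          have h2 : ContinuousOn (fun z : Bundle.TotalSpace (Fin n → ℝ) E => (e₀ z).2) e₀.source :=
            (continuous_snd.comp_continuousOn e₀.continuousOn)
          exact h2.comp h1 (fun x hx => e₀.mem_source.2 hx.2)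
        have hopen : IsOpen (W i ∩ e₀.baseSet) := (hWopen i).inter e₀.open_baseSet
        have hx₀mem : x₀ ∈ W i ∩ e₀.baseSet := ⟨hx₀W, hx₀B⟩
        have hcontAt : ContinuousAt (fun x => (e₀ ⟨x, g i x⟩).2) x₀ :=
          hcont.continuousAt (hopen.mem_nhds hx₀mem)
        have hEqh : (fun x => h i x) =ᶠ[nhds x₀] (fun x => (e₀ ⟨x, g i x⟩).2) := by
          filter_upwards [(hWopen i).mem_nhds hx₀W] with x hxW
          simp [hh, hxW]
        exact ((f i).continuous.continuousAt).smul (hcontAt.congr hEqh.symm)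
      · -- x₀ is outside the support of f i, so the term is eventually 0
        have hx₀supp : x₀ ∉ tsupport (f i) := fun hmem => hx₀W (hf i hmem)
        have : (fun x => f i x • h i x) =ᶠ[nhds x₀] (fun _ => (0 : Fin n → ℝ)) := by
          filter_upwards [(isClosed_closure.isOpen_compl).mem_nhds hx₀supp] with x hx
          have : f i x = 0 := image_eq_zero_of_notMem_tsupport hx
          simp [this]
        exact (continuousAt_const.congr this.symm)
    -- conclude
    have hsum : ContinuousAt (fun x => ∑ i ∈ t, f i x • h i x) x₀ := by
      exact tendsto_finset_sum t fun i _ => hterm i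
    refine hsum.congr ?_
    have hEv : ∀ᶠ x in nhds x₀, f.finsupport x ⊆ t := f.eventually_finsupport_subset x₀
    filter_upwards [hEv, e₀.open_baseSet.mem_nhds hx₀B] with x hxt hxB
    exact (hEq x hxB hxt).symm
  · -- membership in U
    intro x
    exact f.finsum_smul_mem_convex (g := fun i (_ : X) => g i x)
      (t := {w : E x | Bundle.TotalSpace.mk x w ∈ U}) (Set.mem_univ x)
      (fun i hi => hWU i x (hfW i x hi)) (hconv x)
end

section
/- Let X be a topological space and let U ⊆ X × ℝ^n be an open subset containing the zero section X × {0}. Define φ : X × ℝ^n → (0, ∞] by φ(x,v) = sup { t ∈ ℝ, t > 0 : (x, t•v) ∈ U }. Then φ is well defined (the set is nonempty for every (x,v)) and lower semicontinuous. -/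
open scoped ENNReal

/-- The function `φ(x,v) = sup {t > 0 : (x, t•v) ∈ U}`, with values in `(0,∞] ⊆ ℝ≥0∞`
(the supremum being `∞` when the set of such `t` is unbounded). -/
noncomputable def radialSup {X : Type} (n : ℕ) (U : Set (X × (Fin n → ℝ)))
    (p : X × (Fin n → ℝ)) : ℝ≥0∞ :=
  sSup (ENNReal.ofReal '' {t : ℝ | 0 < t ∧ (p.1, t • p.2) ∈ U})

/-- Let `X` be a topological space and `U ⊆ X × ℝ^n` an open subset
containing the zero section `X × {0}`. Define `φ(x,v) = sup {t > 0 : (x, t•v) ∈ U}`. Then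
`φ` is well defined (the set is nonempty, and the value lies in `(0,∞]`) and `φ` is lower
semicontinuous. -/
theorem radialSup_wellDefined_lowerSemicontinuous (n : ℕ) (X : Type) [TopologicalSpace X]
    (U : Set (X × (Fin n → ℝ))) (hUopen : IsOpen U)
    (hzero : ∀ x : X, (x, (0 : Fin n → ℝ)) ∈ U) :
    (∀ (x : X) (v : Fin n → ℝ), {t : ℝ | 0 < t ∧ (x, t • v) ∈ U}.Nonempty) ∧
    (∀ p : X × (Fin n → ℝ), 0 < radialSup n U p) ∧
    LowerSemicontinuous (radialSup n U) := by
  have hne : ∀ (x : X) (v : Fin n → ℝ), {t : ℝ | 0 < t ∧ (x, t • v) ∈ U}.Nonempty := by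
    intro x v
    have hc : Continuous fun t : ℝ => ((x, t • v) : X × (Fin n → ℝ)) :=
      continuous_const.prodMk (continuous_id.smul continuous_const)
    have h0 : ((x, (0:ℝ) • v) : X × (Fin n → ℝ)) ∈ U := by simpa using hzero x
    have hev : {t : ℝ | (x, t • v) ∈ U} ∈ nhds (0:ℝ) :=
      hc.continuousAt.preimage_mem_nhds (hUopen.mem_nhds h0)
    have hev' : ∀ᶠ t in nhdsWithin (0:ℝ) (Set.Ioi 0), (x, t • v) ∈ U :=
      mem_nhdsWithin_of_mem_nhds hev
    obtain ⟨t, htU, ht0⟩ := (hev'.and eventually_mem_nhdsWithin).exists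
    exact ⟨t, ht0, htU⟩
  refine ⟨hne, ?_, ?_⟩
  · intro p
    obtain ⟨t, ht0, htU⟩ := hne p.1 p.2
    exact lt_of_lt_of_le (ENNReal.ofReal_pos.2 ht0) (le_sSup ⟨t, ⟨ht0, htU⟩, rfl⟩)
  · intro p c hc
    obtain ⟨b, ⟨t, ⟨ht0, htU⟩, rfl⟩, hcb⟩ := lt_sSup_iff.mp hc
    have hf : Continuous fun q : X × (Fin n → ℝ) => ((q.1, t • q.2) : X × (Fin n → ℝ)) :=
      continuous_fst.prodMk (continuous_snd.const_smul t)
    have hmem : (fun q : X × (Fin n → ℝ) => ((q.1, t • q.2) : X × (Fin n → ℝ))) ⁻¹' U ∈ nhds p :=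
      (hUopen.preimage hf).mem_nhds htU
    filter_upwards [hmem] with q hq
    exact hcb.trans_le (le_sSup ⟨t, ⟨ht0, hq⟩, rfl⟩)
end
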